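/- arXiv:2008.01306 — 6 statements merged into one kernel-verified Lean document; each statement's English description precedes it below -/
import Mathlib

section
/- Let α > 0 and q ≥ 1, and let {X_n, n ≥ 1} be a sequence of independent Bochner integrable random variables with mean zero (E(X_n) = 0 for all n) taking values in a real separable Banach space B, with E(‖X_n‖^q) < ∞ for all n, and set S_n = X_1 + ⋯ + X_n. If Σ_{n=1}^∞ (1/n)·E((‖S_n‖/n^α)^q) < ∞, then E(‖S_n/n^α‖^q) → 0 and S_n/n^α → 0 almost surely. -/
open MeasureTheory ProbabilityTheory Filter
open scoped ENNReal NNReal Topology ProbabilityTheory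

section auxB
variable {B : Type*} [NormedAddCommGroup B] [NormedSpace ℝ B]

lemma stmt10_convexOn_norm_rpow {q : ℝ} (hq : 1 ≤ q) :
    ConvexOn ℝ Set.univ (fun x : B => ‖x‖ ^ q) := by
  refine ⟨convex_univ, fun x _ y _ a b ha hb hab => ?_⟩
  have h1 : ‖a • x + b • y‖ ^ q ≤ (a * ‖x‖ + b * ‖y‖) ^ q := by
    apply Real.rpow_le_rpow (norm_nonneg _) ?_ (le_trans zero_le_one hq)
    refine (norm_add_le _ _).trans ?_
    rw [norm_smul, norm_smul, Real.norm_of_nonneg ha, Real.norm_of_nonneg hb]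
  refine h1.trans ?_
  have := (convexOn_rpow hq).2 (Set.mem_Ici.2 (norm_nonneg x))
    (Set.mem_Ici.2 (norm_nonneg y)) ha hb hab
  simpa using this

lemma stmt10_convexOn_norm_add_rpow {q : ℝ} (hq : 1 ≤ q) (b : B) :
    ConvexOn ℝ Set.univ (fun x : B => ‖b + x‖ ^ q) := by
  have h := (stmt10_convexOn_norm_rpow (B := B) hq).comp_affineMap
    (AffineMap.const ℝ B b + AffineMap.id ℝ B)
  exact h

lemma stmt10_continuous_norm_add_rpow {q : ℝ} (hq : 1 ≤ q) (b : B) :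
    Continuous (fun x : B => ‖b + x‖ ^ q) := by
  apply Continuous.rpow_const (by fun_prop)
  exact fun x => Or.inr (le_trans zero_le_one hq)

lemma stmt10_norm_add_rpow_le {q : ℝ} (hq : 1 ≤ q) (b v : B) :
    ‖b + v‖ ^ q ≤ 2 ^ q * (‖b‖ ^ q + ‖v‖ ^ q) := by
  have hq0 : 0 ≤ q := le_trans zero_le_one hq
  have h1 : ‖b + v‖ ^ q ≤ (‖b‖ + ‖v‖) ^ q :=
    Real.rpow_le_rpow (norm_nonneg _) (norm_add_le _ _) hq0
  have h2 : (‖b‖ + ‖v‖) ^ q ≤ (2 * max ‖b‖ ‖v‖) ^ q := by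
    apply Real.rpow_le_rpow (by positivity) ?_ hq0
    rw [two_mul]
    exact add_le_add (le_max_left _ _) (le_max_right _ _)
  have h3 : (2 * max ‖b‖ ‖v‖) ^ q = 2 ^ q * max ‖b‖ ‖v‖ ^ q :=
    Real.mul_rpow (by norm_num) (by positivity)
  have h4 : max ‖b‖ ‖v‖ ^ q ≤ ‖b‖ ^ q + ‖v‖ ^ q := by
    rcases max_cases ‖b‖ ‖v‖ with ⟨h, _⟩ | ⟨h, _⟩ <;> rw [h]
    · nlinarith [Real.rpow_nonneg (norm_nonneg v) q]
    · nlinarith [Real.rpow_nonneg (norm_nonneg b) q]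
  calc ‖b + v‖ ^ q ≤ (2 * max ‖b‖ ‖v‖) ^ q := h1.trans h2
    _ = 2 ^ q * max ‖b‖ ‖v‖ ^ q := h3
    _ ≤ 2 ^ q * (‖b‖ ^ q + ‖v‖ ^ q) := by
        apply mul_le_mul_of_nonneg_left h4 (by positivity)

variable [MeasurableSpace B] [BorelSpace B] [CompleteSpace B]
  [TopologicalSpace.SeparableSpace B]

/-- Jensen: if `ν` is a probability measure on `B` with mean zero and finite `q`-th moment,
then `‖b‖^q ≤ ∫ ‖b + v‖^q dν`. -/
lemma stmt10_jensen {q : ℝ} (hq : 1 ≤ q) (ν : Measure B)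
    [IsProbabilityMeasure ν] (hi : Integrable (fun v => v) ν)
    (h0 : (∫ v, v ∂ν) = 0) (hmom : Integrable (fun v => ‖v‖ ^ q) ν) (b : B) :
    ‖b‖ ^ q ≤ ∫ v, ‖b + v‖ ^ q ∂ν := by
  have hgi : Integrable ((fun x : B => ‖b + x‖ ^ q) ∘ (fun v => v)) ν := by
    have maj : Integrable (fun v : B => 2 ^ q * ‖b‖ ^ q + 2 ^ q * ‖v‖ ^ q) ν :=
      (integrable_const _).add (hmom.const_mul _)
    refine Integrable.mono' maj ?_ ?_
    · exact ((stmt10_continuous_norm_add_rpow hq b).comp continuous_id).aestronglyMeasurable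
    · refine Filter.Eventually.of_forall fun x => ?_
      simp only [Function.comp_apply]
      rw [Real.norm_of_nonneg (Real.rpow_nonneg (norm_nonneg _) q)]
      simpa [mul_add] using stmt10_norm_add_rpow_le hq b x
  have h := (stmt10_convexOn_norm_add_rpow hq b).map_integral_le
    (Continuous.continuousOn (stmt10_continuous_norm_add_rpow hq b)) isClosed_univ
    (Filter.Eventually.of_forall fun x => Set.mem_univ x) hi hgi
  simpa [h0] using h

variable {Ω : Type*} [MeasureSpace Ω] [IsProbabilityMeasure (ℙ : Measure Ω)]

lemma stmt10_setIntegral_le {q : ℝ} (hq : 1 ≤ q) (U V : Ω → B) {s : Set Ω}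
    (hU : Measurable U) (hV : Measurable V) (hs : MeasurableSet s)
    (hindep : IndepFun (fun ω => (s.indicator (fun _ => (1:ℝ)) ω, U ω)) V ℙ)
    (hVint : Integrable V ℙ) (hVmean : (∫ ω, V ω ∂ℙ) = 0)
    (hVq : Integrable (fun ω => ‖V ω‖ ^ q) ℙ)
    (hUq : Integrable (fun ω => ‖U ω‖ ^ q) ℙ)
    (hUVq : Integrable (fun ω => ‖U ω + V ω‖ ^ q) ℙ) :
    ∫ ω in s, ‖U ω‖ ^ q ∂ℙ ≤ ∫ ω in s, ‖U ω + V ω‖ ^ q ∂ℙ := by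
  classical
  set W : Ω → ℝ × B := fun ω => (s.indicator (fun _ => (1:ℝ)) ω, U ω) with hW_def
  have hWmeas : Measurable W := ((measurable_const.indicator hs)).prodMk hU
  set ν₁ : Measure (ℝ × B) := Measure.map W ℙ with hν₁
  set ν₂ : Measure B := Measure.map V ℙ with hν₂
  haveI : IsProbabilityMeasure ν₂ := Measure.isProbabilityMeasure_map hV.aemeasurable
  haveI : IsProbabilityMeasure ν₁ := Measure.isProbabilityMeasure_map hWmeas.aemeasurable
  have hmap : Measure.map (fun ω => (W ω, V ω)) ℙ = ν₁.prod ν₂ :=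
    (indepFun_iff_map_prod_eq_prod_map_map hWmeas.aemeasurable hV.aemeasurable).1 hindep
  set F : (ℝ × B) × B → ℝ := fun p => p.1.1 * ‖p.1.2 + p.2‖ ^ q with hF_def
  have hFcont : Continuous F := by
    apply Continuous.mul (by fun_prop)
    apply Continuous.rpow_const (by fun_prop)
    exact fun x => Or.inr (le_trans zero_le_one hq)
  have hFcomp : (fun ω => F (W ω, V ω)) = s.indicator (fun ω => ‖U ω + V ω‖ ^ q) := by
    funext ω
    by_cases h : ω ∈ s <;> simp [hF_def, hW_def, h]
  have hFint : Integrable F (ν₁.prod ν₂) := by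
    rw [← hmap, integrable_map_measure hFcont.aestronglyMeasurable
      (hWmeas.prodMk hV).aemeasurable]
    show Integrable (fun ω => F (W ω, V ω)) ℙ
    rw [hFcomp]
    exact hUVq.indicator hs
  have hGcont : Continuous (fun y : ℝ × B => y.1 * ‖y.2‖ ^ q) := by
    apply Continuous.mul (by fun_prop)
    apply Continuous.rpow_const (by fun_prop)
    exact fun x => Or.inr (le_trans zero_le_one hq)
  have hGcomp : (fun ω => (W ω).1 * ‖(W ω).2‖ ^ q) = s.indicator (fun ω => ‖U ω‖ ^ q) := by
    funext ω
    by_cases h : ω ∈ s <;> simp [hW_def, h]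
  have hGint : Integrable (fun y : ℝ × B => y.1 * ‖y.2‖ ^ q) ν₁ := by
    rw [hν₁, integrable_map_measure hGcont.aestronglyMeasurable hWmeas.aemeasurable]
    show Integrable (fun ω => (W ω).1 * ‖(W ω).2‖ ^ q) ℙ
    rw [hGcomp]
    exact hUq.indicator hs
  have hLHS : ∫ ω in s, ‖U ω‖ ^ q ∂ℙ = ∫ y, y.1 * ‖y.2‖ ^ q ∂ν₁ := by
    rw [hν₁, integral_map hWmeas.aemeasurable hGcont.aestronglyMeasurable]
    show _ = ∫ ω, (W ω).1 * ‖(W ω).2‖ ^ q ∂ℙ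
    rw [hGcomp, integral_indicator hs]
  have hRHS : ∫ ω in s, ‖U ω + V ω‖ ^ q ∂ℙ = ∫ p, F p ∂(ν₁.prod ν₂) := by
    rw [← hmap, integral_map (hWmeas.prodMk hV).aemeasurable hFcont.aestronglyMeasurable]
    show _ = ∫ ω, F (W ω, V ω) ∂ℙ
    rw [hFcomp, integral_indicator hs]
  rw [hLHS, hRHS, MeasureTheory.integral_prod F hFint]
  have hν₂int : Integrable (fun v => v) ν₂ :=
    (integrable_map_measure (f := V) (g := id) aestronglyMeasurable_id hV.aemeasurable).2 hVint
  have hν₂mean : (∫ v, v ∂ν₂) = 0 := by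
    have := integral_map (μ := ℙ) (φ := V) (f := id) hV.aemeasurable aestronglyMeasurable_id
    simpa using this.trans hVmean
  have hν₂mom : Integrable (fun v => ‖v‖ ^ q) ν₂ := by
    have hc : Continuous (fun v : B => ‖v‖ ^ q) := by
      apply Continuous.rpow_const (by fun_prop)
      exact fun x => Or.inr (le_trans zero_le_one hq)
    rw [hν₂, integrable_map_measure hc.aestronglyMeasurable hV.aemeasurable]
    exact hVq
  refine integral_mono_ae hGint (hFint.integral_prod_left) ?_
  have hae : ∀ᵐ y ∂ν₁, 0 ≤ y.1 := by
    rw [hν₁, ae_map_iff hWmeas.aemeasurable (measurableSet_le measurable_const measurable_fst)]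
    refine Filter.Eventually.of_forall fun ω => ?_
    by_cases h : ω ∈ s <;> simp [hW_def, h]
  filter_upwards [hae] with y hy
  show y.1 * ‖y.2‖ ^ q ≤ ∫ v, F (y, v) ∂ν₂
  have : (∫ v, F (y, v) ∂ν₂) = y.1 * ∫ v, ‖y.2 + v‖ ^ q ∂ν₂ := by
    simp only [hF_def]
    rw [integral_const_mul]
  rw [this]
  exact mul_le_mul_of_nonneg_left (stmt10_jensen hq ν₂ hν₂int hν₂mean hν₂mom y.2) hy

end auxB

/-- Lemma 2.2. For independent mean-zero `B`-valued random variables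
with `E(‖Xₙ‖^q) < ∞`, if `∑ₙ (1/n) E((‖Sₙ‖/n^α)^q) < ∞` then `E(‖Sₙ/n^α‖^q) → 0`
and `Sₙ/n^α → 0` a.s. -/
theorem stmt_10
    {Ω : Type*} [MeasureSpace Ω] [IsProbabilityMeasure (ℙ : Measure Ω)]
    {B : Type*} [NormedAddCommGroup B] [NormedSpace ℝ B] [CompleteSpace B]
    [TopologicalSpace.SeparableSpace B] [MeasurableSpace B] [BorelSpace B]
    (α q : ℝ) (hα : 0 < α) (hq : 1 ≤ q)
    (Xs : ℕ → Ω → B) (hXs : ∀ n, Measurable (Xs n))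
    (hindep : iIndepFun Xs ℙ)
    (hint : ∀ n, Integrable (Xs n) ℙ) (hmean : ∀ n, (∫ ω, Xs n ω ∂ℙ) = 0)
    (hq' : ∀ n, ∫⁻ ω, ENNReal.ofReal (‖Xs n ω‖ ^ q) ∂ℙ < ⊤)
    (S : ℕ → Ω → B) (hS : ∀ n ω, S n ω = ∑ i ∈ Finset.range n, Xs i ω)
    (hsum : (∑' n : ℕ, (((n : ℝ≥0∞) + 1))⁻¹ *
        ∫⁻ ω, ENNReal.ofReal ((‖S (n + 1) ω‖ / ((n : ℝ) + 1) ^ α) ^ q) ∂ℙ) < ⊤) :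
    Tendsto (fun n : ℕ =>
        ∫⁻ ω, ENNReal.ofReal (‖(((n : ℝ) ^ α)⁻¹) • S n ω‖ ^ q) ∂ℙ) atTop (nhds 0) ∧
      (∀ᵐ ω ∂ℙ, Tendsto (fun n : ℕ => (((n : ℝ) ^ α)⁻¹) • S n ω) atTop (nhds 0)) := by
  classical
  haveI : SecondCountableTopology B := UniformSpace.secondCountable_of_separable B
  have hq0 : 0 < q := lt_of_lt_of_le zero_lt_one hq
  set p : ℝ≥0∞ := ENNReal.ofReal q with hp_def
  have hp0 : p ≠ 0 := by
    simp only [hp_def, ne_eq, ENNReal.ofReal_eq_zero, not_le]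
    linarith
  have hptop : p ≠ ∞ := ENNReal.ofReal_ne_top
  have hpreal : p.toReal = q := ENNReal.toReal_ofReal hq0.le
  have hSfun : ∀ n, S n = fun ω => ∑ i ∈ Finset.range n, Xs i ω := fun n => funext (hS n)
  have hSmeas : ∀ n, Measurable (S n) := fun n => by
    rw [hSfun]; exact Finset.measurable_sum _ fun i _ => hXs i
  -- Memℒp facts
  have hlint_eq : ∀ (f : Ω → B), (∫⁻ ω, ENNReal.ofReal (‖f ω‖ ^ q) ∂ℙ)
      = ∫⁻ ω, (‖f ω‖₊ : ℝ≥0∞) ^ q ∂ℙ := fun f => lintegral_congr fun ω => by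
    rw [← enorm_eq_nnnorm, ← ofReal_norm_eq_enorm, ← ENNReal.ofReal_rpow_of_nonneg (norm_nonneg _) hq0.le]
  have hXmem : ∀ n, MemLp (Xs n) p ℙ := fun n => by
    refine ⟨(hXs n).aestronglyMeasurable, ?_⟩
    rw [eLpNorm_eq_lintegral_rpow_enorm_toReal hp0 hptop, hpreal]
    simp only [enorm_eq_nnnorm]
    exact ENNReal.rpow_lt_top_of_nonneg (by positivity)
      (by rw [← hlint_eq]; exact (hq' n).ne)
  have hSmem : ∀ n, MemLp (S n) p ℙ := fun n => by
    rw [hSfun]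
    exact memLp_finset_sum _ fun i _ => hXmem i
  have hSq_int : ∀ n, Integrable (fun ω => ‖S n ω‖ ^ q) ℙ := fun n => by
    have := (hSmem n).integrable_norm_rpow hp0 hptop
    rwa [hpreal] at this
  have hXq_int : ∀ n, Integrable (fun ω => ‖Xs n ω‖ ^ q) ℙ := fun n => by
    have := (hXmem n).integrable_norm_rpow hp0 hptop
    rwa [hpreal] at this
  -- the submartingale
  set ℱ := Filtration.natural Xs (fun n => (hXs n).stronglyMeasurable) with hℱ
  have hcomap_le : ∀ {i n : ℕ}, i ≤ n →
      MeasurableSpace.comap (Xs i) inferInstance ≤ ℱ n := by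
    intro i n hin
    exact le_iSup₂_of_le i hin le_rfl
  have hSF : ∀ n, Measurable[ℱ n] (S (n + 1)) := fun n => by
    rw [hSfun]
    refine Finset.measurable_sum _ fun i hi => ?_
    have h1 : Measurable[MeasurableSpace.comap (Xs i) inferInstance] (Xs i) :=
      measurable_iff_comap_le.2 le_rfl
    exact h1.mono (hcomap_le (Nat.lt_succ_iff.1 (Finset.mem_range.1 hi))) le_rfl
  have hnormq_cont : Continuous (fun x : B => ‖x‖ ^ q) := by
    apply Continuous.rpow_const (by fun_prop)
    exact fun x => Or.inr hq0.le
  have hsub : Submartingale (fun n ω => ‖S (n + 1) ω‖ ^ q) ℱ ℙ := by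
    refine submartingale_of_setIntegral_le_succ ?_ (fun i => hSq_int (i + 1)) ?_
    · intro n
      exact hnormq_cont.comp_stronglyMeasurable (hSF n).stronglyMeasurable
    · intro i s hs
      have hS2 : S (i + 1 + 1) = fun ω => S (i + 1) ω + Xs (i + 1) ω := by
        funext ω
        rw [hS, hS, Finset.sum_range_succ]
      have hWm : Measurable[ℱ i] (fun ω => (s.indicator (fun _ => (1:ℝ)) ω, S (i + 1) ω)) :=
        Measurable.prodMk (measurable_const.indicator hs) (hSF i)
      have hindep2 : Indep (ℱ i) (MeasurableSpace.comap (Xs (i + 1)) inferInstance) ℙ :=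
        (hindep.indep_comap_natural_of_lt (fun n => (hXs n).stronglyMeasurable)
          (Nat.lt_succ_self i)).symm
      have hIF : IndepFun (fun ω => (s.indicator (fun _ => (1:ℝ)) ω, S (i + 1) ω))
          (Xs (i + 1)) ℙ :=
        indep_of_indep_of_le_left hindep2 (measurable_iff_comap_le.1 hWm)
      have key := stmt10_setIntegral_le hq (S (i + 1)) (Xs (i + 1)) (hSmeas (i + 1))
        (hXs (i + 1)) (ℱ.le i s hs) hIF (hint (i + 1)) (hmean (i + 1)) (hXq_int (i + 1))
        (hSq_int (i + 1)) (by have := hSq_int (i + 1 + 1); simp only [hS2] at this; exact this)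
      refine key.trans (le_of_eq ?_)
      refine setIntegral_congr_fun (ℱ.le i s hs) fun ω _ => ?_
      simp only [hS2]
  have hnonneg : (0 : ℕ → Ω → ℝ) ≤ fun n ω => ‖S (n + 1) ω‖ ^ q := by
    rw [Pi.le_def]
    intro n
    rw [Pi.le_def]
    intro ω
    simp only [Pi.zero_apply]
    positivity
  -- the sequence u
  set u : ℕ → ℝ≥0∞ := fun n => ∫⁻ ω, ENNReal.ofReal (‖S n ω‖ ^ q) ∂ℙ with hu_def
  have hint_nonneg : ∀ n, (0 : Ω → ℝ) ≤ᵐ[ℙ] fun ω => ‖S n ω‖ ^ q := fun n =>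
    Filter.Eventually.of_forall fun ω => by
      simp only [Pi.zero_apply]
      positivity
  have hu_eq : ∀ n, u n = ENNReal.ofReal (∫ ω, ‖S n ω‖ ^ q ∂ℙ) := fun n =>
    (ofReal_integral_eq_lintegral_ofReal (hSq_int n) (hint_nonneg n)).symm
  have hufin : ∀ n, u n ≠ ∞ := fun n => by rw [hu_eq]; exact ENNReal.ofReal_ne_top
  have hu0 : u 0 = 0 := by
    have : ∀ ω, S 0 ω = 0 := fun ω => by rw [hS]; simp
    simp [hu_def, this, Real.zero_rpow hq0.ne']
  have humono : Monotone u := by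
    refine monotone_nat_of_le_succ fun n => ?_
    match n with
    | 0 => rw [hu0]; exact zero_le
    | Nat.succ m =>
      rw [hu_eq, hu_eq]
      apply ENNReal.ofReal_le_ofReal
      have := hsub.setIntegral_le (Nat.le_succ m) (MeasurableSet.univ)
      simpa [setIntegral_univ] using this
  -- the weights d
  set d : ℕ → ℝ≥0∞ := fun j => ENNReal.ofReal ((((j : ℝ)) ^ α)⁻¹ ^ q) with hd_def
  have hdmono : ∀ {a b : ℕ}, 1 ≤ a → a ≤ b → d b ≤ d a := by
    intro a b ha hab
    apply ENNReal.ofReal_le_ofReal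
    have ha' : (0:ℝ) < (a:ℝ) := by exact_mod_cast ha
    have hb' : (0:ℝ) < (b:ℝ) := lt_of_lt_of_le ha' (by exact_mod_cast hab)
    apply Real.rpow_le_rpow (by positivity) ?_ hq0.le
    apply inv_anti₀ (Real.rpow_pos_of_pos ha' α)
    exact Real.rpow_le_rpow ha'.le (by exact_mod_cast hab) hα.le
  have hdouble : ∀ n : ℕ, d n = ENNReal.ofReal (((2:ℝ) ^ α) ^ q) * d (2 * n) := by
    intro n
    rcases Nat.eq_zero_or_pos n with rfl | hn
    · simp [hd_def, Real.zero_rpow hα.ne', Real.zero_rpow hq0.ne']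
    · have hn' : (0:ℝ) < (n:ℝ) := by exact_mod_cast hn
      have h2α : (0:ℝ) < (2:ℝ) ^ α := Real.rpow_pos_of_pos (by norm_num) α
      have hreal : (((n : ℝ)) ^ α)⁻¹ ^ q
          = ((2:ℝ) ^ α) ^ q * ((((2 * n : ℕ) : ℝ)) ^ α)⁻¹ ^ q := by
        have hcast : ((2 * n : ℕ) : ℝ) = 2 * (n : ℝ) := by push_cast; ring
        rw [hcast, Real.mul_rpow (by norm_num) hn'.le, mul_inv,
          Real.mul_rpow (by positivity) (by positivity),
          ← mul_assoc, Real.inv_rpow h2α.le, mul_inv_cancel₀ (by positivity), one_mul]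
      rw [hd_def]
      simp only
      rw [hreal, ENNReal.ofReal_mul (by positivity)]
  -- the series terms
  set trm : ℕ → ℝ≥0∞ := fun m => ((m : ℝ≥0∞) + 1)⁻¹ * (d (m + 1) * u (m + 1)) with htrm_def
  have hlint_scale : ∀ j : ℕ, (∫⁻ ω, ENNReal.ofReal ((‖S j ω‖ / (j : ℝ) ^ α) ^ q) ∂ℙ)
      = d j * u j := by
    intro j
    have hpt : ∀ ω, ENNReal.ofReal ((‖S j ω‖ / (j : ℝ) ^ α) ^ q)
        = ENNReal.ofReal ((((j : ℝ)) ^ α)⁻¹ ^ q) * ENNReal.ofReal (‖S j ω‖ ^ q) := by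
      intro ω
      rw [div_eq_mul_inv, mul_comm, Real.mul_rpow (by positivity) (norm_nonneg _),
        ENNReal.ofReal_mul (by positivity)]
    rw [lintegral_congr hpt, lintegral_const_mul' _ _ ENNReal.ofReal_ne_top]
  have hsum' : (∑' m : ℕ, trm m) ≠ ∞ := by
    have heq : ∀ n : ℕ, trm n = (((n : ℝ≥0∞) + 1))⁻¹ *
        ∫⁻ ω, ENNReal.ofReal ((‖S (n + 1) ω‖ / ((n : ℝ) + 1) ^ α) ^ q) ∂ℙ := by
      intro n
      have hc : ((n : ℝ) + 1) = (((n + 1 : ℕ)) : ℝ) := by push_cast; ring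
      rw [htrm_def]
      simp only
      rw [hc, hlint_scale (n + 1)]
    rw [tsum_congr heq]
    exact hsum.ne
  -- block bound
  have hblock : ∀ n : ℕ, 1 ≤ n →
      2⁻¹ * (d (2 * n) * u n) ≤ ∑ k ∈ Finset.range n, trm (n + k) := by
    intro n hn
    have hterm : ∀ k ∈ Finset.range n,
        (((2 * n : ℕ) : ℝ≥0∞))⁻¹ * (d (2 * n) * u n) ≤ trm (n + k) := by
      intro k hk
      have hk' : k < n := Finset.mem_range.1 hk
      rw [htrm_def]
      simp only
      have hc : ((n + k : ℕ) : ℝ≥0∞) + 1 = (((n + k + 1 : ℕ)) : ℝ≥0∞) := by push_cast; ring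
      rw [hc]
      refine mul_le_mul ?_ (mul_le_mul ?_ ?_ zero_le zero_le) zero_le zero_le
      · rw [ENNReal.inv_le_inv]
        exact Nat.cast_le.2 (by omega)
      · exact hdmono (by omega) (by omega)
      · exact humono (by omega)
    have hsum_ge := Finset.sum_le_sum hterm
    rw [Finset.sum_const, Finset.card_range] at hsum_ge
    refine le_trans ?_ hsum_ge
    have hnn : (n : ℝ≥0∞) ≠ 0 := Nat.cast_ne_zero.2 (by omega)
    have hcast : ((2 * n : ℕ) : ℝ≥0∞) = 2 * (n : ℝ≥0∞) := by push_cast; ring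
    rw [nsmul_eq_mul, hcast, ENNReal.mul_inv (Or.inl (by norm_num)) (Or.inl ENNReal.ofNat_ne_top)]
    apply le_of_eq
    calc 2⁻¹ * (d (2 * n) * u n)
        = ((n:ℝ≥0∞) * (n:ℝ≥0∞)⁻¹) * (2⁻¹ * (d (2 * n) * u n)) := by
          rw [ENNReal.mul_inv_cancel hnn (ENNReal.natCast_ne_top n), one_mul]
      _ = (n:ℝ≥0∞) * (2⁻¹ * (n:ℝ≥0∞)⁻¹ * (d (2 * n) * u n)) := by ring
  -- Part 1 : L^q convergence
  have hT : Tendsto (fun n => ∑' k, trm (k + n)) atTop (𝓝 0) :=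
    ENNReal.tendsto_sum_nat_add trm hsum'
  have hgoal_eq : ∀ n : ℕ, (∫⁻ ω, ENNReal.ofReal (‖(((n : ℝ) ^ α)⁻¹) • S n ω‖ ^ q) ∂ℙ)
      = d n * u n := by
    intro n
    have hpt : ∀ ω, ENNReal.ofReal (‖(((n : ℝ) ^ α)⁻¹) • S n ω‖ ^ q)
        = ENNReal.ofReal ((((n : ℝ)) ^ α)⁻¹ ^ q) * ENNReal.ofReal (‖S n ω‖ ^ q) := by
      intro ω
      rw [norm_smul, Real.norm_of_nonneg (by positivity),
        Real.mul_rpow (by positivity) (norm_nonneg _), ENNReal.ofReal_mul (by positivity)]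
    rw [lintegral_congr hpt, lintegral_const_mul' _ _ ENNReal.ofReal_ne_top]
  have hdu_le : ∀ n : ℕ, 1 ≤ n → d n * u n
      ≤ ENNReal.ofReal (((2:ℝ) ^ α) ^ q) * 2 * (∑' k, trm (k + n)) := by
    intro n hn
    have h1 := hblock n hn
    have h2 : ∑ k ∈ Finset.range n, trm (n + k) ≤ ∑' k, trm (k + n) := by
      refine le_trans (le_of_eq (Finset.sum_congr rfl fun k _ => by rw [add_comm])) ?_
      exact ENNReal.sum_le_tsum _
    have h3 : d (2 * n) * u n ≤ 2 * (∑' k, trm (k + n)) := by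
      have h4 : d (2 * n) * u n = 2 * (2⁻¹ * (d (2 * n) * u n)) := by
        rw [← mul_assoc, ENNReal.mul_inv_cancel (by norm_num) (by norm_num), one_mul]
      rw [h4]
      exact mul_le_mul_right (h1.trans h2) 2
    calc d n * u n = ENNReal.ofReal (((2:ℝ) ^ α) ^ q) * (d (2 * n) * u n) := by
          rw [hdouble n, mul_assoc]
      _ ≤ ENNReal.ofReal (((2:ℝ) ^ α) ^ q) * (2 * (∑' k, trm (k + n))) :=
          mul_le_mul_right h3 _
      _ = ENNReal.ofReal (((2:ℝ) ^ α) ^ q) * 2 * (∑' k, trm (k + n)) := by rw [mul_assoc]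
  have hgoal1 : Tendsto (fun n : ℕ => d n * u n) atTop (𝓝 0) := by
    have hC : Tendsto (fun n : ℕ => ENNReal.ofReal (((2:ℝ) ^ α) ^ q) * 2 * (∑' k, trm (k + n)))
        atTop (𝓝 0) := by
      have := ENNReal.Tendsto.const_mul (a := ENNReal.ofReal (((2:ℝ) ^ α) ^ q) * 2) hT
        (Or.inr (ENNReal.mul_ne_top ENNReal.ofReal_ne_top ENNReal.ofNat_ne_top))
      simpa using this
    refine tendsto_of_tendsto_of_tendsto_of_le_of_le' tendsto_const_nhds hC
      (Filter.Eventually.of_forall fun n => zero_le) ?_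
    exact Filter.eventually_atTop.2 ⟨1, hdu_le⟩
  refine ⟨(Filter.tendsto_congr hgoal_eq).2 hgoal1, ?_⟩
  -- Part 2 : a.s. convergence
  have hL : (∑' k : ℕ, d (2 ^ (k + 2)) * u (2 ^ (k + 1))) ≠ ∞ := by
    have hpart : ∀ K : ℕ, ∑ k ∈ Finset.range K, 2⁻¹ * (d (2 ^ (k + 2)) * u (2 ^ (k + 1)))
        ≤ ∑ m ∈ Finset.range (2 ^ (K + 1)), trm m := by
      intro K
      induction K with
      | zero => simp
      | succ K ih =>
        have hle2 : (2:ℕ) ^ (K + 1) ≤ 2 ^ (K + 1 + 1) :=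
          Nat.pow_le_pow_right (by norm_num) (by omega)
        have hsplit : ∑ m ∈ Finset.range (2 ^ (K + 1 + 1)), trm m
            = ∑ m ∈ Finset.range (2 ^ (K + 1)), trm m
              + ∑ m ∈ Finset.Ico (2 ^ (K + 1)) (2 ^ (K + 1 + 1)), trm m := by
          rw [Finset.range_eq_Ico, Finset.range_eq_Ico]
          exact (Finset.sum_Ico_consecutive _ (Nat.zero_le _) hle2).symm
        rw [Finset.sum_range_succ, hsplit]
        refine add_le_add ih ?_
        have h1 := hblock (2 ^ (K + 1)) Nat.one_le_two_pow
        have h2 : ∑ m ∈ Finset.Ico (2 ^ (K + 1)) (2 ^ (K + 1 + 1)), trm m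
            = ∑ k ∈ Finset.range (2 ^ (K + 1)), trm (2 ^ (K + 1) + k) := by
          have h25 : (2:ℕ) ^ (K + 1 + 1) - 2 ^ (K + 1) = 2 ^ (K + 1) := by
            have : (2:ℕ) ^ (K + 1 + 1) = 2 ^ (K + 1) + 2 ^ (K + 1) := by ring
            omega
          rw [Finset.sum_Ico_eq_sum_range, h25]
        rw [h2]
        have h3 : (2:ℕ) * 2 ^ (K + 1) = 2 ^ (K + 1 + 1) := by ring
        calc 2⁻¹ * (d (2 ^ (K + 1 + 1)) * u (2 ^ (K + 1)))
            = 2⁻¹ * (d (2 * 2 ^ (K + 1)) * u (2 ^ (K + 1))) := by rw [h3]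
          _ ≤ _ := h1
    have hle_tsum : ∀ K : ℕ, ∑ k ∈ Finset.range K, 2⁻¹ * (d (2 ^ (k + 2)) * u (2 ^ (k + 1)))
        ≤ ∑' m, trm m := fun K => (hpart K).trans (ENNReal.sum_le_tsum _)
    have h4 : (∑' k : ℕ, 2⁻¹ * (d (2 ^ (k + 2)) * u (2 ^ (k + 1)))) ≤ ∑' m, trm m := by
      rw [ENNReal.tsum_eq_iSup_nat]
      exact iSup_le hle_tsum
    rw [ENNReal.tsum_mul_left] at h4
    have h6 : (∑' k : ℕ, d (2 ^ (k + 2)) * u (2 ^ (k + 1)))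
        = 2 * (2⁻¹ * ∑' k : ℕ, d (2 ^ (k + 2)) * u (2 ^ (k + 1))) := by
      rw [← mul_assoc, ENNReal.mul_inv_cancel (by norm_num) ENNReal.ofNat_ne_top, one_mul]
    rw [h6]
    exact ENNReal.mul_ne_top ENNReal.ofNat_ne_top (ne_top_of_le_ne_top hsum' h4)
  have hAS : ∀ ε : ℝ, 0 < ε → ∀ᵐ ω ∂ℙ, ∀ᶠ n : ℕ in atTop,
      ‖(((n : ℝ) ^ α)⁻¹) • S n ω‖ < ε := by
    intro ε hε
    set e : ℕ → ℝ≥0 := fun k => Real.toNNReal ((ε * ((2 ^ k : ℕ) : ℝ) ^ α) ^ q) with he_def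
    have hcpos : ∀ k : ℕ, (0:ℝ) < ((2 ^ k : ℕ) : ℝ) ^ α := fun k =>
      Real.rpow_pos_of_pos (by positivity) α
    have hcoe : ∀ k, ((e k : ℝ≥0∞)) = ENNReal.ofReal ((ε * ((2 ^ k : ℕ) : ℝ) ^ α) ^ q) :=
      fun k => rfl
    have he0 : ∀ k, (e k : ℝ≥0∞) ≠ 0 := fun k => by
      rw [hcoe]
      exact (ENNReal.ofReal_pos.2 (by positivity)).ne'
    set A : ℕ → Set Ω := fun k =>
      {ω | ((e k : ℝ)) ≤ (Finset.range (2 ^ (k + 1) - 1 + 1)).sup'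
        Finset.nonempty_range_add_one fun m => ‖S (m + 1) ω‖ ^ q} with hA_def
    have hNsucc : ∀ k : ℕ, 2 ^ (k + 1) - 1 + 1 = 2 ^ (k + 1) := fun k =>
      Nat.succ_pred_eq_of_pos (Nat.pow_pos (by norm_num))
    have hAbound : ∀ k, ℙ (A k) ≤ ((e k : ℝ≥0∞))⁻¹ * u (2 ^ (k + 1)) := by
      intro k
      have hmax := maximal_ineq hsub hnonneg (n := 2 ^ (k + 1) - 1) (ε := e k)
      have hmax2 : (e k : ℝ≥0∞) * ℙ (A k) ≤ u (2 ^ (k + 1)) := by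
        refine le_trans hmax ?_
        refine le_trans (ENNReal.ofReal_le_ofReal (setIntegral_le_integral
          (hSq_int (2 ^ (k + 1) - 1 + 1)) (hint_nonneg (2 ^ (k + 1) - 1 + 1)))) ?_
        rw [hNsucc k, hu_eq]
      calc ℙ (A k) = (e k : ℝ≥0∞)⁻¹ * ((e k : ℝ≥0∞) * ℙ (A k)) := by
            rw [← mul_assoc, ENNReal.inv_mul_cancel (he0 k) ENNReal.coe_ne_top, one_mul]
        _ ≤ _ := mul_le_mul_right hmax2 _
    have hek : ∀ k, ((e k : ℝ≥0∞))⁻¹ = (ENNReal.ofReal (ε ^ q))⁻¹ * d (2 ^ k) := by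
      intro k
      have h1 : (ε * ((2 ^ k : ℕ) : ℝ) ^ α) ^ q
          = ε ^ q * (((2 ^ k : ℕ) : ℝ) ^ α) ^ q := Real.mul_rpow hε.le (hcpos k).le
      have h2 : d (2 ^ k) = (ENNReal.ofReal ((((2 ^ k : ℕ) : ℝ) ^ α) ^ q))⁻¹ := by
        rw [hd_def]
        simp only
        rw [← ENNReal.ofReal_inv_of_pos (by positivity), ← Real.inv_rpow (hcpos k).le]
      rw [hcoe, h1, ENNReal.ofReal_mul (by positivity),
        ENNReal.mul_inv (Or.inl (ENNReal.ofReal_pos.2 (by positivity)).ne')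
          (Or.inl ENNReal.ofReal_ne_top), h2]
    have hAsum : (∑' k, ℙ (A k)) ≠ ∞ := by
      set C : ℝ≥0∞ := (ENNReal.ofReal (ε ^ q))⁻¹
        * (ENNReal.ofReal (((2:ℝ) ^ α) ^ q) * ENNReal.ofReal (((2:ℝ) ^ α) ^ q)) with hC_def
      have hCne : C ≠ ∞ := by
        rw [hC_def]
        refine ENNReal.mul_ne_top ?_ (ENNReal.mul_ne_top ENNReal.ofReal_ne_top
          ENNReal.ofReal_ne_top)
        rw [ENNReal.inv_ne_top]
        exact (ENNReal.ofReal_pos.2 (by positivity)).ne'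
      have hbd : ∀ k, ℙ (A k) ≤ C * (d (2 ^ (k + 2)) * u (2 ^ (k + 1))) := by
        intro k
        refine (hAbound k).trans ?_
        rw [hek]
        have hd2 : d (2 ^ k) = ENNReal.ofReal (((2:ℝ) ^ α) ^ q)
            * (ENNReal.ofReal (((2:ℝ) ^ α) ^ q) * d (2 ^ (k + 2))) := by
          rw [hdouble (2 ^ k), show (2:ℕ) * 2 ^ k = 2 ^ (k + 1) by ring,
            hdouble (2 ^ (k + 1)), show (2:ℕ) * 2 ^ (k + 1) = 2 ^ (k + 2) by ring]
        rw [hd2, hC_def]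
        ring_nf
        exact le_of_eq (by ring)
      have hfin : (∑' k, ℙ (A k)) ≤ C * ∑' k, d (2 ^ (k + 2)) * u (2 ^ (k + 1)) := by
        calc (∑' k, ℙ (A k)) ≤ ∑' k, C * (d (2 ^ (k + 2)) * u (2 ^ (k + 1))) :=
              ENNReal.tsum_le_tsum hbd
          _ = C * ∑' k, d (2 ^ (k + 2)) * u (2 ^ (k + 1)) := ENNReal.tsum_mul_left
      exact ne_top_of_le_ne_top (ENNReal.mul_ne_top hCne hL) hfin
    have hBC := MeasureTheory.ae_eventually_notMem hAsum
    filter_upwards [hBC] with ω hω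
    rw [eventually_atTop] at hω ⊢
    obtain ⟨K, hK⟩ := hω
    refine ⟨2 ^ K, fun n hn => ?_⟩
    have hn0 : n ≠ 0 := by
      have : (1:ℕ) ≤ 2 ^ K := Nat.one_le_two_pow
      omega
    have hkK : K ≤ Nat.log2 n := (Nat.le_log2 hn0).2 hn
    have h2k : 2 ^ Nat.log2 n ≤ n := Nat.log2_self_le hn0
    have h2k' : n < 2 ^ (Nat.log2 n + 1) := Nat.lt_log2_self
    have hA := hK (Nat.log2 n) hkK
    rw [hA_def, Set.notMem_setOf_iff, not_le] at hA
    have hmem : n - 1 ∈ Finset.range (2 ^ (Nat.log2 n + 1) - 1 + 1) := by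
      rw [Finset.mem_range]
      omega
    have hlt := lt_of_le_of_lt (Finset.le_sup' (fun m => ‖S (m + 1) ω‖ ^ q) hmem) hA
    rw [show n - 1 + 1 = n by omega] at hlt
    have hek_real : ((e (Nat.log2 n) : ℝ)) = (ε * ((2 ^ Nat.log2 n : ℕ) : ℝ) ^ α) ^ q :=
      Real.coe_toNNReal _ (by positivity)
    rw [hek_real] at hlt
    have hnormlt : ‖S n ω‖ < ε * ((2 ^ Nat.log2 n : ℕ) : ℝ) ^ α := by
      by_contra hcon
      push_neg at hcon
      exact absurd hlt (not_lt.2 (Real.rpow_le_rpow (by positivity) hcon hq0.le))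
    have hnα : (0:ℝ) < (n : ℝ) ^ α :=
      Real.rpow_pos_of_pos (by exact_mod_cast Nat.pos_of_ne_zero hn0) α
    rw [norm_smul, Real.norm_of_nonneg (by positivity), inv_mul_lt_iff₀ hnα]
    calc ‖S n ω‖ < ε * ((2 ^ Nat.log2 n : ℕ) : ℝ) ^ α := hnormlt
      _ ≤ ε * (n : ℝ) ^ α := by
          refine mul_le_mul_of_nonneg_left ?_ hε.le
          exact Real.rpow_le_rpow (by positivity) (by exact_mod_cast h2k) hα.le
      _ = (n : ℝ) ^ α * ε := mul_comm _ _
  have hall := ae_all_iff.2 fun j : ℕ => hAS (1 / ((j : ℝ) + 1)) (by positivity)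
  filter_upwards [hall] with ω hω
  rw [NormedAddCommGroup.tendsto_nhds_zero]
  intro ε hε
  obtain ⟨j, hj⟩ := exists_nat_one_div_lt hε
  filter_upwards [hω j] with n hn using hn.trans hj
end

section
/- Let 0 < q < r < 1. For every finite sequence X_1, …, X_n of independent random variables taking values in a real separable Banach space B with max_{1≤k≤n} E(‖X_k‖^q) < ∞, one has E(‖X_1 + ⋯ + X_n‖^q) ≤ C_1(q, r)·(sup_{t>0} t^{r/q}·Σ_{k=1}^n P(‖X_k‖^q > t))^{q/r}, where C_1(q, r) = (1/(1−r))^q·(1 + 2qe/(r − q)) and e denotes Euler's number. -/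
open MeasureTheory ProbabilityTheory Filter Set
open scoped ENNReal NNReal Topology ProbabilityTheory

lemma two_rpow_le {x : ℝ} (h0 : 0 ≤ x) (h1 : x ≤ 1) : (2:ℝ) ^ x ≤ 1 + x := by
  have h2 : (2:ℝ) ^ x = Real.exp (x * Real.log 2) := by
    rw [Real.rpow_def_of_pos (by norm_num), mul_comm]
  have hc := convexOn_exp.2 (Set.mem_univ (0:ℝ)) (Set.mem_univ (Real.log 2))
    (by linarith : (0:ℝ) ≤ 1 - x) h0 (by ring)
  simp only [smul_eq_mul, mul_zero, zero_add, Real.exp_zero,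
    Real.exp_log (by norm_num : (0:ℝ) < 2)] at hc
  rw [h2]
  calc Real.exp (x * Real.log 2) ≤ (1-x) * 1 + x * 2 := hc
    _ = 1 + x := by ring

lemma lint_Ioc_rpow {p a : ℝ} (hp : -1 < p) (ha : 0 ≤ a) :
    ∫⁻ s in Ioc (0:ℝ) a, ENNReal.ofReal (s ^ p) = ENNReal.ofReal (a ^ (p+1) / (p+1)) := by
  have hint : IntegrableOn (fun s : ℝ => s ^ p) (Ioc 0 a) := by
    have := intervalIntegral.intervalIntegrable_rpow' (a := 0) (b := a) hp
    rwa [intervalIntegrable_iff_integrableOn_Ioc_of_le ha] at this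
  rw [← MeasureTheory.ofReal_integral_eq_lintegral_ofReal hint]
  · congr 1
    rw [← intervalIntegral.integral_of_le ha, integral_rpow (Or.inl hp)]
    rw [Real.zero_rpow (by linarith : p + 1 ≠ 0)]
    ring
  · filter_upwards [ae_restrict_mem measurableSet_Ioc] with s hs
    exact Real.rpow_nonneg hs.1.le p

lemma lint_Ioo_rpow {p a : ℝ} (hp : -1 < p) (ha : 0 ≤ a) :
    ∫⁻ s in Ioo (0:ℝ) a, ENNReal.ofReal (s ^ p) = ENNReal.ofReal (a ^ (p+1) / (p+1)) := by
  rw [Measure.restrict_congr_set Ioo_ae_eq_Ioc, lint_Ioc_rpow hp ha]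

lemma lint_Ioi_rpow {p a : ℝ} (hp : p < -1) (ha : 0 < a) :
    ∫⁻ s in Ioi a, ENNReal.ofReal (s ^ p) = ENNReal.ofReal (a ^ (p+1) / (-(p+1))) := by
  rw [← MeasureTheory.ofReal_integral_eq_lintegral_ofReal
      (integrableOn_Ioi_rpow_of_lt hp ha)]
  · rw [integral_Ioi_rpow_of_lt hp ha]
    congr 1
    rw [neg_div, ← div_neg]
  · filter_upwards [ae_restrict_mem measurableSet_Ioi] with s hs
    exact Real.rpow_nonneg (ha.trans hs).le p

lemma calc_min {q r : ℝ} (hq : 0 < q) (hqr : q < r) (A : ℝ≥0∞) (hA : A ≠ ⊤) :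
    ∫⁻ t in Ioi (0:ℝ), min 1 (A * ENNReal.ofReal (t ^ (-r))) * ENNReal.ofReal (t ^ (q-1))
      ≤ ENNReal.ofReal (A.toReal ^ (q/r) * (1/q + 1/(r-q))) := by
  rcases eq_or_ne A 0 with h0 | h0
  · simp only [h0, zero_mul, min_eq_right (zero_le : (0 : ℝ≥0∞) ≤ 1), zero_mul, lintegral_zero]
    exact zero_le
  have hr : 0 < r := hq.trans hqr
  set a : ℝ := A.toReal ^ (1/r) with ha_def
  have hApos : 0 < A.toReal := ENNReal.toReal_pos h0 hA
  have hapos : 0 < a := Real.rpow_pos_of_pos hApos _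
  have har : a ^ r = A.toReal := by
    rw [ha_def, ← Real.rpow_mul hApos.le, one_div_mul_cancel hr.ne', Real.rpow_one]
  have haq : a ^ q = A.toReal ^ (q/r) := by
    rw [ha_def, ← Real.rpow_mul hApos.le]
    congr 1
    ring
  have hsplit : Ioi (0:ℝ) = Ioc 0 a ∪ Ioi a := (Ioc_union_Ioi_eq_Ioi hapos.le).symm
  rw [hsplit, lintegral_union measurableSet_Ioi Ioc_disjoint_Ioi_same]
  have h1 : ∫⁻ t in Ioc (0:ℝ) a, min 1 (A * ENNReal.ofReal (t ^ (-r))) * ENNReal.ofReal (t ^ (q-1))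
      ≤ ENNReal.ofReal (a ^ q / q) := by
    calc ∫⁻ t in Ioc (0:ℝ) a, min 1 (A * ENNReal.ofReal (t ^ (-r))) * ENNReal.ofReal (t ^ (q-1))
        ≤ ∫⁻ t in Ioc (0:ℝ) a, ENNReal.ofReal (t ^ (q-1)) :=
          lintegral_mono fun t => by
            calc min 1 (A * ENNReal.ofReal (t ^ (-r))) * ENNReal.ofReal (t ^ (q-1))
                ≤ 1 * ENNReal.ofReal (t ^ (q-1)) := mul_le_mul_left (min_le_left _ _) _
              _ = ENNReal.ofReal (t ^ (q-1)) := one_mul _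
      _ = ENNReal.ofReal (a ^ q / q) := by
          rw [lint_Ioc_rpow (by linarith) hapos.le]
          norm_num
  have h2 : ∫⁻ t in Ioi a, min 1 (A * ENNReal.ofReal (t ^ (-r))) * ENNReal.ofReal (t ^ (q-1))
      ≤ ENNReal.ofReal (a ^ q / (r - q)) := by
    calc ∫⁻ t in Ioi a, min 1 (A * ENNReal.ofReal (t ^ (-r))) * ENNReal.ofReal (t ^ (q-1))
        ≤ ∫⁻ t in Ioi a, A * ENNReal.ofReal (t ^ (q-1-r)) := by
          apply setLIntegral_mono ((measurable_id.pow measurable_const).ennreal_ofReal.const_mul A)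
          intro t ht
          have htpos : 0 < t := hapos.trans ht
          calc min 1 (A * ENNReal.ofReal (t ^ (-r))) * ENNReal.ofReal (t ^ (q-1))
              ≤ A * ENNReal.ofReal (t ^ (-r)) * ENNReal.ofReal (t ^ (q-1)) :=
                mul_le_mul_left (min_le_right _ _) _
            _ = A * ENNReal.ofReal (t ^ (q-1-r)) := by
                rw [mul_assoc, ← ENNReal.ofReal_mul (Real.rpow_nonneg htpos.le _),
                  ← Real.rpow_add htpos]
                ring_nf
      _ = A * ENNReal.ofReal (a ^ (q-r) / (r-q)) := by
          rw [lintegral_const_mul' _ _ hA, lint_Ioi_rpow (by linarith) hapos]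
          congr 2 <;> ring
      _ = ENNReal.ofReal (a ^ q / (r - q)) := by
          rw [← ENNReal.ofReal_toReal hA, ← ENNReal.ofReal_mul hApos.le]
          congr 1
          rw [← har, ← mul_div_assoc, ← Real.rpow_add hapos]
          have : r + (q - r) = q := by ring
          rw [this]
  calc _ ≤ ENNReal.ofReal (a ^ q / q) + ENNReal.ofReal (a ^ q / (r - q)) := add_le_add h1 h2
    _ = ENNReal.ofReal (A.toReal ^ (q/r) * (1/q + 1/(r-q))) := by
        rw [← ENNReal.ofReal_add (by positivity) (div_nonneg (by positivity) (by linarith)), haq]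
        congr 1
        field_simp

/-- Lemma 3.3. For `0 < q < r < 1` and independent `B`-valued
random variables `X₁, …, Xₙ` with `max_k E(‖X_k‖^q) < ∞`,
`E(‖∑ X_k‖^q) ≤ C₁(q,r) (sup_{t>0} t^{r/q} ∑ ℙ(‖X_k‖^q > t))^{q/r}` with
`C₁(q,r) = (1/(1-r))^q (1 + 2qe/(r-q))`. -/
theorem stmt_11
    {Ω : Type*} [MeasureSpace Ω] [IsProbabilityMeasure (ℙ : Measure Ω)]
    {B : Type*} [NormedAddCommGroup B] [NormedSpace ℝ B] [CompleteSpace B]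
    [TopologicalSpace.SeparableSpace B] [MeasurableSpace B] [BorelSpace B]
    (q r : ℝ) (hq : 0 < q) (hqr : q < r) (hr : r < 1)
    (n : ℕ) (X : Fin n → Ω → B) (hX : ∀ k, Measurable (X k))
    (hindep : iIndepFun X ℙ)
    (hmom : ∀ k, ∫⁻ ω, ENNReal.ofReal (‖X k ω‖ ^ q) ∂ℙ < ⊤) :
    (∫⁻ ω, ENNReal.ofReal (‖∑ k, X k ω‖ ^ q) ∂ℙ)
      ≤ ENNReal.ofReal ((1 / (1 - r)) ^ q * (1 + 2 * q * Real.exp 1 / (r - q))) *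
        (⨆ t ∈ Set.Ioi (0 : ℝ),
          ENNReal.ofReal t ^ (r / q) * ∑ k, ℙ {ω | ‖X k ω‖ ^ q > t}) ^ (q / r) := by
  have hr0 : 0 < r := hq.trans hqr
  have h1r : 0 < 1 - r := by linarith
  have hrq : 0 < r - q := by linarith
  have hE : (1:ℝ) ≤ Real.exp 1 := by linarith [Real.add_one_le_exp 1]
  have hCpos : 0 < (1 / (1 - r)) ^ q * (1 + 2 * q * Real.exp 1 / (r - q)) := by positivity
  set M : ℝ≥0∞ := ⨆ t ∈ Set.Ioi (0 : ℝ),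
      ENNReal.ofReal t ^ (r / q) * ∑ k, ℙ {ω | ‖X k ω‖ ^ q > t} with hM_def
  rcases eq_or_ne M ⊤ with hMtop | hMfin
  · rw [hMtop, ENNReal.top_rpow_of_pos (by positivity), ENNReal.mul_top
      (ENNReal.ofReal_pos.2 hCpos).ne']
    exact le_top
  -- tail bound from the definition of M
  have htail : ∀ u : ℝ, 0 < u →
      (∑ k, ℙ {ω | u < ‖X k ω‖}) ≤ M * ENNReal.ofReal (u ^ (-r)) := by
    intro u hu
    have hmem : u ^ q ∈ Set.Ioi (0:ℝ) := Real.rpow_pos_of_pos hu q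
    have hle : ENNReal.ofReal (u ^ q) ^ (r / q) * ∑ k, ℙ {ω | ‖X k ω‖ ^ q > u ^ q} ≤ M :=
      le_iSup₂ (f := fun t (_ : t ∈ Set.Ioi (0:ℝ)) =>
        ENNReal.ofReal t ^ (r / q) * ∑ k, ℙ {ω | ‖X k ω‖ ^ q > t}) (u ^ q) hmem
    have hset : ∀ k : Fin n, {ω | ‖X k ω‖ ^ q > u ^ q} = {ω | u < ‖X k ω‖} := by
      intro k
      ext ω
      simp only [Set.mem_setOf_eq, gt_iff_lt]
      exact Real.rpow_lt_rpow_iff hu.le (norm_nonneg _) hq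
    have hpow : ENNReal.ofReal (u ^ q) ^ (r / q) = ENNReal.ofReal (u ^ r) := by
      rw [← ENNReal.ofReal_rpow_of_pos hu, ← ENNReal.ofReal_rpow_of_pos hu, ← ENNReal.rpow_mul]
      congr 1
      field_simp
    simp only [hset, hpow] at hle
    calc ∑ k, ℙ {ω | u < ‖X k ω‖}
        = ENNReal.ofReal (u ^ (-r)) * (ENNReal.ofReal (u ^ r) * ∑ k, ℙ {ω | u < ‖X k ω‖}) := by
          rw [← mul_assoc, ← ENNReal.ofReal_mul (Real.rpow_nonneg hu.le _),
            ← Real.rpow_add hu]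
          norm_num
      _ ≤ ENNReal.ofReal (u ^ (-r)) * M := mul_le_mul_right hle _
      _ = M * ENNReal.ofReal (u ^ (-r)) := mul_comm _ _
  have hS_meas : Measurable fun ω => ∑ k, X k ω :=
    Finset.measurable_sum Finset.univ fun k _ => hX k
  set A : ℝ≥0∞ := ENNReal.ofReal (2 * (1-r) ^ (-r)) * M with hA_def
  have hAfin : A ≠ ⊤ := ENNReal.mul_ne_top ENNReal.ofReal_ne_top hMfin
  -- main tail estimate for the sum
  have hmain : ∀ u ∈ Ioi (0:ℝ),
      ℙ {ω | u < ‖∑ k, X k ω‖} ≤ min 1 (A * ENNReal.ofReal (u ^ (-r))) := by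
    intro u hu
    have hu' : (0:ℝ) < u := hu
    refine le_min prob_le_one ?_
    set a : ℝ := (1 - r) * u with ha_def
    have ha : 0 < a := mul_pos h1r hu'
    set Z : Fin n → Ω → B := fun k ω => if ‖X k ω‖ ≤ a then X k ω else 0 with hZ_def
    have hZmeas : ∀ k, Measurable (Z k) := fun k =>
      Measurable.ite (measurableSet_le (hX k).norm measurable_const) (hX k) measurable_const
    have hZle : ∀ k ω, ‖Z k ω‖ ≤ a := by
      intro k ω
      by_cases h : ‖X k ω‖ ≤ a
      · simpa [hZ_def, h] using h
      · simp [hZ_def, h, ha.le]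
    have hZle' : ∀ k ω, ‖Z k ω‖ ≤ ‖X k ω‖ := by
      intro k ω
      by_cases h : ‖X k ω‖ ≤ a
      · simp [hZ_def, h]
      · simp [hZ_def, h, norm_nonneg]
    have hTmeas : Measurable fun ω => ∑ k, Z k ω :=
      Finset.measurable_sum Finset.univ fun k _ => hZmeas k
    have hsub : {ω | u < ‖∑ k, X k ω‖} ⊆
        (⋃ k, {ω | a < ‖X k ω‖}) ∪ {ω | u < ‖∑ k, Z k ω‖} := by
      intro ω hω
      by_cases hall : ∀ k, ‖X k ω‖ ≤ a
      · right
        have hZX : ∀ k : Fin n, Z k ω = X k ω := fun k => if_pos (hall k)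
        simp only [Set.mem_setOf_eq]
        rw [Finset.sum_congr rfl fun k _ => hZX k]
        exact hω
      · left
        push_neg at hall
        obtain ⟨k, hk⟩ := hall
        exact Set.mem_iUnion.2 ⟨k, hk⟩
    -- truncated first moment
    have htrunc : (∫⁻ ω, ENNReal.ofReal ‖∑ k, Z k ω‖ ∂ℙ)
        ≤ M * ENNReal.ofReal (a ^ (1-r) / (1-r)) := by
      have step1 : (∫⁻ ω, ENNReal.ofReal ‖∑ k, Z k ω‖ ∂ℙ)
          ≤ ∑ k, ∫⁻ ω, ENNReal.ofReal ‖Z k ω‖ ∂ℙ := by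
        calc (∫⁻ ω, ENNReal.ofReal ‖∑ k, Z k ω‖ ∂ℙ)
            ≤ ∫⁻ ω, ∑ k, ENNReal.ofReal ‖Z k ω‖ ∂ℙ := by
              apply lintegral_mono
              intro ω
              dsimp only
              rw [← ENNReal.ofReal_sum_of_nonneg fun k _ => norm_nonneg _]
              exact ENNReal.ofReal_le_ofReal (norm_sum_le _ _)
          _ = ∑ k, ∫⁻ ω, ENNReal.ofReal ‖Z k ω‖ ∂ℙ :=
              lintegral_finset_sum _ fun k _ => (hZmeas k).norm.ennreal_ofReal
      have step2 : ∀ k : Fin n, (∫⁻ ω, ENNReal.ofReal ‖Z k ω‖ ∂ℙ)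
          ≤ ∫⁻ s in Ioo (0:ℝ) a, ℙ {ω | s < ‖X k ω‖} := by
        intro k
        rw [lintegral_eq_lintegral_meas_lt ℙ (ae_of_all _ fun ω => norm_nonneg _)
          (hZmeas k).norm.aemeasurable]
        rw [← lintegral_indicator measurableSet_Ioi, ← lintegral_indicator measurableSet_Ioo]
        apply lintegral_mono
        intro s
        by_cases hs : s ∈ Ioi (0:ℝ)
        · rw [Set.indicator_of_mem hs]
          by_cases hsa : s < a
          · rw [Set.indicator_of_mem (Set.mem_Ioo.mpr ⟨hs, hsa⟩)]
            apply measure_mono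
            intro ω hω
            exact lt_of_lt_of_le hω (hZle' k ω)
          · have hempty : {ω | s < ‖Z k ω‖} = ∅ := by
              ext ω
              simp only [Set.mem_setOf_eq, Set.mem_empty_iff_false, iff_false, not_lt]
              exact (hZle k ω).trans (not_lt.1 hsa)
            rw [hempty, measure_empty]
            exact zero_le
        · rw [Set.indicator_of_notMem hs]
          exact zero_le
      have hmbl : ∀ k : Fin n, Measurable fun s : ℝ => ℙ {ω | s < ‖X k ω‖} := by
        intro k
        apply Antitone.measurable
        intro s s' hss'
        apply measure_mono
        intro ω hω
        exact lt_of_le_of_lt hss' hω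
      calc (∫⁻ ω, ENNReal.ofReal ‖∑ k, Z k ω‖ ∂ℙ)
          ≤ ∑ k, ∫⁻ ω, ENNReal.ofReal ‖Z k ω‖ ∂ℙ := step1
        _ ≤ ∑ k, ∫⁻ s in Ioo (0:ℝ) a, ℙ {ω | s < ‖X k ω‖} :=
            Finset.sum_le_sum fun k _ => step2 k
        _ = ∫⁻ s in Ioo (0:ℝ) a, ∑ k, ℙ {ω | s < ‖X k ω‖} :=
            (lintegral_finset_sum _ fun k _ => hmbl k).symm
        _ ≤ ∫⁻ s in Ioo (0:ℝ) a, M * ENNReal.ofReal (s ^ (-r)) := by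
            apply setLIntegral_mono
              ((measurable_id.pow measurable_const).ennreal_ofReal.const_mul M)
            intro s hs
            exact htail s hs.1
        _ = M * ∫⁻ s in Ioo (0:ℝ) a, ENNReal.ofReal (s ^ (-r)) :=
            lintegral_const_mul' _ _ hMfin
        _ = M * ENNReal.ofReal (a ^ (1-r) / (1-r)) := by
            rw [lint_Ioo_rpow (by linarith) ha.le]
            congr 2 <;> ring
    -- Markov
    have hMarkov : ℙ {ω | u < ‖∑ k, Z k ω‖}
        ≤ (M * ENNReal.ofReal (a ^ (1-r) / (1-r))) / ENNReal.ofReal u := by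
      calc ℙ {ω | u < ‖∑ k, Z k ω‖}
          ≤ ℙ {ω | ENNReal.ofReal u ≤ ENNReal.ofReal ‖∑ k, Z k ω‖} := by
            apply measure_mono
            intro ω hω
            exact ENNReal.ofReal_le_ofReal (le_of_lt hω)
        _ ≤ (∫⁻ ω, ENNReal.ofReal ‖∑ k, Z k ω‖ ∂ℙ) / ENNReal.ofReal u :=
            meas_ge_le_lintegral_div hTmeas.norm.ennreal_ofReal.aemeasurable
              (by simpa using hu.out) ENNReal.ofReal_ne_top
        _ ≤ (M * ENNReal.ofReal (a ^ (1-r) / (1-r))) / ENNReal.ofReal u :=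
            ENNReal.div_le_div_right htrunc _
    -- combine
    have hb : (1-r) ^ (-r) * u ^ (-r) = a ^ (-r) := by
      rw [ha_def, Real.mul_rpow h1r.le hu.out.le]
    have e1 : ((1:ℝ)-r) ^ ((1:ℝ)-r) = (1-r) ^ (-r) * (1-r) := by
      rw [show ((1:ℝ)-r) ^ ((1:ℝ)-r) = (1-r) ^ (-r+1:ℝ) from by congr 1; ring,
        Real.rpow_add h1r, Real.rpow_one]
    have e2 : u ^ ((1:ℝ)-r) = u ^ (-r) * u := by
      rw [show u ^ ((1:ℝ)-r) = u ^ (-r+1:ℝ) from by congr 1; ring,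
        Real.rpow_add hu', Real.rpow_one]
    have hb2 : a ^ (1-r) / (1-r) / u = (1-r) ^ (-r) * u ^ (-r) := by
      rw [ha_def, Real.mul_rpow h1r.le hu'.le, e1, e2]
      field_simp
    calc ℙ {ω | u < ‖∑ k, X k ω‖}
        ≤ ℙ (⋃ k, {ω | a < ‖X k ω‖}) + ℙ {ω | u < ‖∑ k, Z k ω‖} :=
          (measure_mono hsub).trans (measure_union_le _ _)
      _ ≤ (∑ k, ℙ {ω | a < ‖X k ω‖}) + (M * ENNReal.ofReal (a ^ (1-r) / (1-r))) / ENNReal.ofReal u :=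
          add_le_add (measure_iUnion_fintype_le _ _) hMarkov
      _ ≤ M * ENNReal.ofReal (a ^ (-r)) + M * ENNReal.ofReal ((1-r) ^ (-r) * u ^ (-r)) := by
          apply add_le_add (htail a ha)
          rw [div_eq_mul_inv, mul_assoc, ← div_eq_mul_inv,
            ← ENNReal.ofReal_div_of_pos hu', hb2]
      _ = A * ENNReal.ofReal (u ^ (-r)) := by
          rw [← hb, hA_def,
            ENNReal.ofReal_mul (Real.rpow_nonneg h1r.le (-r)),
            ENNReal.ofReal_mul (by norm_num : (0:ℝ) ≤ 2), ENNReal.ofReal_ofNat]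
          ring
  -- layer cake for the sum
  have hLHS : (∫⁻ ω, ENNReal.ofReal (‖∑ k, X k ω‖ ^ q) ∂ℙ)
      = ENNReal.ofReal q *
        ∫⁻ t in Ioi (0:ℝ), ℙ {ω | t < ‖∑ k, X k ω‖} * ENNReal.ofReal (t ^ (q-1)) :=
    lintegral_rpow_eq_lintegral_meas_lt_mul ℙ (ae_of_all _ fun ω => norm_nonneg _)
      hS_meas.norm.aemeasurable hq
  have hstepE : (∫⁻ t in Ioi (0:ℝ), ℙ {ω | t < ‖∑ k, X k ω‖} * ENNReal.ofReal (t ^ (q-1)))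
      ≤ ∫⁻ t in Ioi (0:ℝ), min 1 (A * ENNReal.ofReal (t ^ (-r))) * ENNReal.ofReal (t ^ (q-1)) := by
    apply setLIntegral_mono
      ((measurable_const.min ((measurable_id.pow measurable_const).ennreal_ofReal.const_mul A)).mul
        (measurable_id.pow measurable_const).ennreal_ofReal)
    intro t ht
    exact mul_le_mul_left (hmain t ht) _
  have hF := calc_min hq hqr A hAfin
  -- put it together
  have hchain : (∫⁻ ω, ENNReal.ofReal (‖∑ k, X k ω‖ ^ q) ∂ℙ)
      ≤ ENNReal.ofReal (q * (A.toReal ^ (q/r) * (1/q + 1/(r-q)))) := by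
    rw [hLHS, ENNReal.ofReal_mul hq.le]
    exact mul_le_mul_right (hstepE.trans hF) _
  refine hchain.trans ?_
  -- final constant comparison
  have hMto : M = ENNReal.ofReal M.toReal := (ENNReal.ofReal_toReal hMfin).symm
  have hMrpow : M ^ (q/r) = ENNReal.ofReal (M.toReal ^ (q/r)) := by
    rw [hMto, ENNReal.ofReal_rpow_of_nonneg ENNReal.toReal_nonneg (by positivity)]
    rw [← hMto]
  rw [hMrpow, ← ENNReal.ofReal_mul hCpos.le]
  apply ENNReal.ofReal_le_ofReal
  have hAto : A.toReal = 2 * (1-r) ^ (-r) * M.toReal := by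
    rw [hA_def, ENNReal.toReal_mul, ENNReal.toReal_ofReal (by positivity)]
  rw [hAto, Real.mul_rpow (by positivity) ENNReal.toReal_nonneg]
  -- it remains: q * ((c)^(q/r) * Mt^(q/r) * (1/q + 1/(r-q))) ≤ C * Mt^(q/r)
  have hkey : q * ((2 * (1-r) ^ (-r)) ^ (q/r) * (1/q + 1/(r-q)))
      ≤ (1 / (1 - r)) ^ q * (1 + 2 * q * Real.exp 1 / (r - q)) := by
    have hsplit : (2 * (1-r) ^ (-r)) ^ (q/r) = 2 ^ (q/r) * (1-r) ^ (-q) := by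
      rw [Real.mul_rpow (by norm_num) (Real.rpow_nonneg h1r.le _),
        ← Real.rpow_mul h1r.le]
      congr 2
      field_simp
    have hone : (1 / (1 - r)) ^ q = (1-r) ^ (-q) := by
      rw [one_div, ← Real.rpow_neg_one (1-r), ← Real.rpow_mul h1r.le]
      congr 1
      ring
    rw [hsplit, hone]
    have h2x : r * (2:ℝ) ^ (q/r) ≤ r + q := by
      have h := two_rpow_le (by positivity : (0:ℝ) ≤ q/r)
        ((div_le_one hr0).2 hqr.le)
      calc r * (2:ℝ) ^ (q/r) ≤ r * (1 + q/r) := by nlinarith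
        _ = r + q := by field_simp
    have hq2 : q * (1/q + 1/(r-q)) = r / (r-q) := by
      field_simp
      ring
    have hrpownn : (0:ℝ) ≤ (1-r) ^ (-q) := Real.rpow_nonneg h1r.le _
    calc q * (2 ^ (q/r) * (1-r) ^ (-q) * (1/q + 1/(r-q)))
        = (2 ^ (q/r) * (r/(r-q))) * (1-r) ^ (-q) := by
          rw [← hq2]; ring
      _ ≤ (1 + 2 * q * Real.exp 1 / (r - q)) * (1-r) ^ (-q) := by
          apply mul_le_mul_of_nonneg_right _ hrpownn
          rw [mul_div_assoc', div_le_iff₀ hrq]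
          have hexp : (1 + 2 * q * Real.exp 1 / (r - q)) * (r - q) = (r - q) + 2 * q * Real.exp 1 := by
            field_simp
          rw [hexp]
          have h2q : 2 * q ≤ 2 * q * Real.exp 1 := by nlinarith
          calc 2 ^ (q/r) * r ≤ r + q := by linarith [h2x]
            _ ≤ (r - q) + 2 * q * Real.exp 1 := by linarith
      _ = (1-r) ^ (-q) * (1 + 2 * q * Real.exp 1 / (r - q)) := by ring
  calc q * ((2 * (1-r) ^ (-r)) ^ (q/r) * M.toReal ^ (q/r) * (1/q + 1/(r-q)))
      = (q * ((2 * (1-r) ^ (-r)) ^ (q/r) * (1/q + 1/(r-q)))) * M.toReal ^ (q/r) := by ring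
    _ ≤ ((1 / (1 - r)) ^ q * (1 + 2 * q * Real.exp 1 / (r - q))) * M.toReal ^ (q/r) :=
        mul_le_mul_of_nonneg_right hkey (Real.rpow_nonneg ENNReal.toReal_nonneg _)
end

section
/- Let 0 < q ≤ p < 1 and let {X_n, n ≥ 1} be a sequence of independent random variables taking values in a real separable Banach space B, which is stochastically dominated by a random variable X satisfying ∫_0^∞ (P(‖X‖^q > t))^{q/p} dt < ∞. For n ≥ 1 let u_n = inf{t ≥ 0 : P(‖X‖ > t) < 1/n} and U_{n,n}^{(1)} = Σ_{k=1}^n X_k·1{‖X_k‖ ≤ u_n}. Then Σ_{n=1}^∞ E(‖U_{n,n}^{(1)}‖^q)/n^{1+q/p} < ∞. -/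
open MeasureTheory ProbabilityTheory Filter Set
open scoped ENNReal NNReal Topology ProbabilityTheory

lemma aux_jensen {Ω : Type*} [MeasurableSpace Ω] (μ : Measure Ω) [IsProbabilityMeasure μ]
    (f : Ω → ℝ≥0∞) (hf : AEMeasurable f μ) {q : ℝ} (hq0 : 0 < q) (hq1 : q < 1) :
    ∫⁻ ω, (f ω) ^ q ∂μ ≤ (∫⁻ ω, f ω ∂μ) ^ q := by
  have hpq : (1/q).HolderConjugate (1/(1-q)) := by
    rw [Real.holderConjugate_iff]
    constructor
    · rw [lt_div_iff₀ hq0]; linarith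
    · rw [one_div, one_div, inv_inv, inv_inv]; ring
  have h := ENNReal.lintegral_mul_le_Lp_mul_Lq μ hpq (f := fun ω => (f ω) ^ q)
      (g := fun _ => (1:ℝ≥0∞)) (hf.pow_const q) aemeasurable_const
  simp only [Pi.mul_apply, mul_one, ENNReal.one_rpow, lintegral_const, measure_univ,
    one_mul, ENNReal.one_rpow] at h
  calc ∫⁻ ω, (f ω) ^ q ∂μ ≤ (∫⁻ ω, ((f ω) ^ q) ^ (1/q) ∂μ) ^ (1 / (1/q)) * 1 := by
        simpa using h
    _ = (∫⁻ ω, f ω ∂μ) ^ q := by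
        rw [mul_one, one_div_one_div]
        congr 1
        refine lintegral_congr fun ω => ?_
        rw [← ENNReal.rpow_mul, mul_one_div_cancel hq0.ne', ENNReal.rpow_one]

lemma aux_rpow_sum_le {ι : Type*} (s : Finset ι) (f : ι → ℝ≥0∞) {q : ℝ}
    (hq0 : 0 < q) (hq1 : q ≤ 1) :
    (∑ i ∈ s, f i) ^ q ≤ ∑ i ∈ s, (f i) ^ q := by
  classical
  induction s using Finset.induction_on with
  | empty => simp [ENNReal.zero_rpow_of_pos hq0]
  | @insert a s ha ih =>
      rw [Finset.sum_insert ha, Finset.sum_insert ha]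
      exact le_trans (ENNReal.rpow_add_le_add_rpow _ _ hq0.le hq1) (by gcongr)

lemma aux_tsum_geom_tail (a : ℝ≥0∞) (c : ℕ) :
    ∑' j : ℕ, (if c ≤ j then a ^ j else 0) = a ^ c * (1 - a)⁻¹ := by
  classical
  have h1 : ∑' j : ({j : ℕ | c ≤ j} : Set ℕ), a ^ (j : ℕ)
      = ∑' j : ℕ, (if c ≤ j then a ^ j else 0) := by
    rw [tsum_subtype]
    refine tsum_congr fun j => ?_
    by_cases h : c ≤ j <;> simp [Set.indicator, h]
  let e : ℕ ≃ ({j : ℕ | c ≤ j} : Set ℕ) :=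
    ⟨fun n => ⟨n + c, Nat.le_add_left c n⟩, fun j => (j : ℕ) - c,
     fun n => by simp, fun j => Subtype.ext (Nat.sub_add_cancel j.2)⟩
  rw [← h1, ← e.tsum_eq]
  show ∑' n : ℕ, a ^ (n + c) = _
  calc ∑' n : ℕ, a ^ (n + c) = ∑' n : ℕ, a ^ n * a ^ c := by
        refine tsum_congr fun n => ?_
        rw [pow_add]
    _ = (∑' n : ℕ, a ^ n) * a ^ c := by rw [ENNReal.tsum_mul_right]
    _ = a ^ c * (1 - a)⁻¹ := by rw [ENNReal.tsum_geometric, mul_comm]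

lemma aux_rpow_pow (y : ℝ) (i : ℕ) : ((2:ℝ≥0∞) ^ y) ^ (i:ℕ) = (2:ℝ≥0∞) ^ (y * i) := by
  rw [← ENNReal.rpow_natCast ((2:ℝ≥0∞) ^ y) i, ← ENNReal.rpow_mul]

lemma aux_rpow_add (x y : ℝ) : (2:ℝ≥0∞) ^ (x + y) = (2:ℝ≥0∞) ^ x * (2:ℝ≥0∞) ^ y :=
  ENNReal.rpow_add x y (by norm_num) (by norm_num)

theorem stmt_13
    {Ω : Type*} [MeasureSpace Ω] [IsProbabilityMeasure (ℙ : Measure Ω)]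
    {B : Type*} [NormedAddCommGroup B] [NormedSpace ℝ B] [CompleteSpace B]
    [TopologicalSpace.SeparableSpace B] [MeasurableSpace B] [BorelSpace B]
    (p q : ℝ) (hq0 : 0 < q) (hqp : q ≤ p) (hp : p < 1)
    (Xs : ℕ → Ω → B) (hXs : ∀ n, Measurable (Xs n))
    (hindep : iIndepFun Xs ℙ)
    (X : Ω → B) (hX : Measurable X)
    (hdom : ∀ n, ∀ t : ℝ, 0 ≤ t → ℙ {ω | ‖Xs n ω‖ > t} ≤ ℙ {ω | ‖X ω‖ > t})
    (htail : ∫⁻ t in Set.Ioi (0 : ℝ), (ℙ {ω | ‖X ω‖ ^ q > t}) ^ (q / p) < ⊤)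
    (u : ℕ → ℝ)
    (hu : ∀ n : ℕ, u n = sInf {t : ℝ | 0 ≤ t ∧ ℙ {ω | ‖X ω‖ > t} < 1 / (n : ℝ≥0∞)})
    (U : ℕ → Ω → B)
    (hU : ∀ n ω, U n ω = ∑ k ∈ Finset.range n,
        {ω' | ‖Xs k ω'‖ ≤ u n}.indicator (Xs k) ω) :
    (∑' n : ℕ, (∫⁻ ω, ENNReal.ofReal (‖U (n + 1) ω‖ ^ q) ∂ℙ) /
        ((n : ℝ≥0∞) + 1) ^ (1 + q / p)) < ⊤ := by
  classical
  have hq1 : q < 1 := lt_of_le_of_lt hqp hp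
  have hp0 : 0 < p := lt_of_lt_of_le hq0 hqp
  set r : ℝ := q / p with hr_def
  have hr0 : 0 < r := div_pos hq0 hp0
  have hqr : q < r := by
    rw [hr_def, lt_div_iff₀ hp0]; nlinarith
  set c : ℝ := 1/q - 1 with hc_def
  have hc0 : (0:ℝ) < c := by
    rw [hc_def]
    have : 1 < 1/q := by rw [lt_div_iff₀ hq0]; linarith
    linarith
  -- tail functions
  set G : ℝ → ℝ≥0∞ := fun t => ℙ {ω | ‖X ω‖ ^ q > t} with hG_def
  -- bridge between levels of ‖Y‖^q and ‖Y‖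
  have hbridge : ∀ (Y : Ω → B) (t : ℝ), 0 < t →
      {ω | ‖Y ω‖ ^ q > t} = {ω | ‖Y ω‖ > t ^ (1/q)} := by
    intro Y t ht
    ext ω
    simp only [Set.mem_setOf_eq, gt_iff_lt]
    constructor
    · intro h
      have h2 : t ^ (1/q) < (‖Y ω‖ ^ q) ^ (1/q) :=
        Real.rpow_lt_rpow ht.le h (by positivity)
      rwa [← Real.rpow_mul (norm_nonneg _), mul_one_div_cancel hq0.ne',
        Real.rpow_one] at h2
    · intro h
      have h2 : (t ^ (1/q)) ^ q < ‖Y ω‖ ^ q :=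
        Real.rpow_lt_rpow (Real.rpow_nonneg ht.le _) h hq0
      rwa [← Real.rpow_mul ht.le, one_div_mul_cancel hq0.ne', Real.rpow_one] at h2
  -- quantile set facts
  have hSbdd : ∀ n : ℕ, BddBelow {t : ℝ | 0 ≤ t ∧ ℙ {ω | ‖X ω‖ > t} < 1 / (n : ℝ≥0∞)} :=
    fun n => ⟨0, fun x hx => hx.1⟩
  have hS_nonempty : ∀ n : ℕ,
      {t : ℝ | 0 ≤ t ∧ ℙ {ω | ‖X ω‖ > t} < 1 / (n : ℝ≥0∞)}.Nonempty := by
    intro n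
    have hmono : Antitone (fun k : ℕ => ({ω | ‖X ω‖ > (k:ℝ)} : Set Ω)) := by
      intro i j hij
      intro ω hω
      exact lt_of_le_of_lt ((Nat.cast_le (α := ℝ)).mpr hij) hω
    have hinter : (⋂ k : ℕ, {ω | ‖X ω‖ > (k:ℝ)}) = ∅ := by
      ext ω
      simp only [Set.mem_iInter, Set.mem_setOf_eq, Set.mem_empty_iff_false, iff_false,
        not_forall, gt_iff_lt, not_lt]
      obtain ⟨k, hk⟩ := exists_nat_gt ‖X ω‖
      exact ⟨k, hk.le⟩
    have h0 : Tendsto (fun k : ℕ => ℙ {ω | ‖X ω‖ > (k:ℝ)}) atTop (𝓝 0) := by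
      have := tendsto_measure_iInter_atTop (μ := (ℙ : Measure Ω))
        (s := fun k : ℕ => {ω | ‖X ω‖ > (k:ℝ)})
        (fun k => (measurableSet_lt measurable_const hX.norm).nullMeasurableSet) hmono
        ⟨0, measure_ne_top _ _⟩
      rwa [hinter, measure_empty] at this
    have hpos : (0:ℝ≥0∞) < 1 / (n : ℝ≥0∞) :=
      ENNReal.div_pos one_ne_zero (by simp)
    obtain ⟨k, hk⟩ := (h0.eventually (gt_mem_nhds hpos)).exists
    exact ⟨(k:ℝ), ⟨Nat.cast_nonneg k, hk⟩⟩
  have hu_nonneg : ∀ n, 0 ≤ u n := by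
    intro n
    rw [hu n]
    exact Real.sInf_nonneg (fun x hx => hx.1)
  have hu_mono : Monotone u := by
    intro n m hnm
    rw [hu n, hu m]
    refine csInf_le_csInf (hSbdd n) (hS_nonempty m) ?_
    intro t ht
    refine ⟨ht.1, lt_of_lt_of_le ht.2 ?_⟩
    apply ENNReal.div_le_div_left
    exact_mod_cast Nat.cast_le.mpr hnm
  have hQlow : ∀ (n : ℕ) (s : ℝ), 0 ≤ s → s < u n →
      1 / (n : ℝ≥0∞) ≤ ℙ {ω | ‖X ω‖ > s} := by
    intro n s hs hsu
    by_contra hlt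
    push_neg at hlt
    have : u n ≤ s := by
      rw [hu n]; exact csInf_le (hSbdd n) ⟨hs, hlt⟩
    linarith
  have hQhigh : ∀ (n : ℕ) (s : ℝ), u n < s →
      ℙ {ω | ‖X ω‖ > s} ≤ 1 / (n : ℝ≥0∞) := by
    intro n s hsu
    rw [hu n] at hsu
    obtain ⟨t, ht, hts⟩ := (csInf_lt_iff (hSbdd n) (hS_nonempty n)).mp hsu
    calc ℙ {ω | ‖X ω‖ > s} ≤ ℙ {ω | ‖X ω‖ > t} :=
          measure_mono (fun ω hω => lt_of_le_of_lt hts.le hω)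
      _ ≤ 1 / (n : ℝ≥0∞) := ht.2.le
  -- truncated levels
  set v : ℕ → ℝ := fun m => u m ^ q with hv_def
  have hv_nonneg : ∀ m, 0 ≤ v m := fun m => Real.rpow_nonneg (hu_nonneg m) q
  have hv_mono : Monotone v := fun n m h =>
    Real.rpow_le_rpow (hu_nonneg n) (hu_mono h) hq0.le
  have hrt : ∀ (m : ℕ) (t : ℝ), 0 ≤ t → t < v m → t ^ (1/q) < u m := by
    intro m t ht htv
    have h2 : t ^ (1/q) < (u m ^ q) ^ (1/q) :=
      Real.rpow_lt_rpow ht htv (by positivity)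
    rwa [← Real.rpow_mul (hu_nonneg m), mul_one_div_cancel hq0.ne',
      Real.rpow_one] at h2
  have hrt' : ∀ (m : ℕ) (t : ℝ), v m < t → u m < t ^ (1/q) := by
    intro m t htv
    have h2 : (u m ^ q) ^ (1/q) < t ^ (1/q) :=
      Real.rpow_lt_rpow (hv_nonneg m) htv (by positivity)
    rwa [← Real.rpow_mul (hu_nonneg m), mul_one_div_cancel hq0.ne',
      Real.rpow_one] at h2
  -- G bounds
  have hGlow : ∀ (m : ℕ) (t : ℝ), 0 < t → t < v m → 1 / (m : ℝ≥0∞) ≤ G t := by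
    intro m t ht htv
    have hGt : G t = ℙ {ω | ‖X ω‖ > t ^ (1/q)} := by
      rw [hG_def]; exact congrArg _ (hbridge X t ht)
    rw [hGt]
    exact hQlow m _ (Real.rpow_nonneg ht.le _) (hrt m t ht.le htv)
  have hGhigh : ∀ (m : ℕ) (t : ℝ), 0 < t → v m < t → G t ≤ 1 / (m : ℝ≥0∞) := by
    intro m t ht htv
    have hGt : G t = ℙ {ω | ‖X ω‖ > t ^ (1/q)} := by
      rw [hG_def]; exact congrArg _ (hbridge X t ht)
    rw [hGt]
    exact hQhigh m _ (hrt' m t htv)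
  have hG_meas : Measurable G := by
    apply Antitone.measurable
    intro s t hst
    exact measure_mono (fun ω hω => lt_of_le_of_lt hst hω)
  -- truncated variables
  set Z : ℕ → ℕ → Ω → ℝ :=
    fun k m ω => ({ω' | ‖Xs k ω'‖ ≤ u m}).indicator (fun ω' => ‖Xs k ω'‖) ω with hZ_def
  have hZ_meas : ∀ k m, Measurable (Z k m) := by
    intro k m
    exact ((hXs k).norm).indicator (measurableSet_le (hXs k).norm measurable_const)
  have hZ_nonneg : ∀ k m ω, 0 ≤ Z k m ω := by
    intro k m ω
    exact Set.indicator_apply_nonneg (fun _ => norm_nonneg _)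
  have hZ_le_norm : ∀ k m ω, Z k m ω ≤ ‖Xs k ω‖ := by
    intro k m ω
    by_cases h : ω ∈ {ω' | ‖Xs k ω'‖ ≤ u m}
    · rw [hZ_def]; simp only [Set.indicator_of_mem h]; exact le_rfl
    · rw [hZ_def]; simp only [Set.indicator_of_notMem h]; exact norm_nonneg _
  have hZ_le_u : ∀ k m ω, Z k m ω ≤ u m := by
    intro k m ω
    by_cases h : ω ∈ {ω' | ‖Xs k ω'‖ ≤ u m}
    · rw [hZ_def]; simp only [Set.indicator_of_mem h]; exact h
    · rw [hZ_def]; simp only [Set.indicator_of_notMem h]; exact hu_nonneg m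
  set T : ℕ → Ω → ℝ := fun m ω => ∑ k ∈ Finset.range m, Z k m ω with hT_def
  have hT_meas : ∀ m, Measurable (T m) :=
    fun m => Finset.measurable_sum _ (fun k _ => hZ_meas k m)
  have hT_nonneg : ∀ m ω, 0 ≤ T m ω :=
    fun m ω => Finset.sum_nonneg (fun k _ => hZ_nonneg k m ω)
  have hnormle : ∀ m ω, ‖U m ω‖ ≤ T m ω := by
    intro m ω
    rw [hU m ω, hT_def]
    refine le_trans (norm_sum_le _ _) (le_of_eq (Finset.sum_congr rfl fun k _ => ?_))
    rw [hZ_def]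
    exact norm_indicator_eq_indicator_norm _ ω
  -- the weighted tail integral
  set W : ℕ → ℝ≥0∞ := fun m => ∫⁻ t in Set.Ioi (0:ℝ),
      (Set.Iio (v m)).indicator G t * ENNReal.ofReal (t ^ c) with hW_def
  have hW_mono : ∀ ⦃m m'⦄, m ≤ m' → W m ≤ W m' := by
    intro m m' h
    rw [hW_def]
    refine lintegral_mono fun t => ?_
    refine mul_le_mul_left ?_ _
    exact Set.indicator_le_indicator_of_subset (Set.Iio_subset_Iio (hv_mono h))
      (fun _ => zero_le) t
  set cq : ℝ≥0∞ := (ENNReal.ofReal q)⁻¹ with hcq_def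
  -- layer cake estimate for each truncated summand
  have hZkey : ∀ m k, ∫⁻ ω, ENNReal.ofReal (Z k m ω) ∂ℙ ≤ W m * cq := by
    intro m k
    have hf_nn : 0 ≤ᵐ[(ℙ : Measure Ω)] fun ω => (Z k m ω) ^ q :=
      Filter.Eventually.of_forall (fun ω => Real.rpow_nonneg (hZ_nonneg k m ω) q)
    have hf_mble : AEMeasurable (fun ω => (Z k m ω) ^ q) (ℙ : Measure Ω) :=
      ((hZ_meas k m).pow measurable_const).aemeasurable
    have hg_intble : ∀ t > (0:ℝ), IntervalIntegrable (fun s : ℝ => s ^ c) volume 0 t :=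
      fun t _ => intervalIntegral.intervalIntegrable_rpow' (by linarith)
    have hg_nn : ∀ᵐ t ∂(volume.restrict (Set.Ioi (0:ℝ))), 0 ≤ t ^ c := by
      refine (ae_restrict_iff' measurableSet_Ioi).mpr
        (Filter.Eventually.of_forall fun t ht => Real.rpow_nonneg (le_of_lt ht) c)
    have lc := lintegral_comp_eq_lintegral_meas_lt_mul (ℙ : Measure Ω)
      hf_nn hf_mble hg_intble hg_nn
    -- compute the inner integral
    have hinner : ∀ ω, (∫ s in (0:ℝ)..((Z k m ω) ^ q), s ^ c) = Z k m ω * q := by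
      intro ω
      rw [integral_rpow (Or.inl (by linarith : (-1:ℝ) < c))]
      have hc1 : c + 1 = 1/q := by rw [hc_def]; ring
      have hzq : ((Z k m ω) ^ q) ^ (c+1) = Z k m ω := by
        rw [hc1, ← Real.rpow_mul (hZ_nonneg k m ω), mul_one_div_cancel hq0.ne',
          Real.rpow_one]
      rw [Real.zero_rpow (by rw [hc1]; positivity), hzq, hc1, sub_zero]
      field_simp
    have hLHS : (∫⁻ ω, ENNReal.ofReal (∫ s in (0:ℝ)..((Z k m ω) ^ q), s ^ c) ∂ℙ)
        = (∫⁻ ω, ENNReal.ofReal (Z k m ω) ∂ℙ) * ENNReal.ofReal q := by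
      calc (∫⁻ ω, ENNReal.ofReal (∫ s in (0:ℝ)..((Z k m ω) ^ q), s ^ c) ∂ℙ)
          = ∫⁻ ω, ENNReal.ofReal (Z k m ω) * ENNReal.ofReal q ∂ℙ := by
            refine lintegral_congr fun ω => ?_
            rw [hinner ω, ENNReal.ofReal_mul (hZ_nonneg k m ω)]
        _ = (∫⁻ ω, ENNReal.ofReal (Z k m ω) ∂ℙ) * ENNReal.ofReal q :=
            lintegral_mul_const' _ _ ENNReal.ofReal_ne_top
    -- bound the RHS by W m
    have hmeasbound : ∀ t ∈ Set.Ioi (0:ℝ),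
        ℙ {a | t < (Z k m a) ^ q} ≤ (Set.Iio (v m)).indicator G t := by
      intro t ht
      by_cases htv : t < v m
      · rw [Set.indicator_of_mem (show t ∈ Set.Iio (v m) from htv)]
        have hsub : {a | t < (Z k m a) ^ q} ⊆ {a | ‖Xs k a‖ ^ q > t} := by
          intro a ha
          exact lt_of_lt_of_le ha
            (Real.rpow_le_rpow (hZ_nonneg k m a) (hZ_le_norm k m a) hq0.le)
        refine le_trans (measure_mono hsub) ?_
        rw [hbridge (Xs k) t ht]
        have hGt : G t = ℙ {ω | ‖X ω‖ > t ^ (1/q)} := by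
          rw [hG_def]; exact congrArg _ (hbridge X t ht)
        rw [hGt]
        exact hdom k _ (Real.rpow_nonneg (le_of_lt ht) _)
      · have htv' : t ∉ Set.Iio (v m) := htv
        rw [Set.indicator_of_notMem htv']
        push_neg at htv
        have hempty : {a | t < (Z k m a) ^ q} = ∅ := by
          ext a
          simp only [Set.mem_setOf_eq, Set.mem_empty_iff_false, iff_false, not_lt]
          calc (Z k m a) ^ q ≤ (u m) ^ q :=
                Real.rpow_le_rpow (hZ_nonneg k m a) (hZ_le_u k m a) hq0.le
            _ = v m := rfl
            _ ≤ t := htv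
        rw [hempty, measure_empty]
    have hRHS : (∫⁻ t in Set.Ioi (0:ℝ), ℙ {a | t < (Z k m a) ^ q}
        * ENNReal.ofReal (t ^ c)) ≤ W m := by
      rw [hW_def]
      refine setLIntegral_mono' measurableSet_Ioi fun t ht => ?_
      exact mul_le_mul_left (hmeasbound t ht) _
    have hkey : (∫⁻ ω, ENNReal.ofReal (Z k m ω) ∂ℙ) * ENNReal.ofReal q ≤ W m := by
      rw [← hLHS]
      rw [lc]
      exact hRHS
    have hq_ne : ENNReal.ofReal q ≠ 0 := by
      simp only [ne_eq, ENNReal.ofReal_eq_zero, not_le]; exact hq0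
    calc (∫⁻ ω, ENNReal.ofReal (Z k m ω) ∂ℙ)
        = (∫⁻ ω, ENNReal.ofReal (Z k m ω) ∂ℙ) * (ENNReal.ofReal q * cq) := by
          rw [hcq_def, ENNReal.mul_inv_cancel hq_ne ENNReal.ofReal_ne_top, mul_one]
      _ = ((∫⁻ ω, ENNReal.ofReal (Z k m ω) ∂ℙ) * ENNReal.ofReal q) * cq := by ring
      _ ≤ W m * cq := mul_le_mul_left hkey _
  -- expectation bound for the truncated sums
  have hEU : ∀ m, (∫⁻ ω, ENNReal.ofReal (‖U m ω‖ ^ q) ∂ℙ)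
      ≤ ((m : ℝ≥0∞) * (W m * cq)) ^ q := by
    intro m
    have h1 : (∫⁻ ω, ENNReal.ofReal (‖U m ω‖ ^ q) ∂ℙ)
        ≤ ∫⁻ ω, (ENNReal.ofReal (T m ω)) ^ q ∂ℙ := by
      refine lintegral_mono fun ω => ?_
      rw [ENNReal.ofReal_rpow_of_nonneg (hT_nonneg m ω) hq0.le]
      exact ENNReal.ofReal_le_ofReal
        (Real.rpow_le_rpow (norm_nonneg _) (hnormle m ω) hq0.le)
    have h2 : ∫⁻ ω, (ENNReal.ofReal (T m ω)) ^ q ∂ℙ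
        ≤ (∫⁻ ω, ENNReal.ofReal (T m ω) ∂ℙ) ^ q :=
      aux_jensen ℙ _ (ENNReal.measurable_ofReal.comp (hT_meas m)).aemeasurable hq0 hq1
    have h3 : (∫⁻ ω, ENNReal.ofReal (T m ω) ∂ℙ)
        = ∑ k ∈ Finset.range m, ∫⁻ ω, ENNReal.ofReal (Z k m ω) ∂ℙ := by
      calc (∫⁻ ω, ENNReal.ofReal (T m ω) ∂ℙ)
          = ∫⁻ ω, ∑ k ∈ Finset.range m, ENNReal.ofReal (Z k m ω) ∂ℙ := by
            refine lintegral_congr fun ω => ?_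
            rw [hT_def]
            exact ENNReal.ofReal_sum_of_nonneg (fun k _ => hZ_nonneg k m ω)
        _ = ∑ k ∈ Finset.range m, ∫⁻ ω, ENNReal.ofReal (Z k m ω) ∂ℙ :=
            lintegral_finset_sum _ (fun k _ => (hZ_meas k m).ennreal_ofReal)
    have h4 : (∫⁻ ω, ENNReal.ofReal (T m ω) ∂ℙ) ≤ (m : ℝ≥0∞) * (W m * cq) := by
      rw [h3]
      calc ∑ k ∈ Finset.range m, ∫⁻ ω, ENNReal.ofReal (Z k m ω) ∂ℙ
          ≤ ∑ _k ∈ Finset.range m, W m * cq := Finset.sum_le_sum (fun k _ => hZkey m k)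
        _ = (m : ℝ≥0∞) * (W m * cq) := by
            rw [Finset.sum_const, Finset.card_range, nsmul_eq_mul]
    exact le_trans h1 (le_trans h2 (ENNReal.rpow_le_rpow h4 hq0.le))
  -- dyadic scales
  set V : ℕ → ℝ := fun i => v (2^i) with hV_def
  set pV : ℕ → ℝ := fun i => Nat.casesOn i 0 (fun i' => v (2^i')) with hpV_def
  have hpV0 : pV 0 = 0 := rfl
  have hpVsucc : ∀ i, pV (i+1) = V i := fun i => rfl
  have hV_nonneg : ∀ i, 0 ≤ V i := fun i => hv_nonneg _
  have hpV_nonneg : ∀ i, 0 ≤ pV i := by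
    intro i
    cases i with
    | zero => exact le_rfl
    | succ i' => exact hv_nonneg _
  have hV_mono : Monotone V := fun i j h =>
    hv_mono (Nat.pow_le_pow_right (by norm_num) h)
  have hpV_le : ∀ i, pV i ≤ V i := by
    intro i
    cases i with
    | zero => exact hV_nonneg 0
    | succ i' => exact hV_mono (Nat.le_succ i')
  have hpV_mono : Monotone pV := by
    refine monotone_nat_of_le_succ fun i => ?_
    rw [hpVsucc]
    exact hpV_le i
  have hcover : ∀ S : ℕ, ∀ t : ℝ, 0 < t → t ≤ V S →
      ∃ i, i ≤ S ∧ t ∈ Set.Ioc (pV i) (V i) := by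
    intro S
    induction S with
    | zero => intro t ht htV; exact ⟨0, le_rfl, ⟨ht, htV⟩⟩
    | succ S ih =>
        intro t ht htV
        by_cases h : t ≤ V S
        · obtain ⟨i, hi, hmem⟩ := ih t ht h
          exact ⟨i, hi.trans (Nat.le_succ S), hmem⟩
        · push_neg at h
          refine ⟨S+1, le_rfl, ⟨?_, htV⟩⟩
          rw [hpVsucc]
          exact h
  set E : ℕ → ℝ≥0∞ := fun i => ∫⁻ t in Set.Ioi (0:ℝ),
      (Set.Ioc (pV i) (V i)).indicator (fun t' => G t' * ENNReal.ofReal (t' ^ c)) t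
      with hE_def
  have hWE : ∀ S : ℕ, W (2^S) ≤ ∑ i ∈ Finset.range (S+1), E i := by
    intro S
    have hVS : v (2^S) = V S := rfl
    calc W (2^S) ≤ ∫⁻ t in Set.Ioi (0:ℝ), ∑ i ∈ Finset.range (S+1),
          (Set.Ioc (pV i) (V i)).indicator (fun t' => G t' * ENNReal.ofReal (t' ^ c)) t := by
          rw [hW_def]
          refine setLIntegral_mono' measurableSet_Ioi fun t ht => ?_
          by_cases h : t < v (2^S)
          · rw [Set.indicator_of_mem (show t ∈ Set.Iio (v (2^S)) from h)]
            obtain ⟨i, hiS, hmem⟩ := hcover S t ht (by rw [← hVS]; exact h.le)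
            have hterm : (Set.Ioc (pV i) (V i)).indicator
                (fun t' => G t' * ENNReal.ofReal (t' ^ c)) t
                = G t * ENNReal.ofReal (t ^ c) := Set.indicator_of_mem hmem _
            rw [← hterm]
            exact Finset.single_le_sum (f := fun i =>
              (Set.Ioc (pV i) (V i)).indicator (fun t' => G t' * ENNReal.ofReal (t' ^ c)) t)
              (fun _ _ => zero_le) (Finset.mem_range.mpr (by omega))
          · rw [Set.indicator_of_notMem (show t ∉ Set.Iio (v (2^S)) from h)]
            rw [zero_mul]
            exact zero_le
      _ = ∑ i ∈ Finset.range (S+1), E i := by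
          rw [hE_def]
          exact lintegral_finset_sum _ (fun i _ =>
            ((hG_meas.mul ((measurable_id.pow measurable_const).ennreal_ofReal)).indicator
              measurableSet_Ioc))
  -- geometric bases
  set β : ℝ≥0∞ := (2:ℝ≥0∞) ^ (-q) with hβ_def
  have h2q_inv : β = ((2:ℝ≥0∞) ^ q)⁻¹ := by rw [hβ_def, ENNReal.rpow_neg]
  have hE_bound : ∀ i, E i ≤ (2:ℝ≥0∞) * ((2:ℝ≥0∞)^(i:ℕ))⁻¹ * ENNReal.ofReal (V i ^ (1/q)) := by
    intro i
    have hGb : ∀ t ∈ Set.Ioc (pV i) (V i), G t ≤ 2 * ((2:ℝ≥0∞)^(i:ℕ))⁻¹ := by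
      intro t htmem
      cases i with
      | zero =>
          simp only [pow_zero, inv_one, mul_one]
          exact le_trans prob_le_one one_le_two
      | succ i' =>
          have ht0 : 0 < t := lt_of_le_of_lt (hpV_nonneg (i'+1)) htmem.1
          have hvt : v (2^i') < t := htmem.1
          have h1 : G t ≤ 1 / ((2^i' : ℕ) : ℝ≥0∞) := hGhigh (2^i') t ht0 hvt
          have hcast : ((2^i' : ℕ) : ℝ≥0∞) = (2:ℝ≥0∞)^(i':ℕ) := by push_cast; ring
          have h2 : (2:ℝ≥0∞) * ((2:ℝ≥0∞)^(i'+1:ℕ))⁻¹ = ((2:ℝ≥0∞)^(i':ℕ))⁻¹ := by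
            rw [pow_succ, ENNReal.mul_inv (Or.inl (by positivity)) (Or.inr (by norm_num)),
              mul_comm (((2:ℝ≥0∞)^(i':ℕ))⁻¹) _, ← mul_assoc,
              ENNReal.mul_inv_cancel (by norm_num) (by norm_num), one_mul]
          rw [h2, ← hcast, ← one_div]
          exact h1
    have step2 : E i ≤ ∫⁻ t in Set.Ioi (0:ℝ), (Set.Ioc (pV i) (V i)).indicator
        (fun _ => (2 * ((2:ℝ≥0∞)^(i:ℕ))⁻¹) * ENNReal.ofReal (V i ^ c)) t := by
      rw [hE_def]
      refine setLIntegral_mono' measurableSet_Ioi fun t ht => ?_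
      by_cases h : t ∈ Set.Ioc (pV i) (V i)
      · rw [Set.indicator_of_mem h, Set.indicator_of_mem h]
        refine mul_le_mul' (hGb t h) (ENNReal.ofReal_le_ofReal ?_)
        exact Real.rpow_le_rpow (le_of_lt ht) h.2 hc0.le
      · rw [Set.indicator_of_notMem h, Set.indicator_of_notMem h]
    have step3 : (∫⁻ t in Set.Ioi (0:ℝ), (Set.Ioc (pV i) (V i)).indicator
        (fun _ => (2 * ((2:ℝ≥0∞)^(i:ℕ))⁻¹) * ENNReal.ofReal (V i ^ c)) t)
        ≤ (2 * ((2:ℝ≥0∞)^(i:ℕ))⁻¹) * ENNReal.ofReal (V i ^ c) * ENNReal.ofReal (V i) := by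
      rw [lintegral_indicator measurableSet_Ioc]
      rw [setLIntegral_const]
      refine mul_le_mul' le_rfl ?_
      calc (volume.restrict (Set.Ioi (0:ℝ))) (Set.Ioc (pV i) (V i))
          ≤ volume (Set.Ioc (pV i) (V i)) := Measure.restrict_le_self _
        _ = ENNReal.ofReal (V i - pV i) := Real.volume_Ioc
        _ ≤ ENNReal.ofReal (V i) := ENNReal.ofReal_le_ofReal (by linarith [hpV_nonneg i])
    have hcv : ENNReal.ofReal (V i ^ c) * ENNReal.ofReal (V i)
        = ENNReal.ofReal (V i ^ (1/q)) := by
      rw [← ENNReal.ofReal_mul (Real.rpow_nonneg (hV_nonneg i) c)]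
      congr 1
      have h1 : (1/q) = c + 1 := by rw [hc_def]; ring
      rw [h1, Real.rpow_add' (hV_nonneg i) (by rw [← h1]; positivity), Real.rpow_one]
    calc E i ≤ _ := step2
      _ ≤ (2 * ((2:ℝ≥0∞)^(i:ℕ))⁻¹) * ENNReal.ofReal (V i ^ c) * ENNReal.ofReal (V i) := step3
      _ = (2:ℝ≥0∞) * ((2:ℝ≥0∞)^(i:ℕ))⁻¹ * ENNReal.ofReal (V i ^ (1/q)) := by
          rw [mul_assoc, hcv, mul_assoc]
  have hEq_bound : ∀ i, (E i) ^ q ≤ (2:ℝ≥0∞)^q * (β ^ i * ENNReal.ofReal (V i)) := by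
    intro i
    calc (E i) ^ q ≤ ((2:ℝ≥0∞) * ((2:ℝ≥0∞)^(i:ℕ))⁻¹ * ENNReal.ofReal (V i ^ (1/q))) ^ q :=
          ENNReal.rpow_le_rpow (hE_bound i) hq0.le
      _ = (2:ℝ≥0∞)^q * (((2:ℝ≥0∞)^(i:ℕ))⁻¹)^q * (ENNReal.ofReal (V i ^ (1/q)))^q := by
          rw [ENNReal.mul_rpow_of_nonneg _ _ hq0.le, ENNReal.mul_rpow_of_nonneg _ _ hq0.le]
      _ = (2:ℝ≥0∞)^q * (β ^ i * ENNReal.ofReal (V i)) := by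
          have h1 : (((2:ℝ≥0∞)^(i:ℕ))⁻¹)^q = β ^ i := by
            rw [ENNReal.inv_rpow, ← ENNReal.rpow_natCast (2:ℝ≥0∞) i, ← ENNReal.rpow_mul,
              mul_comm, ENNReal.rpow_mul, h2q_inv, ← ENNReal.inv_pow,
              ENNReal.rpow_natCast]
          have h2 : (ENNReal.ofReal (V i ^ (1/q)))^q = ENNReal.ofReal (V i) := by
            rw [ENNReal.ofReal_rpow_of_nonneg (Real.rpow_nonneg (hV_nonneg i) _) hq0.le,
              ← Real.rpow_mul (hV_nonneg i), one_div_mul_cancel hq0.ne', Real.rpow_one]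
          rw [h1, h2, mul_assoc]
  have hWq : ∀ S : ℕ, (W (2^S)) ^ q
      ≤ (2:ℝ≥0∞)^q * ∑ i ∈ Finset.range (S+1), β ^ i * ENNReal.ofReal (V i) := by
    intro S
    calc (W (2^S)) ^ q ≤ (∑ i ∈ Finset.range (S+1), E i) ^ q :=
          ENNReal.rpow_le_rpow (hWE S) hq0.le
      _ ≤ ∑ i ∈ Finset.range (S+1), (E i) ^ q := aux_rpow_sum_le _ _ hq0 hq1.le
      _ ≤ ∑ i ∈ Finset.range (S+1), (2:ℝ≥0∞)^q * (β ^ i * ENNReal.ofReal (V i)) :=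
          Finset.sum_le_sum (fun i _ => hEq_bound i)
      _ = (2:ℝ≥0∞)^q * ∑ i ∈ Finset.range (S+1), β ^ i * ENNReal.ofReal (V i) := by
          rw [Finset.mul_sum]
  -- more rpow helpers
  have h2ne0 : ∀ x : ℝ, (2:ℝ≥0∞) ^ x ≠ 0 :=
    fun x => (ENNReal.rpow_pos (by norm_num) (by norm_num)).ne'
  have h2netop : ∀ x : ℝ, (2:ℝ≥0∞) ^ x ≠ ⊤ := by
    intro x
    rcases le_or_gt 0 x with h | h
    · exact ENNReal.rpow_ne_top_of_nonneg h (by norm_num)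
    · exact ((ENNReal.rpow_lt_one_of_one_lt_of_neg (by norm_num) h).trans
        ENNReal.one_lt_top).ne
  have hinvpow : ∀ (y : ℝ) (i : ℕ),
      (((2:ℝ≥0∞)^(i:ℕ))⁻¹) ^ y = ((2:ℝ≥0∞) ^ (-y)) ^ (i:ℕ) := by
    intro y i
    rw [ENNReal.inv_rpow, ENNReal.rpow_neg, ← ENNReal.inv_pow]
    congr 1
    rw [← ENNReal.rpow_natCast (2:ℝ≥0∞) i, ← ENNReal.rpow_mul, mul_comm,
      ENNReal.rpow_mul, ENNReal.rpow_natCast]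
  -- budget
  set b : ℝ≥0∞ := (2:ℝ≥0∞) ^ (-r) with hb_def
  have hbudget_piece : ∀ i : ℕ, b ^ i * ENNReal.ofReal (pV (i+1) - pV i)
      ≤ ∫⁻ t in Set.Ioo (pV i) (pV (i+1)), G t ^ r := by
    intro i
    have hpoint : ∀ t ∈ Set.Ioo (pV i) (pV (i+1)), b ^ i ≤ G t ^ r := by
      intro t htmem
      have ht0 : 0 < t := lt_of_le_of_lt (hpV_nonneg i) htmem.1
      have htv : t < v (2^i) := htmem.2
      have h1 : 1 / ((2^i : ℕ) : ℝ≥0∞) ≤ G t := hGlow (2^i) t ht0 htv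
      have h2 : (1 / ((2^i : ℕ) : ℝ≥0∞)) ^ r ≤ G t ^ r :=
        ENNReal.rpow_le_rpow h1 hr0.le
      refine le_trans (le_of_eq ?_) h2
      rw [one_div, hb_def]
      have hcast : ((2^i : ℕ) : ℝ≥0∞) = (2:ℝ≥0∞)^(i:ℕ) := by push_cast; ring
      rw [hcast, ← hinvpow r i]
    calc b ^ i * ENNReal.ofReal (pV (i+1) - pV i)
        = b ^ i * volume (Set.Ioo (pV i) (pV (i+1))) := by rw [Real.volume_Ioo]
      _ = ∫⁻ _ in Set.Ioo (pV i) (pV (i+1)), b ^ i := (setLIntegral_const _ _).symm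
      _ ≤ ∫⁻ t in Set.Ioo (pV i) (pV (i+1)), G t ^ r :=
          setLIntegral_mono' measurableSet_Ioo hpoint
  have hdisj : Pairwise (Function.onFun Disjoint
      (fun i : ℕ => Set.Ioo (pV i) (pV (i+1)))) := by
    have key : ∀ {i j : ℕ}, i < j →
        Disjoint (Set.Ioo (pV i) (pV (i+1))) (Set.Ioo (pV j) (pV (j+1))) := by
      intro i j hij
      refine Set.disjoint_left.mpr fun t hti htj => ?_
      have h1 : t < pV (i+1) := hti.2
      have h2 : pV j < t := htj.1
      have h3 : pV (i+1) ≤ pV j := hpV_mono hij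
      linarith
    intro i j hij
    rcases hij.lt_or_gt with h | h
    · exact key h
    · exact (key h).symm
  have hblocksum : ∑' i : ℕ, (∫⁻ t in Set.Ioo (pV i) (pV (i+1)), G t ^ r)
      ≤ ∫⁻ t in Set.Ioi (0:ℝ), G t ^ r := by
    rw [← lintegral_iUnion (fun i => measurableSet_Ioo) hdisj]
    refine lintegral_mono_set ?_
    intro t ht
    obtain ⟨i, hti⟩ := Set.mem_iUnion.mp ht
    exact lt_of_le_of_lt (hpV_nonneg i) hti.1
  have htelescope : ∀ i : ℕ, ENNReal.ofReal (V i)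
      = ∑ i' ∈ Finset.range (i+1), ENNReal.ofReal (pV (i'+1) - pV i') := by
    intro i
    rw [← ENNReal.ofReal_sum_of_nonneg (fun i' _ => by
      have := hpV_mono (Nat.le_succ i'); linarith)]
    congr 1
    rw [Finset.sum_range_sub pV (i+1), hpV0, sub_zero, hpVsucc]
  have hBud : ∑' i : ℕ, b ^ i * ENNReal.ofReal (V i)
      ≤ (1 - b)⁻¹ * ∫⁻ t in Set.Ioi (0:ℝ), G t ^ r := by
    calc ∑' i : ℕ, b ^ i * ENNReal.ofReal (V i)
        = ∑' i : ℕ, ∑' i' : ℕ,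
            (if i' ≤ i then b ^ i * ENNReal.ofReal (pV (i'+1) - pV i') else 0) := by
          refine tsum_congr fun i => ?_
          rw [htelescope i, Finset.mul_sum]
          calc ∑ i' ∈ Finset.range (i+1), b ^ i * ENNReal.ofReal (pV (i'+1) - pV i')
              = ∑ i' ∈ Finset.range (i+1),
                  (if i' ≤ i then b ^ i * ENNReal.ofReal (pV (i'+1) - pV i') else 0) :=
                Finset.sum_congr rfl fun i' hi' =>
                  (if_pos (Nat.lt_succ_iff.mp (Finset.mem_range.mp hi'))).symm
            _ = ∑' i' : ℕ,
                  (if i' ≤ i then b ^ i * ENNReal.ofReal (pV (i'+1) - pV i') else 0) :=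
                (tsum_eq_sum fun i' hi' => if_neg fun hle =>
                  hi' (Finset.mem_range.mpr (Nat.lt_succ_iff.mpr hle))).symm
      _ = ∑' i' : ℕ, ∑' i : ℕ,
            (if i' ≤ i then b ^ i * ENNReal.ofReal (pV (i'+1) - pV i') else 0) :=
          ENNReal.tsum_comm
      _ = ∑' i' : ℕ, ENNReal.ofReal (pV (i'+1) - pV i') * (b ^ i' * (1 - b)⁻¹) := by
          refine tsum_congr fun i' => ?_
          have hsw : ∀ i : ℕ, (if i' ≤ i then b ^ i * ENNReal.ofReal (pV (i'+1) - pV i') else 0)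
              = ENNReal.ofReal (pV (i'+1) - pV i') * (if i' ≤ i then b ^ i else 0) := by
            intro i
            by_cases h : i' ≤ i <;> simp [h, mul_comm]
          rw [tsum_congr hsw, ENNReal.tsum_mul_left, aux_tsum_geom_tail]
      _ = (1 - b)⁻¹ * ∑' i' : ℕ, b ^ i' * ENNReal.ofReal (pV (i'+1) - pV i') := by
          rw [← ENNReal.tsum_mul_left]
          refine tsum_congr fun i' => by ring
      _ ≤ (1 - b)⁻¹ * ∑' i' : ℕ, (∫⁻ t in Set.Ioo (pV i') (pV (i'+1)), G t ^ r) :=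
          mul_le_mul' le_rfl (ENNReal.tsum_le_tsum hbudget_piece)
      _ ≤ (1 - b)⁻¹ * ∫⁻ t in Set.Ioi (0:ℝ), G t ^ r := mul_le_mul' le_rfl hblocksum
  -- main summation machinery
  set a : ℝ≥0∞ := (2:ℝ≥0∞) ^ (q - r) with ha_def
  have ha1 : a < 1 := by
    rw [ha_def]
    exact ENNReal.rpow_lt_one_of_one_lt_of_neg (by norm_num) (by linarith)
  have hb1 : b < 1 := by
    rw [hb_def]
    exact ENNReal.rpow_lt_one_of_one_lt_of_neg (by norm_num) (by linarith)
  have ha0 : a ≠ 0 := by rw [ha_def]; exact h2ne0 _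
  have hatop : a ≠ ⊤ := by rw [ha_def]; exact h2netop _
  have ha_shift : ∀ i : ℕ, a ^ (i - 1) ≤ a⁻¹ * a ^ i := by
    intro i
    cases i with
    | zero =>
        simp only [Nat.zero_sub, pow_zero, mul_one]
        exact ENNReal.one_le_inv.mpr ha1.le
    | succ i' =>
        rw [Nat.succ_sub_one, pow_succ', ← mul_assoc,
          ENNReal.inv_mul_cancel ha0 hatop, one_mul]
  set F : ℕ → ℝ≥0∞ := fun m =>
    (∫⁻ ω, ENNReal.ofReal (‖U m ω‖ ^ q) ∂ℙ) / ((m : ℝ≥0∞)) ^ (1+r) with hF_def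
  have hgoal : (∑' n : ℕ, (∫⁻ ω, ENNReal.ofReal (‖U (n + 1) ω‖ ^ q) ∂ℙ) /
      ((n : ℝ≥0∞) + 1) ^ (1 + r)) = ∑' n : ℕ, F (n+1) := by
    refine tsum_congr fun n => ?_
    simp only [hF_def, Nat.cast_add_one]
  set J : ℕ → ℕ := fun n => Nat.log 2 (n+1) with hJ_def
  have hpow_le : ∀ n : ℕ, 2^(J n) ≤ n+1 := fun n => Nat.pow_log_le_self 2 (Nat.succ_ne_zero n)
  have hlt2 : ∀ n : ℕ, n+1 < 2^(J n + 1) := fun n => Nat.lt_pow_succ_log_self (by norm_num) (n+1)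
  set ι : ℕ → ℕ × ℕ := fun n => (J n, (n+1) - 2^(J n)) with hι_def
  have hι_recover : ∀ n, 2^((ι n).1) + (ι n).2 = n+1 := fun n => Nat.add_sub_cancel' (hpow_le n)
  have hι_inj : Function.Injective ι := by
    intro n m h
    have h1 := hι_recover n
    have h2 := hι_recover m
    rw [h] at h1
    omega
  set g : ℕ × ℕ → ℝ≥0∞ :=
    fun jk => if jk.2 < 2^jk.1 then F (2^jk.1 + jk.2) else 0 with hg_def
  have hkuk : ∀ n, (ι n).2 < 2^((ι n).1) := by
    intro n
    have h1 := hlt2 n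
    have h2 := hpow_le n
    have hp : 2^(J n + 1) = 2 * 2^(J n) := by rw [pow_succ]; ring
    simp only [hι_def]
    omega
  have hFg : ∀ n, F (n+1) = g (ι n) := by
    intro n
    show F (n+1) = (if (ι n).2 < 2^((ι n).1) then F (2^((ι n).1) + (ι n).2) else 0)
    rw [if_pos (hkuk n), hι_recover n]
  have hstep1 : ∑' n : ℕ, F (n+1) ≤ ∑' jk : ℕ × ℕ, g jk := by
    rw [tsum_congr hFg]
    exact ENNReal.tsum_comp_le_tsum_of_injective hι_inj g
  -- block bounds
  set D : ℕ → ℝ≥0∞ := fun j =>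
    ((2:ℝ≥0∞)^((j+1:ℕ)) * (W (2^(j+1)) * cq)) ^ q / ((2:ℝ≥0∞)^(j:ℕ)) ^ (1+r) with hD_def
  have hFblock : ∀ j k : ℕ, k < 2^j → F (2^j + k) ≤ D j := by
    intro j k hk
    have hm2 : 2^j + k ≤ 2^(j+1) := by
      have hp : 2^(j+1) = 2^j + 2^j := by rw [pow_succ]; ring
      omega
    rw [hF_def, hD_def]
    refine ENNReal.div_le_div ?_ ?_
    · refine le_trans (hEU (2^j + k)) (ENNReal.rpow_le_rpow ?_ hq0.le)
      have hcast : (((2:ℕ)^(j+1) : ℕ) : ℝ≥0∞) = (2:ℝ≥0∞)^((j+1:ℕ)) := by push_cast; ring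
      calc ((2^j + k : ℕ) : ℝ≥0∞) * (W (2^j + k) * cq)
          ≤ ((2^(j+1) : ℕ) : ℝ≥0∞) * (W (2^(j+1)) * cq) :=
            mul_le_mul' (Nat.cast_le.mpr hm2) (mul_le_mul' (hW_mono hm2) le_rfl)
        _ = (2:ℝ≥0∞)^((j+1:ℕ)) * (W (2^(j+1)) * cq) := by rw [hcast]
    · refine ENNReal.rpow_le_rpow ?_ (by linarith : (0:ℝ) ≤ 1+r)
      have hcast : (((2:ℕ)^j : ℕ) : ℝ≥0∞) = (2:ℝ≥0∞)^(j:ℕ) := by push_cast; ring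
      rw [← hcast]
      exact Nat.cast_le.mpr (Nat.le_add_right _ _)
  have hinner_sum : ∀ j : ℕ, ∑' k : ℕ, g (j, k) ≤ (2:ℝ≥0∞)^(j:ℕ) * D j := by
    intro j
    calc ∑' k : ℕ, g (j, k) ≤ ∑' k : ℕ, (if k < 2^j then D j else 0) := by
          refine ENNReal.tsum_le_tsum fun k => ?_
          show (if k < 2^j then F (2^j + k) else 0) ≤ _
          by_cases h : k < 2^j
          · rw [if_pos h, if_pos h]; exact hFblock j k h
          · rw [if_neg h, if_neg h]
      _ = ∑ k ∈ Finset.range (2^j), (if k < 2^j then D j else 0) :=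
          tsum_eq_sum (fun k hk => if_neg (fun h => hk (Finset.mem_range.mpr h)))
      _ = ∑ k ∈ Finset.range (2^j), D j :=
          Finset.sum_congr rfl fun k hk => if_pos (Finset.mem_range.mp hk)
      _ = (2:ℝ≥0∞)^(j:ℕ) * D j := by
          rw [Finset.sum_const, Finset.card_range, nsmul_eq_mul]
          congr 1
          push_cast
          ring
  have hscalar : ∀ j : ℕ, (2:ℝ≥0∞)^(j:ℕ) * ((2:ℝ≥0∞)^((j+1:ℕ)))^q / ((2:ℝ≥0∞)^(j:ℕ))^(1+r)
      = (2:ℝ≥0∞)^q * a^j := by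
    intro j
    have e1 : (2:ℝ≥0∞)^(j:ℕ) = (2:ℝ≥0∞)^((j:ℝ)) := (ENNReal.rpow_natCast 2 j).symm
    have e2 : (2:ℝ≥0∞)^((j+1:ℕ)) = (2:ℝ≥0∞)^(((j:ℝ)+1)) := by
      rw [← ENNReal.rpow_natCast (2:ℝ≥0∞) (j+1)]
      congr 1
      push_cast
      ring
    rw [e1, e2, ← ENNReal.rpow_mul, ← ENNReal.rpow_mul, ← aux_rpow_add,
      ← ENNReal.rpow_sub _ _ (by norm_num) (by norm_num),
      ha_def, aux_rpow_pow, ← aux_rpow_add]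
    congr 1
    ring
  set C0 : ℝ≥0∞ := (2:ℝ≥0∞)^q * ((2:ℝ≥0∞)^q * cq^q) with hC0_def
  have hDbound : ∀ j : ℕ, (2:ℝ≥0∞)^(j:ℕ) * D j
      ≤ C0 * (a ^ j * ∑ i ∈ Finset.range (j+1+1), β ^ i * ENNReal.ofReal (V i)) := by
    intro j
    have hnum : ((2:ℝ≥0∞)^((j+1:ℕ)) * (W (2^(j+1)) * cq)) ^ q
        = ((2:ℝ≥0∞)^((j+1:ℕ)))^q * ((W (2^(j+1)))^q * cq^q) := by
      rw [ENNReal.mul_rpow_of_nonneg _ _ hq0.le, ENNReal.mul_rpow_of_nonneg _ _ hq0.le]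
    calc (2:ℝ≥0∞)^(j:ℕ) * D j
        = ((2:ℝ≥0∞)^(j:ℕ) * ((2:ℝ≥0∞)^((j+1:ℕ)))^q / ((2:ℝ≥0∞)^(j:ℕ))^(1+r)) *
          ((W (2^(j+1)))^q * cq^q) := by
          rw [hD_def]
          simp only
          rw [hnum, div_eq_mul_inv, div_eq_mul_inv]
          ring
      _ = ((2:ℝ≥0∞)^q * a^j) * ((W (2^(j+1)))^q * cq^q) := by rw [hscalar j]
      _ ≤ ((2:ℝ≥0∞)^q * a^j) *
          (((2:ℝ≥0∞)^q * ∑ i ∈ Finset.range (j+1+1), β ^ i * ENNReal.ofReal (V i)) * cq^q) :=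
          mul_le_mul' le_rfl (mul_le_mul' (hWq (j+1)) le_rfl)
      _ = C0 * (a ^ j * ∑ i ∈ Finset.range (j+1+1), β ^ i * ENNReal.ofReal (V i)) := by
          rw [hC0_def]
          ring
  have hba : ∀ i : ℕ, β^i * a^i = b^i := by
    intro i
    rw [← mul_pow]
    congr 1
    rw [hβ_def, ha_def, hb_def, ← aux_rpow_add]
    congr 1
    ring
  have hmain : ∑' jk : ℕ × ℕ, g jk
      ≤ C0 * ((a⁻¹ * (1-a)⁻¹) * ∑' i : ℕ, b ^ i * ENNReal.ofReal (V i)) := by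
    rw [ENNReal.tsum_prod']
    calc ∑' j : ℕ, ∑' k : ℕ, g (j, k)
        ≤ ∑' j : ℕ, C0 * (a ^ j * ∑ i ∈ Finset.range (j+1+1), β ^ i * ENNReal.ofReal (V i)) :=
          ENNReal.tsum_le_tsum (fun j => (hinner_sum j).trans (hDbound j))
      _ = C0 * ∑' j : ℕ, a ^ j * ∑ i ∈ Finset.range (j+1+1), β ^ i * ENNReal.ofReal (V i) :=
          ENNReal.tsum_mul_left
      _ = C0 * ∑' j : ℕ, ∑' i : ℕ,
            (if i < j+1+1 then a ^ j * (β ^ i * ENNReal.ofReal (V i)) else 0) := by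
          congr 1
          refine tsum_congr fun j => ?_
          rw [Finset.mul_sum]
          calc ∑ i ∈ Finset.range (j+1+1), a ^ j * (β ^ i * ENNReal.ofReal (V i))
              = ∑ i ∈ Finset.range (j+1+1),
                  (if i < j+1+1 then a ^ j * (β ^ i * ENNReal.ofReal (V i)) else 0) :=
                Finset.sum_congr rfl fun i hi => (if_pos (Finset.mem_range.mp hi)).symm
            _ = ∑' i : ℕ, (if i < j+1+1 then a ^ j * (β ^ i * ENNReal.ofReal (V i)) else 0) :=
                (tsum_eq_sum fun i hi => if_neg fun h => hi (Finset.mem_range.mpr h)).symm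
      _ = C0 * ∑' i : ℕ, ∑' j : ℕ,
            (if i < j+1+1 then a ^ j * (β ^ i * ENNReal.ofReal (V i)) else 0) := by
          rw [ENNReal.tsum_comm]
      _ = C0 * ∑' i : ℕ, (β ^ i * ENNReal.ofReal (V i)) * (a ^ (i-1) * (1-a)⁻¹) := by
          congr 1
          refine tsum_congr fun i => ?_
          have hsw : ∀ j : ℕ, (if i < j+1+1 then a ^ j * (β ^ i * ENNReal.ofReal (V i)) else 0)
              = (β ^ i * ENNReal.ofReal (V i)) * (if i - 1 ≤ j then a ^ j else 0) := by
            intro j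
            have hiff : (i < j+1+1) ↔ (i - 1 ≤ j) := by omega
            by_cases h : i - 1 ≤ j
            · rw [if_pos (hiff.mpr h), if_pos h]; ring
            · rw [if_neg (fun hh => h (hiff.mp hh)), if_neg h, mul_zero]
          rw [tsum_congr hsw, ENNReal.tsum_mul_left, aux_tsum_geom_tail]
      _ ≤ C0 * ∑' i : ℕ, (β ^ i * ENNReal.ofReal (V i)) * ((a⁻¹ * a ^ i) * (1-a)⁻¹) :=
          mul_le_mul' le_rfl (ENNReal.tsum_le_tsum fun i =>
            mul_le_mul' le_rfl (mul_le_mul' (ha_shift i) le_rfl))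
      _ = C0 * ((a⁻¹ * (1-a)⁻¹) * ∑' i : ℕ, b ^ i * ENNReal.ofReal (V i)) := by
          congr 1
          rw [← ENNReal.tsum_mul_left]
          refine tsum_congr fun i => ?_
          calc (β ^ i * ENNReal.ofReal (V i)) * ((a⁻¹ * a ^ i) * (1-a)⁻¹)
              = (a⁻¹ * (1-a)⁻¹) * ((β ^ i * a ^ i) * ENNReal.ofReal (V i)) := by ring
            _ = (a⁻¹ * (1-a)⁻¹) * (b ^ i * ENNReal.ofReal (V i)) := by rw [hba i]
  -- total bound and finiteness
  have htotal : ∑' n : ℕ, F (n+1)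
      ≤ C0 * ((a⁻¹ * (1-a)⁻¹) * ((1 - b)⁻¹ * ∫⁻ t in Set.Ioi (0:ℝ), G t ^ r)) :=
    hstep1.trans (hmain.trans (mul_le_mul' le_rfl (mul_le_mul' le_rfl hBud)))
  rw [hgoal]
  refine lt_of_le_of_lt htotal ?_
  have hofq_ne0 : ENNReal.ofReal q ≠ 0 := by
    simp only [ne_eq, ENNReal.ofReal_eq_zero, not_le]; exact hq0
  have hcq_ne_top : cq ≠ ⊤ := by
    rw [hcq_def]
    exact ENNReal.inv_ne_top.mpr hofq_ne0
  have hC0_ne_top : C0 ≠ ⊤ := by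
    rw [hC0_def]
    exact ENNReal.mul_ne_top (h2netop q)
      (ENNReal.mul_ne_top (h2netop q) (ENNReal.rpow_ne_top_of_nonneg hq0.le hcq_ne_top))
  have ha_sub_ne : ((1:ℝ≥0∞) - a)⁻¹ ≠ ⊤ :=
    ENNReal.inv_ne_top.mpr (fun h => absurd (tsub_eq_zero_iff_le.mp h) (not_le.mpr ha1))
  have hb_sub_ne : ((1:ℝ≥0∞) - b)⁻¹ ≠ ⊤ :=
    ENNReal.inv_ne_top.mpr (fun h => absurd (tsub_eq_zero_iff_le.mp h) (not_le.mpr hb1))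
  have hainv_ne : a⁻¹ ≠ ⊤ := ENNReal.inv_ne_top.mpr ha0
  refine ENNReal.mul_lt_top ?_ ?_
  · exact lt_top_iff_ne_top.mpr hC0_ne_top
  refine ENNReal.mul_lt_top ?_ ?_
  · exact lt_top_iff_ne_top.mpr (ENNReal.mul_ne_top hainv_ne ha_sub_ne)
  refine ENNReal.mul_lt_top ?_ ?_
  · exact lt_top_iff_ne_top.mpr hb_sub_ne
  · exact htail
end

section
/- Let n ≥ 1 and let Y_1, …, Y_n be i.i.d. nonnegative integrable real-valued random variables such that P(Y_1 > 0) ≤ K/n for some constant K ≥ 1. Then E(max_{1≤k≤n} Y_k) ≥ (n/(2K))·E(Y_1). -/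
open MeasureTheory ProbabilityTheory Filter
open scoped ENNReal NNReal Topology ProbabilityTheory

open Finset in
lemma geom_aux (n : ℕ) (hn : 1 ≤ n) (K p : ℝ) (hK : 1 ≤ K) (hp0 : 0 ≤ p)
    (hp1 : p ≤ 1) (hpK : p ≤ K / n) :
    (n : ℝ) / (2 * K) ≤ ∑ k ∈ Finset.range n, (1 - p) ^ k := by
  have hK0 : (0:ℝ) < K := lt_of_lt_of_le one_pos hK
  have hn0 : (0:ℝ) < n := by exact_mod_cast hn
  have hr0 : (0:ℝ) ≤ 1 - p := by linarith
  by_cases hc : (n : ℝ) ≤ K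
  · have h1 : (n : ℝ) / (2 * K) ≤ 1 := by
      rw [div_le_one (by linarith)]; linarith
    calc (n:ℝ)/(2*K) ≤ 1 := h1
      _ = (1 - p) ^ 0 := by norm_num
      _ ≤ ∑ k ∈ Finset.range n, (1-p)^k :=
        Finset.single_le_sum (fun k _ => pow_nonneg hr0 k)
          (Finset.mem_range.mpr hn)
  · push_neg at hc
    set q : ℝ := K / n with hq
    have hq0 : 0 < q := div_pos hK0 hn0
    have hq1 : q < 1 := (div_lt_one hn0).mpr hc
    set s : ℝ := 1 - q with hs
    have hs0 : 0 ≤ s := by simp [hs]; linarith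
    have hs1 : s ≠ 1 := by simp [hs]; linarith
    have hsum : ∑ k ∈ Finset.range n, s ^ k = (1 - s ^ n) / q := by
      rw [geom_sum_eq hs1]
      rw [hs]; ring_nf
    have hste : s ^ n ≤ Real.exp (-K) := by
      have h1 : s ≤ Real.exp (-q) := by
        have := Real.add_one_le_exp (-q)
        linarith
      calc s ^ n ≤ (Real.exp (-q)) ^ n := pow_le_pow_left₀ hs0 h1 n
        _ = Real.exp (n * (-q)) := by rw [← Real.exp_nat_mul]
        _ = Real.exp (-K) := by rw [hq]; field_simp
    have hexp : Real.exp (-K) ≤ 1/2 := by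
      have h2 : (2:ℝ) ≤ Real.exp 1 := by
        have := Real.add_one_le_exp (1:ℝ); linarith
      have h3 : Real.exp (-K) ≤ Real.exp (-1) := Real.exp_le_exp.mpr (by linarith)
      have h4 : Real.exp (-1) = (Real.exp 1)⁻¹ := by
        rw [Real.exp_neg]
      have h5 : (Real.exp 1)⁻¹ ≤ 1/2 := by
        rw [inv_le_iff_one_le_mul₀ (by positivity)]
        linarith
      linarith
    have hterm : ∀ k, s ^ k ≤ (1-p) ^ k := fun k =>
      pow_le_pow_left₀ hs0 (by rw [hs]; linarith) k
    calc (n:ℝ)/(2*K) = (1/2) / q := by rw [hq]; field_simp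
      _ ≤ (1 - s^n) / q := by
          have : s ^ n ≤ 1/2 := hste.trans hexp
          gcongr
          linarith
      _ = ∑ k ∈ Finset.range n, s ^ k := hsum.symm
      _ ≤ ∑ k ∈ Finset.range n, (1-p)^k := Finset.sum_le_sum fun k _ => hterm k

/-- Lemma 4.1. For i.i.d. nonnegative integrable real random
variables `Y₁, …, Yₙ` with `ℙ(Y₁ > 0) ≤ K/n` for some `K ≥ 1`,
`E(max_{1≤k≤n} Y_k) ≥ (n/(2K)) E(Y₁)`. -/
theorem stmt_16
    {Ω : Type*} [MeasureSpace Ω] [IsProbabilityMeasure (ℙ : Measure Ω)]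
    (n : ℕ) (hn : 1 ≤ n) (Y : Fin n → Ω → ℝ)
    (hmeas : ∀ k, Measurable (Y k))
    (hindep : iIndepFun Y ℙ)
    (hident : ∀ k, IdentDistrib (Y k) (Y ⟨0, hn⟩) ℙ ℙ)
    (hnonneg : ∀ k ω, 0 ≤ Y k ω)
    (hint : ∀ k, Integrable (Y k) ℙ)
    (K : ℝ) (hK : 1 ≤ K)
    (htail : ℙ {ω | 0 < Y ⟨0, hn⟩ ω} ≤ ENNReal.ofReal (K / n)) :
    ((n : ℝ) / (2 * K)) * ∫ ω, Y ⟨0, hn⟩ ω ∂ℙ ≤ ∫ ω, (⨆ k : Fin n, Y k ω) ∂ℙ := by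
  haveI : Nonempty (Fin n) := ⟨⟨0, hn⟩⟩
  set i0 : Fin n := ⟨0, hn⟩ with hi0
  set A : Set Ω := {ω | 0 < Y i0 ω} with hA
  have hAmeas : MeasurableSet A := measurableSet_lt measurable_const (hmeas i0)
  set T : Fin n → Set Ω := fun j => {ω | Y j ω ≤ 0} with hT
  have hTmeas : ∀ j, MeasurableSet (T j) :=
    fun j => measurableSet_le (hmeas j) measurable_const
  set B : Fin n → Set Ω := fun k => ⋂ j ∈ Finset.Iio k, T j with hB
  have hBmeas : ∀ k, MeasurableSet (B k) := fun k =>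
    MeasurableSet.biInter (Finset.Iio k).countable_toSet (fun j _ => hTmeas j)
  set p : ℝ := (ℙ A).toReal with hp
  have hp0 : 0 ≤ p := ENNReal.toReal_nonneg
  have hp1 : p ≤ 1 := by
    have := ENNReal.toReal_mono ENNReal.one_ne_top (prob_le_one (μ := (ℙ : Measure Ω)) (s := A))
    simpa using this
  have hpK : p ≤ K / n := by
    have h1 := ENNReal.toReal_mono ENNReal.ofReal_ne_top htail
    rwa [ENNReal.toReal_ofReal (by positivity)] at h1
  -- measure of T j
  have hTc : ∀ j, ℙ (T j) = 1 - ℙ A := by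
    intro j
    have h2 : ℙ (Y j ⁻¹' Set.Iic 0) = ℙ (Y i0 ⁻¹' Set.Iic 0) :=
      (hident j).measure_mem_eq measurableSet_Iic
    have h3 : (Y i0 ⁻¹' Set.Iic 0) = Aᶜ := by
      ext ω; simp [hA, not_lt]
    have h4 : T j = Y j ⁻¹' Set.Iic 0 := rfl
    rw [h4, h2, h3, prob_compl_eq_one_sub hAmeas]
  -- measure of B k
  have hBk : ∀ k : Fin n, ℙ (B k) = (1 - ℙ A) ^ (k : ℕ) := by
    intro k
    have h1 : ℙ (⋂ j ∈ Finset.Iio k, T j) = ∏ j ∈ Finset.Iio k, ℙ (T j) :=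
      hindep.meas_biInter (fun j _ => ⟨Set.Iic 0, measurableSet_Iic, rfl⟩)
    rw [hB]
    simp only [h1, hTc, Finset.prod_const, Fin.card_Iio]
  have hBr : ∀ k : Fin n, (ℙ (B k)).toReal = (1 - p) ^ (k : ℕ) := by
    intro k
    rw [hBk k, ENNReal.toReal_pow, ENNReal.toReal_sub_of_le prob_le_one ENNReal.one_ne_top,
      ENNReal.toReal_one, hp]
  -- independence of Y k and indicator of B k
  have hgind : ∀ k : Fin n, IndepFun (Y k) ((B k).indicator (fun _ => (1:ℝ))) ℙ := by
    intro k
    have hd : Disjoint ({k} : Finset (Fin n)) (Finset.Iio k) := by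
      simp [Finset.disjoint_singleton_left]
    have h1 := hindep.indepFun_finset {k} (Finset.Iio k) hd hmeas
    set φ1 : (↥({k} : Finset (Fin n)) → ℝ) → ℝ :=
      fun x => x ⟨k, Finset.mem_singleton_self k⟩ with hφ1
    set φ2 : (↥(Finset.Iio k : Finset (Fin n)) → ℝ) → ℝ :=
      fun x => Set.indicator {y | ∀ j, y j ≤ 0} (fun _ => (1:ℝ)) x with hφ2
    have mφ1 : Measurable φ1 := measurable_pi_apply _
    have mφ2 : Measurable φ2 := by
      apply Measurable.indicator measurable_const
      have : {y : ↥(Finset.Iio k : Finset (Fin n)) → ℝ | ∀ j, y j ≤ 0} =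
          ⋂ j, {y | y j ≤ 0} := by ext y; simp
      rw [this]
      exact MeasurableSet.iInter fun j =>
        measurableSet_le (measurable_pi_apply j) measurable_const
    have h2 := h1.comp mφ1 mφ2
    have e1 : (φ1 ∘ fun a (i : ({k} : Finset (Fin n))) => Y i a) = Y k := rfl
    have e2 : (φ2 ∘ fun a (i : (Finset.Iio k : Finset (Fin n))) => Y i a) =
        (B k).indicator (fun _ => (1:ℝ)) := by
      funext ω
      have hiff : ((fun (i : (Finset.Iio k : Finset (Fin n))) => Y i ω) ∈
          {y : ↥(Finset.Iio k : Finset (Fin n)) → ℝ | ∀ j, y j ≤ 0}) ↔ ω ∈ B k := by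
        simp [hB, hT, Subtype.forall]
      simp only [Function.comp_apply, hφ2, Set.indicator_apply]
      by_cases hbm : ω ∈ B k
      · rw [if_pos (hiff.mpr hbm), Set.indicator_of_mem hbm]
      · rw [if_neg (fun hc => hbm (hiff.mp hc)), Set.indicator_of_notMem hbm]
    rwa [e1, e2] at h2
  -- integral of indicator terms
  have hgint : ∀ k : Fin n, ∫ ω, (B k).indicator (Y k) ω ∂ℙ =
      (∫ ω, Y i0 ω ∂ℙ) * (1 - p) ^ (k : ℕ) := by
    intro k
    have he : (B k).indicator (Y k) =
        Y k * (B k).indicator (fun _ => (1:ℝ)) := by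
      funext ω
      by_cases h : ω ∈ B k <;> simp [Set.indicator_apply, h]
    have hind_int : Integrable ((B k).indicator (fun _ => (1:ℝ))) ℙ :=
      (integrable_const (1:ℝ)).indicator (hBmeas k)
    have h6 := (hgind k).integral_mul_eq_mul_integral (hint k).aestronglyMeasurable hind_int.aestronglyMeasurable
    rw [he, h6, MeasureTheory.integral_indicator_const (1:ℝ) (hBmeas k), measureReal_def, hBr k,
      (hident k).integral_eq]
    simp [mul_comm]
  -- sup function
  set M : Ω → ℝ := fun ω => ⨆ k, Y k ω with hM
  have hMeq : M = Finset.univ.sup' Finset.univ_nonempty Y := by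
    funext ω
    rw [hM, Finset.sup'_apply, Finset.sup'_univ_eq_ciSup]
  have hMmeas : Measurable M := by
    rw [hMeq]; exact Finset.measurable_sup' Finset.univ_nonempty (fun k _ => hmeas k)
  have hbdd : ∀ ω, BddAbove (Set.range fun k => Y k ω) :=
    fun ω => (Set.finite_range _).bddAbove
  have hle_sup : ∀ k ω, Y k ω ≤ M ω := fun k ω => le_ciSup (hbdd ω) k
  have hM0 : ∀ ω, 0 ≤ M ω := fun ω => (hnonneg i0 ω).trans (hle_sup i0 ω)
  have hMint : Integrable M ℙ := by
    apply Integrable.mono'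
      (integrable_finset_sum Finset.univ (fun k _ => hint k)) hMmeas.aestronglyMeasurable
    refine Filter.Eventually.of_forall fun ω => ?_
    rw [Real.norm_eq_abs, abs_of_nonneg (hM0 ω)]
    exact ciSup_le fun k =>
      Finset.single_le_sum (fun j _ => hnonneg j ω) (Finset.mem_univ k)
  -- pointwise bound
  have hind_le : ∀ k ω, (B k).indicator (Y k) ω ≤ Y k ω := by
    intro k ω; by_cases h : ω ∈ B k <;> simp [Set.indicator_apply, h, hnonneg k ω]
  have hpt : ∀ ω, ∑ k : Fin n, (B k).indicator (Y k) ω ≤ M ω := by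
    intro ω
    by_cases h : ∃ k, 0 < Y k ω
    · set S : Finset (Fin n) := Finset.univ.filter (fun k => 0 < Y k ω) with hS
      have hSne : S.Nonempty := by
        obtain ⟨k, hk⟩ := h; exact ⟨k, by simp [hS, hk]⟩
      set k0 := S.min' hSne with hk0
      have hk0pos : 0 < Y k0 ω := by
        have := S.min'_mem hSne
        simpa [hS] using this
      have hltz : ∀ j, j < k0 → Y j ω ≤ 0 := by
        intro j hj
        by_contra hcon
        push_neg at hcon
        have hjm : j ∈ S := by simp [hS]; exact hcon
        exact absurd (S.min'_le j hjm) (not_le.mpr hj)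
      have hsum : ∑ k : Fin n, (B k).indicator (Y k) ω = (B k0).indicator (Y k0) ω := by
        apply Finset.sum_eq_single_of_mem k0 (Finset.mem_univ _)
        intro k _ hk
        rcases lt_or_gt_of_ne hk with hlt' | hgt
        · have h0 : Y k ω = 0 := le_antisymm (hltz k hlt') (hnonneg k ω)
          by_cases hb : ω ∈ B k <;> simp [Set.indicator_apply, hb, h0]
        · have hb : ω ∉ B k := by
            intro hmem
            have h5 : ω ∈ T k0 := by
              rw [hB] at hmem
              exact Set.mem_iInter₂.mp hmem k0 (Finset.mem_Iio.mpr hgt)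
            exact absurd hk0pos (not_lt.mpr h5)
          simp [Set.indicator_apply, hb]
      rw [hsum]
      exact (hind_le k0 ω).trans (hle_sup k0 ω)
    · push_neg at h
      have h0 : ∀ k, Y k ω = 0 := fun k => le_antisymm (h k) (hnonneg k ω)
      have : ∑ k : Fin n, (B k).indicator (Y k) ω ≤ 0 := by
        apply Finset.sum_nonpos
        intro k _
        exact (hind_le k ω).trans (h k)
      exact this.trans (hM0 ω)
  -- put together
  have hsum_int : ∀ k : Fin n, Integrable ((B k).indicator (Y k)) ℙ :=
    fun k => (hint k).indicator (hBmeas k)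
  have step : ∑ k : Fin n, ((∫ ω, Y i0 ω ∂ℙ) * (1 - p) ^ (k : ℕ)) ≤ ∫ ω, M ω ∂ℙ := by
    calc ∑ k : Fin n, ((∫ ω, Y i0 ω ∂ℙ) * (1 - p) ^ (k : ℕ))
        = ∑ k : Fin n, ∫ ω, (B k).indicator (Y k) ω ∂ℙ := by
          exact Finset.sum_congr rfl fun k _ => (hgint k).symm
      _ = ∫ ω, ∑ k : Fin n, (B k).indicator (Y k) ω ∂ℙ :=
          (integral_finset_sum _ fun k _ => hsum_int k).symm
      _ ≤ ∫ ω, M ω ∂ℙ :=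
          integral_mono (integrable_finset_sum _ fun k _ => hsum_int k) hMint hpt
  have hE0 : 0 ≤ ∫ ω, Y i0 ω ∂ℙ := integral_nonneg fun ω => hnonneg i0 ω
  have harith := geom_aux n hn K p hK hp0 hp1 hpK
  calc ((n : ℝ) / (2 * K)) * ∫ ω, Y i0 ω ∂ℙ
      ≤ (∑ k ∈ Finset.range n, (1 - p) ^ k) * ∫ ω, Y i0 ω ∂ℙ :=
        mul_le_mul_of_nonneg_right harith hE0
    _ = ∑ k : Fin n, ((∫ ω, Y i0 ω ∂ℙ) * (1 - p) ^ (k : ℕ)) := by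
        rw [Fin.sum_univ_eq_sum_range (fun k => (∫ ω, Y i0 ω ∂ℙ) * (1 - p) ^ k) n,
          Finset.sum_mul]
        exact Finset.sum_congr rfl fun k _ => mul_comm _ _
    _ ≤ ∫ ω, M ω ∂ℙ := step
end

section
/- Let 0 < p < 1 and let X be a real-valued random variable whose tail probability function is P(X > t) = 1 for t ≤ e^e and P(X > t) = e^{ep+1}/(t^p·(ln t)·(ln ln t)^2) for t > e^e (where e is Euler's number and ln the natural logarithm). Then E(|X|^p) < ∞ but Σ_{n=1}^∞ (1/n)·E(|X|^p · 1{min{u_n^p, n} < |X|^p ≤ n}) = ∞, where u_n = inf{t ≥ 0 : P(|X| > t) < 1/n}. -/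
open MeasureTheory ProbabilityTheory Filter Set
open scoped ENNReal NNReal Topology ProbabilityTheory

lemma ee_gt_one : (1:ℝ) < Real.exp (Real.exp 1) := by
  have := Real.exp_one_gt_d9
  nlinarith [Real.add_one_lt_exp (x := Real.exp 1) (by positivity)]

lemma loglog_deriv {x : ℝ} (hx : Real.exp (Real.exp 1) ≤ x) :
    HasDerivAt (fun t => Real.log (Real.log t)) (1 / (x * Real.log x)) x := by
  have hx1 : (1:ℝ) < x := lt_of_lt_of_le ee_gt_one hx
  have hlx : (1:ℝ) < Real.log x := by
    calc (1:ℝ) < Real.exp 1 := by nlinarith [Real.add_one_lt_exp (x := (1:ℝ)) one_ne_zero]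
    _ = Real.log (Real.exp (Real.exp 1)) := (Real.log_exp _).symm
    _ ≤ Real.log x := Real.log_le_log (Real.exp_pos _) hx
  have h1 : HasDerivAt Real.log x⁻¹ x := Real.hasDerivAt_log (by linarith)
  have h2 : HasDerivAt Real.log (Real.log x)⁻¹ (Real.log x) :=
    Real.hasDerivAt_log (by linarith)
  have := h2.comp x h1
  refine this.congr_deriv ?_
  simp only [one_div]
  ring

lemma log_ge_e {x : ℝ} (hx : Real.exp (Real.exp 1) ≤ x) : Real.exp 1 ≤ Real.log x := by
  calc Real.exp 1 = Real.log (Real.exp (Real.exp 1)) := (Real.log_exp _).symm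
  _ ≤ Real.log x := Real.log_le_log (Real.exp_pos _) hx

lemma llog_pos {x : ℝ} (hx : Real.exp (Real.exp 1) ≤ x) : 1 ≤ Real.log (Real.log x) := by
  calc (1:ℝ) = Real.log (Real.exp 1) := (Real.log_exp 1).symm
  _ ≤ Real.log (Real.log x) := Real.log_le_log (Real.exp_pos _) (log_ge_e hx)

lemma conv_lemma {A : ℝ} (hA : Real.exp (Real.exp 1) ≤ A) :
    ∫⁻ t in Set.Ioi A, ENNReal.ofReal (1 / (t * Real.log t * Real.log (Real.log t) ^ 2)) < ⊤ := by
  set g : ℝ → ℝ := fun t => -(Real.log (Real.log t))⁻¹ with hg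
  have hderiv : ∀ x ∈ Ici A, HasDerivAt g (1 / (x * Real.log x * Real.log (Real.log x) ^ 2)) x := by
    intro x hx
    have hx' : Real.exp (Real.exp 1) ≤ x := le_trans hA hx
    have h1 := loglog_deriv hx'
    have hll : Real.log (Real.log x) ≠ 0 := by have := llog_pos hx'; linarith
    have := (h1.inv hll).neg
    refine this.congr_deriv ?_
    have hx1 : (1:ℝ) < x := lt_of_lt_of_le ee_gt_one hx'
    have hlx : (0:ℝ) < Real.log x := Real.log_pos hx1
    ring
  have hnn : ∀ x ∈ Ioi A, 0 ≤ 1 / (x * Real.log x * Real.log (Real.log x) ^ 2) := by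
    intro x hx
    have hx' : Real.exp (Real.exp 1) ≤ x := le_trans hA (le_of_lt hx)
    have hx1 : (1:ℝ) < x := lt_of_lt_of_le ee_gt_one hx'
    have hlx : (0:ℝ) < Real.log x := Real.log_pos hx1
    have := llog_pos hx'
    positivity
  have htend : Tendsto g atTop (𝓝 0) := by
    have : Tendsto (fun t => Real.log (Real.log t)) atTop atTop :=
      Real.tendsto_log_atTop.comp Real.tendsto_log_atTop
    simpa [hg] using (this.inv_tendsto_atTop).neg
  have hint : IntegrableOn (fun x => 1 / (x * Real.log x * Real.log (Real.log x) ^ 2)) (Ioi A) :=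
    integrableOn_Ioi_deriv_of_nonneg' hderiv hnn (by simpa using htend)
  have := hint.2
  rw [hasFiniteIntegral_iff_ofReal] at this
  · exact this
  · filter_upwards [ae_restrict_mem measurableSet_Ioi] with x hx using hnn x hx

lemma div_lemma {A : ℝ} (hA : Real.exp (Real.exp 1) ≤ A) :
    ∫⁻ t in Set.Ioi A, ENNReal.ofReal (1 / (t * Real.log t * Real.log (Real.log t))) = ⊤ := by
  apply ENNReal.eq_top_of_forall_nnreal_le
  intro r
  have htend : Tendsto (fun t => Real.log (Real.log (Real.log t))) atTop atTop :=
    Real.tendsto_log_atTop.comp (Real.tendsto_log_atTop.comp Real.tendsto_log_atTop)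
  obtain ⟨R, hR1, hR2⟩ := ((htend.eventually_ge_atTop
      ((r:ℝ) + Real.log (Real.log (Real.log A)))).and (eventually_gt_atTop A)).exists
  have key : ∀ x ∈ Icc A R, HasDerivAt (fun t => Real.log (Real.log (Real.log t)))
      (1 / (x * Real.log x * Real.log (Real.log x))) x := by
    intro x hx
    have hx' : Real.exp (Real.exp 1) ≤ x := le_trans hA hx.1
    have h1 := loglog_deriv hx'
    have hll : (1:ℝ) ≤ Real.log (Real.log x) := llog_pos hx'
    have h2 : HasDerivAt Real.log (Real.log (Real.log x))⁻¹ (Real.log (Real.log x)) :=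
      Real.hasDerivAt_log (by linarith)
    have := h2.comp x h1
    refine this.congr_deriv ?_
    have hx1 : (1:ℝ) < x := lt_of_lt_of_le ee_gt_one hx'
    have hlx : (0:ℝ) < Real.log x := Real.log_pos hx1
    simp only [one_div]
    ring
  have hcont : ContinuousOn (fun x => 1 / (x * Real.log x * Real.log (Real.log x))) (Icc A R) := by
    intro x hx
    have hx' : Real.exp (Real.exp 1) ≤ x := le_trans hA hx.1
    have hx1 : (1:ℝ) < x := lt_of_lt_of_le ee_gt_one hx'
    have hlx : (0:ℝ) < Real.log x := Real.log_pos hx1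
    have hll : (1:ℝ) ≤ Real.log (Real.log x) := llog_pos hx'
    apply ContinuousWithinAt.div continuousWithinAt_const
    · exact (((continuousAt_id.mul ((Real.continuousAt_log (by linarith)))).mul
        ((Real.continuousAt_log (by linarith)).comp
          (Real.continuousAt_log (by linarith)))).continuousWithinAt)
    · have : x * Real.log x * Real.log (Real.log x) > 0 := by positivity
      exact ne_of_gt this
  have hA' : A ≤ R := le_of_lt hR2
  have hii : IntervalIntegrable (fun x => 1 / (x * Real.log x * Real.log (Real.log x)))
      volume A R := (hcont.intervalIntegrable_of_Icc hA')
  have hftc := intervalIntegral.integral_eq_sub_of_hasDerivAt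
    (fun x hx => key x (by rwa [Set.uIcc_of_le hA'] at hx)) hii
  have hnn : 0 ≤ᵐ[volume.restrict (Ioc A R)]
      (fun x => 1 / (x * Real.log x * Real.log (Real.log x))) := by
    filter_upwards [ae_restrict_mem measurableSet_Ioc] with x hx
    have hx' : Real.exp (Real.exp 1) ≤ x := le_trans hA (le_of_lt hx.1)
    have hx1 : (1:ℝ) < x := lt_of_lt_of_le ee_gt_one hx'
    have hlx : (0:ℝ) < Real.log x := Real.log_pos hx1
    have := llog_pos hx'
    positivity
  calc (r : ℝ≥0∞) = ENNReal.ofReal r := ENNReal.ofReal_coe_nnreal.symm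
  _ ≤ ENNReal.ofReal (∫ x in A..R, 1 / (x * Real.log x * Real.log (Real.log x))) := by
      apply ENNReal.ofReal_le_ofReal
      rw [hftc]; linarith
  _ = ENNReal.ofReal (∫ x in Ioc A R, 1 / (x * Real.log x * Real.log (Real.log x))) := by
      rw [intervalIntegral.intervalIntegral_eq_integral_uIoc, Set.uIoc_of_le hA']
      simp [hA']
  _ ≤ ∫⁻ x in Ioc A R, ENNReal.ofReal (1 / (x * Real.log x * Real.log (Real.log x))) := by
      rw [ofReal_integral_eq_lintegral_ofReal (hii.1.congr_set_ae EventuallyEq.rfl) hnn]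
  _ ≤ _ := lintegral_mono_set Set.Ioc_subset_Ioi_self

lemma sum_inv_ge {a b : ℕ} (ha : 1 ≤ a) (hab : a ≤ b) :
    Real.log ((b:ℝ)+1) - 1 - Real.log a ≤ ∑ d ∈ Finset.Icc a b, ((d:ℝ))⁻¹ := by
  have hH : ∀ n:ℕ, ∑ d ∈ Finset.Ioc 0 n, (d:ℝ)⁻¹ = (harmonic n : ℝ) := by
    intro n
    rw [harmonic_eq_sum_Icc]
    push_cast
    rw [show Finset.Icc 1 n = Finset.Ioc 0 n from by rw [← Finset.Icc_add_one_left_eq_Ioc, zero_add]]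
  have h1 : ∑ d ∈ Finset.Ioc 0 (a-1), (d:ℝ)⁻¹ + ∑ d ∈ Finset.Ioc (a-1) b, (d:ℝ)⁻¹
      = ∑ d ∈ Finset.Ioc 0 b, (d:ℝ)⁻¹ :=
    Finset.sum_Ioc_consecutive _ (Nat.zero_le _) (by omega)
  have hIcc : Finset.Icc a b = Finset.Ioc (a-1) b := by
    rw [← Finset.Icc_add_one_left_eq_Ioc]; congr 1; omega
  have hb := log_add_one_le_harmonic b
  have ha' := harmonic_le_one_add_log (a-1)
  have hlog : Real.log ((a:ℕ)-1 : ℕ) ≤ Real.log a := by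
    rcases Nat.eq_or_lt_of_le ha with h | h
    · simp [← h]
    · exact Real.log_le_log (by exact_mod_cast Nat.sub_pos_of_lt h) (by exact_mod_cast Nat.sub_le a 1)
  rw [hIcc]
  have e1 := hH b
  have e2 := hH (a-1)
  push_cast at hb
  linarith

lemma tail_swap {Ω : Type*} [MeasurableSpace Ω] (μ : Measure Ω) [SFinite μ]
    {Y : Ω → ℝ} (hY : Measurable Y) (A : ℝ) {w : ℝ → ℝ≥0∞} (hw : Measurable w) :
    ∫⁻ t in Set.Ioi A, w t * μ {ω | t < Y ω} =
      ∫⁻ ω, ∫⁻ t in Set.Ioo A (Y ω), w t ∂volume ∂μ := by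
  have hset : MeasurableSet {p : ℝ × Ω | p.1 < Y p.2} :=
    measurableSet_lt measurable_fst (hY.comp measurable_snd)
  set F : ℝ → Ω → ℝ≥0∞ := fun t ω => w t * {p : ℝ × Ω | p.1 < Y p.2}.indicator 1 (t, ω) with hF
  have hFm : AEMeasurable (Function.uncurry F) ((volume.restrict (Set.Ioi A)).prod μ) := by
    apply Measurable.aemeasurable
    apply Measurable.mul
    · exact hw.comp measurable_fst
    · exact ((measurable_one).indicator hset)
  have h1 : ∀ t, ∫⁻ ω, F t ω ∂μ = w t * μ {ω | t < Y ω} := by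
    intro t
    have : (fun ω => F t ω) = fun ω => ({ω : Ω | t < Y ω}).indicator (fun _ => w t) ω := by
      ext ω
      by_cases h : t < Y ω <;> simp [hF, Set.indicator, h]
    rw [this, lintegral_indicator
      (show MeasurableSet {ω : Ω | t < Y ω} from (measurableSet_lt measurable_const hY))]
    simp [mul_comm]
  have h2 : ∀ ω, ∫⁻ t in Set.Ioi A, F t ω ∂volume = ∫⁻ t in Set.Ioo A (Y ω), w t ∂volume := by
    intro ω
    have : (fun t => F t ω) = fun t => (Set.Iio (Y ω)).indicator w t := by
      ext t
      by_cases h : t < Y ω <;> simp [hF, Set.indicator, h]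
    rw [this, lintegral_indicator measurableSet_Iio, Measure.restrict_restrict measurableSet_Iio]
    rw [show Set.Iio (Y ω) ∩ Set.Ioi A = Set.Ioo A (Y ω) from by ext x; simp [and_comm]]
  calc ∫⁻ t in Set.Ioi A, w t * μ {ω | t < Y ω}
      = ∫⁻ t in Set.Ioi A, ∫⁻ ω, F t ω ∂μ := by simp_rw [h1]
    _ = ∫⁻ ω, ∫⁻ t in Set.Ioi A, F t ω ∂volume ∂μ := lintegral_lintegral_swap hFm
    _ = _ := by simp_rw [h2]

lemma lt_rpow_iff' {p : ℝ} (hp : 0 < p) {s x : ℝ} (hs : 0 < s) (hx : 0 ≤ x) :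
    s < x ^ p ↔ s ^ (1/p) < x := by
  constructor
  · intro h
    have h2 := Real.rpow_lt_rpow hs.le h (one_div_pos.mpr hp)
    rwa [← Real.rpow_mul hx, mul_one_div_cancel (ne_of_gt hp), Real.rpow_one] at h2
  · intro h
    have h2 := Real.rpow_lt_rpow (Real.rpow_nonneg hs.le _) h hp
    rwa [← Real.rpow_mul hs.le, one_div_mul_cancel (ne_of_gt hp), Real.rpow_one] at h2

set_option maxHeartbeats 2000000 in
/-- Example 4.5. Let `0 < p < 1` and let `X` have tail
`ℙ(X > t) = 1` for `t ≤ e^e` and `ℙ(X > t) = e^{ep+1}/(t^p (ln t)(ln ln t)²)` for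
`t > e^e`. Then `E(|X|^p) < ∞` but
`∑ₙ (1/n) E(|X|^p 1{min(uₙ^p, n) < |X|^p ≤ n}) = ∞`. -/
theorem stmt_18
    {Ω : Type*} [MeasureSpace Ω] [IsProbabilityMeasure (ℙ : Measure Ω)]
    (p : ℝ) (hp0 : 0 < p) (hp1 : p < 1)
    (X : Ω → ℝ) (hX : Measurable X)
    (htail : ∀ t : ℝ, ℙ {ω | X ω > t} =
      if t ≤ Real.exp (Real.exp 1) then 1
      else ENNReal.ofReal (Real.exp (Real.exp 1 * p + 1) /
        (t ^ p * Real.log t * Real.log (Real.log t) ^ 2)))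
    (u : ℕ → ℝ)
    (hu : ∀ n : ℕ, u n = sInf {t : ℝ | 0 ≤ t ∧ ℙ {ω | |X ω| > t} < 1 / (n : ℝ≥0∞)}) :
    (∫⁻ ω, ENNReal.ofReal (|X ω| ^ p) ∂ℙ < ⊤) ∧
      (∑' n : ℕ, (((n : ℝ≥0∞) + 1))⁻¹ *
        ∫⁻ ω in {ω | min (u (n + 1) ^ p) ((n : ℝ) + 1) < |X ω| ^ p ∧
            |X ω| ^ p ≤ (n : ℝ) + 1},
          ENNReal.ofReal (|X ω| ^ p) ∂ℙ) = ⊤ := by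
  have hp0' : (0:ℝ) < 1/p := by positivity
  have hp1' : (1:ℝ) ≤ 1/p := by rw [le_div_iff₀ hp0]; linarith
  set E := Real.exp (Real.exp 1) with hEdef
  set C := Real.exp (Real.exp 1 * p + 1) with hCdef
  have hC : 0 < C := Real.exp_pos _
  have hE1 : (1:ℝ) < E := ee_gt_one
  have hE0 : (0:ℝ) < E := by linarith
  have he1 : (1:ℝ) < Real.exp 1 := by
    nlinarith [Real.add_one_lt_exp (x := (1:ℝ)) one_ne_zero]
  have hY : Measurable (fun ω => |X ω| ^ p) :=
    (Real.continuous_rpow_const hp0.le).measurable.comp hX.abs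
  have hYnn : ∀ ω, 0 ≤ |X ω| ^ p := fun ω => Real.rpow_nonneg (abs_nonneg _) p
  have hone : ℙ {ω | X ω > E} = 1 := by rw [htail]; simp
  have hnullc : ℙ {ω | ¬ (E < X ω)} = 0 := by
    have hm : MeasurableSet {ω | E < X ω} := measurableSet_lt measurable_const hX
    have hcompl := measure_compl hm (measure_ne_top ℙ _)
    rw [show {ω | ¬ (E < X ω)} = {ω | E < X ω}ᶜ from rfl, hcompl,
      show ℙ {ω : Ω | E < X ω} = 1 from hone]
    simp
  have tail_abs : ∀ x : ℝ, 0 ≤ x → ℙ {ω | |X ω| > x} = ℙ {ω | X ω > x} := by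
    intro x hx
    apply measure_congr
    rw [MeasureTheory.ae_eq_set]
    constructor
    · apply measure_mono_null _ hnullc
      intro ω hω
      simp only [Set.mem_diff, Set.mem_setOf_eq] at hω ⊢
      intro hE'
      exact hω.2 (by rw [← abs_of_pos (lt_trans hE0 hE')]; exact hω.1)
    · apply measure_mono_null _ hnullc
      intro ω hω
      simp only [Set.mem_diff, Set.mem_setOf_eq] at hω
      exact absurd (lt_of_lt_of_le hω.1 (le_abs_self _)) hω.2
  have tail_absf : ∀ x : ℝ, E < x → ℙ {ω | x < |X ω|} =
      ENNReal.ofReal (C / (x ^ p * Real.log x * Real.log (Real.log x) ^ 2)) := by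
    intro x hx
    rw [show {ω | x < |X ω|} = {ω | |X ω| > x} from rfl, tail_abs x (by linarith), htail]
    rw [if_neg (not_le.mpr hx)]
  have tailY : ∀ s : ℝ, E < s → ℙ {ω | s < |X ω| ^ p} =
      ENNReal.ofReal (C / (s * ((1/p) * Real.log s) * Real.log ((1/p) * Real.log s) ^ 2)) := by
    intro s hs
    have hs0 : (0:ℝ) < s := lt_trans hE0 hs
    have hsett : {ω | s < |X ω| ^ p} = {ω | s ^ (1/p) < |X ω|} := by
      ext ω; exact lt_rpow_iff' hp0 hs0 (abs_nonneg _)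
    have hts : E < s ^ (1/p) := lt_of_lt_of_le hs
      (by calc s = s ^ (1:ℝ) := (Real.rpow_one s).symm
          _ ≤ s ^ (1/p) := Real.rpow_le_rpow_of_exponent_le (by linarith) hp1')
    rw [hsett, tail_absf _ hts]
    congr 2
    rw [← Real.rpow_mul hs0.le, one_div_mul_cancel (ne_of_gt hp0), Real.rpow_one,
        Real.log_rpow hs0]
  constructor
  · -- Part 1 : finiteness
    rw [lintegral_eq_lintegral_meas_lt ℙ (Eventually.of_forall hYnn) hY.aemeasurable]
    rw [show Set.Ioi (0:ℝ) = Set.Ioc 0 E ∪ Set.Ioi E from (Set.Ioc_union_Ioi_eq_Ioi hE0.le).symm]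
    rw [lintegral_union measurableSet_Ioi (Set.Ioc_disjoint_Ioi le_rfl)]
    apply ENNReal.add_lt_top.mpr
    constructor
    · calc ∫⁻ t in Set.Ioc 0 E, ℙ {a | t < |X a| ^ p}
          ≤ ∫⁻ _ in Set.Ioc 0 E, 1 := lintegral_mono fun t => prob_le_one
        _ = ENNReal.ofReal E := by simp [Real.volume_Ioc]
        _ < ⊤ := ENNReal.ofReal_lt_top
    · have hbd : ∀ t ∈ Set.Ioi E, ℙ {a | t < |X a| ^ p} ≤
          ENNReal.ofReal C * ENNReal.ofReal (1 / (t * Real.log t * Real.log (Real.log t) ^ 2)) := by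
        intro t ht
        rw [tailY t ht, ← ENNReal.ofReal_mul hC.le]
        apply ENNReal.ofReal_le_ofReal
        have htE : E ≤ t := le_of_lt ht
        have ht1 : (1:ℝ) < t := lt_trans hE1 ht
        have hlt : Real.exp 1 ≤ Real.log t := log_ge_e htE
        have hlt0 : (0:ℝ) < Real.log t := by linarith
        have hllt : (1:ℝ) ≤ Real.log (Real.log t) := llog_pos htE
        have h1 : Real.log t ≤ (1/p) * Real.log t := le_mul_of_one_le_left hlt0.le hp1'
        have h2 : Real.log (Real.log t) ≤ Real.log ((1/p) * Real.log t) :=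
          Real.log_le_log hlt0 h1
        rw [mul_one_div]
        have hden : t * Real.log t * Real.log (Real.log t) ^ 2
            ≤ t * ((1/p) * Real.log t) * Real.log ((1/p) * Real.log t) ^ 2 := by
          have hsq : Real.log (Real.log t) ^ 2 ≤ Real.log ((1/p) * Real.log t) ^ 2 :=
            pow_le_pow_left₀ (by linarith) h2 2
          have ht0 : (0:ℝ) < t := by linarith
          calc t * Real.log t * Real.log (Real.log t) ^ 2
              ≤ t * Real.log t * Real.log ((1/p) * Real.log t) ^ 2 :=
                mul_le_mul_of_nonneg_left hsq (by positivity)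
            _ ≤ t * ((1/p) * Real.log t) * Real.log ((1/p) * Real.log t) ^ 2 :=
                mul_le_mul_of_nonneg_right (mul_le_mul_of_nonneg_left h1 ht0.le) (sq_nonneg _)
        have hdpos : (0:ℝ) < t * Real.log t * Real.log (Real.log t) ^ 2 := by
          have ht0 : (0:ℝ) < t := by linarith
          positivity
        exact div_le_div_of_nonneg_left hC.le hdpos hden
      calc ∫⁻ t in Set.Ioi E, ℙ {a | t < |X a| ^ p}
          ≤ ∫⁻ t in Set.Ioi E, ENNReal.ofReal C *
              ENNReal.ofReal (1 / (t * Real.log t * Real.log (Real.log t) ^ 2)) := by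
            refine lintegral_mono_ae ?_
            filter_upwards [ae_restrict_mem measurableSet_Ioi] with t ht using hbd t ht
        _ = ENNReal.ofReal C * ∫⁻ t in Set.Ioi E,
              ENNReal.ofReal (1 / (t * Real.log t * Real.log (Real.log t) ^ 2)) :=
            lintegral_const_mul' _ _ ENNReal.ofReal_ne_top
        _ < ⊤ := ENNReal.mul_lt_top ENNReal.ofReal_lt_top (conv_lemma le_rfl)
  · -- Part 2 : divergence
    set M := max (2*(Real.log (2*C) + 2)) (max (Real.log (6*C) + 1) 2) with hMdef
    set S₀ := Real.exp (Real.exp M) with hS0def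
    have hM2 : (2:ℝ) ≤ M := le_max_of_le_right (le_max_right _ _)
    have hMa : 2*(Real.log (2*C) + 2) ≤ M := le_max_left _ _
    have hMb : Real.log (6*C) + 1 ≤ M := le_max_of_le_right (le_max_left _ _)
    have hES0 : E < S₀ := by
      rw [hS0def, hEdef]
      exact Real.exp_lt_exp.mpr (Real.exp_lt_exp.mpr (by linarith))
    have hS0E : E ≤ S₀ := hES0.le
    have hS01 : (1:ℝ) < S₀ := lt_trans hE1 hES0
    have hexpM3 : (3:ℝ) ≤ Real.exp M := by
      have := Real.add_one_le_exp M; linarith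
    -- claim about the quantiles u m
    have uclaim : ∀ (m : ℕ) (Yv : ℝ), 1 ≤ m → S₀ ≤ Yv →
        (m:ℝ) ≤ Yv * ((1/p) * Real.log Yv) * Real.log ((1/p) * Real.log Yv) ^ 2 / (2*C) →
        u m ^ p < Yv := by
      intro m Yv hm hSY hmD
      have hEY : E < Yv := lt_of_lt_of_le hES0 hSY
      have hY0 : (0:ℝ) < Yv := lt_trans hE0 hEY
      have hY1 : (1:ℝ) < Yv := lt_trans hE1 hEY
      set t := Yv ^ (1/p) with htdef
      have htY : Yv ≤ t := by
        calc Yv = Yv ^ (1:ℝ) := (Real.rpow_one Yv).symm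
        _ ≤ t := Real.rpow_le_rpow_of_exponent_le hY1.le hp1'
      have hEt : E < t := lt_of_lt_of_le hEY htY
      have ht0 : (0:ℝ) < t := lt_trans hE0 hEt
      have htp : t ^ p = Yv := by
        rw [htdef, ← Real.rpow_mul hY0.le, one_div_mul_cancel (ne_of_gt hp0), Real.rpow_one]
      have hlogt : Real.log t = (1/p) * Real.log Yv := by
        rw [htdef]; exact Real.log_rpow hY0 _
      have hltpos : (0:ℝ) < Real.log t := Real.log_pos (lt_trans hE1 hEt)
      have hlltpos : (1:ℝ) ≤ Real.log (Real.log t) := llog_pos hEt.le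
      have hQpos : (0:ℝ) < t ^ p * Real.log t * Real.log (Real.log t) ^ 2 := by
        rw [htp]
        exact mul_pos (mul_pos hY0 hltpos) (by nlinarith)
      have hm0 : (0:ℝ) < (m:ℝ) := by exact_mod_cast hm
      have hφm : C / (t ^ p * Real.log t * Real.log (Real.log t) ^ 2) < 1/(m:ℝ) := by
        rw [div_lt_div_iff₀ hQpos hm0]
        have hQ : (m:ℝ) * (2*C) ≤ t ^ p * Real.log t * Real.log (Real.log t) ^ 2 := by
          rw [htp, hlogt]
          rw [le_div_iff₀ (by positivity : (0:ℝ) < 2*C)] at hmD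
          exact hmD
        nlinarith [hC, hm0]
      have hcont : ContinuousAt (fun x => C / (x ^ p * Real.log x * Real.log (Real.log x) ^ 2)) t := by
        have h1 : ContinuousAt (fun x : ℝ => x ^ p) t :=
          Real.continuousAt_rpow_const t p (Or.inl (ne_of_gt ht0))
        have h2 : ContinuousAt Real.log t := Real.continuousAt_log (ne_of_gt ht0)
        have h3 : ContinuousAt (fun x => Real.log (Real.log x)) t :=
          (Real.continuousAt_log (ne_of_gt hltpos)).comp h2
        exact continuousAt_const.div ((h1.mul h2).mul (h3.pow 2)) (ne_of_gt hQpos)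
      have hmem : {x : ℝ | C / (x ^ p * Real.log x * Real.log (Real.log x) ^ 2) < 1/(m:ℝ)} ∈ 𝓝 t :=
        hcont (Iio_mem_nhds hφm)
      have hmem2 : Set.Ioi E ∈ 𝓝 t := Ioi_mem_nhds hEt
      obtain ⟨x, hx⟩ : ∃ x, (C / (x ^ p * Real.log x * Real.log (Real.log x) ^ 2) < 1/(m:ℝ)
          ∧ E < x) ∧ x < t := by
        have h4 : ∀ᶠ x in 𝓝[<] t, (C / (x ^ p * Real.log x * Real.log (Real.log x) ^ 2) < 1/(m:ℝ)
            ∧ E < x) :=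
          eventually_nhdsWithin_of_eventually_nhds
            (by filter_upwards [hmem, hmem2] with x h1 h2 using ⟨h1, h2⟩)
        exact (h4.and eventually_mem_nhdsWithin).exists
      obtain ⟨⟨hx1, hx2⟩, hx3⟩ := hx
      have hx0 : (0:ℝ) ≤ x := le_of_lt (lt_trans hE0 hx2)
      have hPx : ℙ {ω | |X ω| > x} < 1/(m:ℝ≥0∞) := by
        rw [show {ω | |X ω| > x} = {ω | x < |X ω|} from rfl, tail_absf x hx2]
        calc ENNReal.ofReal (C / (x ^ p * Real.log x * Real.log (Real.log x) ^ 2))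
            < ENNReal.ofReal (1/(m:ℝ)) := (ENNReal.ofReal_lt_ofReal_iff (by positivity)).mpr hx1
          _ = 1/(m:ℝ≥0∞) := by
              rw [one_div, one_div, ← ENNReal.ofReal_natCast m, ← ENNReal.ofReal_inv_of_pos hm0]
      have humle : u m ≤ x := by
        rw [hu m]
        exact csInf_le ⟨0, fun y hy => hy.1⟩ ⟨hx0, hPx⟩
      have hum0 : 0 ≤ u m := by
        rw [hu m]
        exact Real.sInf_nonneg fun y hy => hy.1
      calc u m ^ p ≤ x ^ p := Real.rpow_le_rpow hum0 humle hp0.le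
        _ < t ^ p := Real.rpow_lt_rpow hx0 hx3 hp0
        _ = Yv := htp
    -- the restricted events
    set B : ℕ → Set Ω := fun n => {ω | u (n+1) ^ p < |X ω|^p ∧ |X ω|^p ≤ (n:ℝ)+1} with hBdef
    have hBmeas : ∀ n, MeasurableSet (B n) := fun n =>
      hY (measurableSet_Ioc : MeasurableSet (Set.Ioc (u (n+1) ^ p) ((n:ℝ)+1)))
    set g : ℕ → Ω → ℝ≥0∞ := fun n ω =>
      ((n:ℝ≥0∞)+1)⁻¹ * (B n).indicator (fun ω' => ENNReal.ofReal (|X ω'|^p)) ω with hgdef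
    have hgmeas : ∀ n, Measurable (g n) := fun n =>
      measurable_const.mul ((ENNReal.measurable_ofReal.comp hY).indicator (hBmeas n))
    -- pointwise lower bound from the harmonic sums
    have hstepC : ∀ ω, ({ω : Ω | S₀ ≤ |X ω|^p}).indicator
        (fun ω' => ENNReal.ofReal (|X ω'|^p) *
          ENNReal.ofReal ((1/2) * Real.log (Real.log (|X ω'|^p)))) ω ≤ ∑' n, g n ω := by
      intro ω
      by_cases hω : S₀ ≤ |X ω|^p
      swap
      · have hni : ω ∉ {ω : Ω | S₀ ≤ |X ω|^p} := hω
        rw [Set.indicator_of_notMem hni]; exact zero_le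
      have hmi : ω ∈ {ω : Ω | S₀ ≤ |X ω|^p} := hω
      rw [Set.indicator_of_mem hmi]
      set Yv := |X ω|^p with hYvdef
      have hEY : E < Yv := lt_of_lt_of_le hES0 hω
      have hY0 : (0:ℝ) < Yv := lt_trans hE0 hEY
      have hY1 : (1:ℝ) < Yv := lt_trans hE1 hEY
      have hly : Real.exp M ≤ Real.log Yv := by
        calc Real.exp M = Real.log S₀ := (Real.log_exp _).symm
        _ ≤ Real.log Yv := Real.log_le_log (Real.exp_pos _) hω
      have hlypos : (0:ℝ) < Real.log Yv := by linarith
      have hlly : M ≤ Real.log (Real.log Yv) := by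
        calc M = Real.log (Real.exp M) := (Real.log_exp _).symm
        _ ≤ Real.log (Real.log Yv) := Real.log_le_log (Real.exp_pos _) hly
      have h1p_ly : Real.log Yv ≤ (1/p) * Real.log Yv := le_mul_of_one_le_left hlypos.le hp1'
      have hsq1 : (1:ℝ) ≤ Real.log ((1/p) * Real.log Yv) := by
        calc (1:ℝ) ≤ Real.log (Real.log Yv) := by linarith
        _ ≤ Real.log ((1/p) * Real.log Yv) := Real.log_le_log hlypos h1p_ly
      set D := Yv * ((1/p) * Real.log Yv) * Real.log ((1/p) * Real.log Yv) ^ 2 / (2*C) with hDdef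
      have hDge : Yv * Real.log Yv / (2*C) ≤ D := by
        rw [hDdef]
        have hnum : Yv * Real.log Yv
            ≤ Yv * ((1/p) * Real.log Yv) * Real.log ((1/p) * Real.log Yv) ^ 2 := by
          have t1 := mul_le_mul_of_nonneg_left h1p_ly hY0.le
          have t2 : (1:ℝ) ≤ Real.log ((1/p) * Real.log Yv) ^ 2 := by nlinarith
          nlinarith [mul_pos hY0 hlypos]
        exact (div_le_div_iff_of_pos_right (by positivity)).mpr hnum
      have hDposge : Yv + 1 ≤ D := by
        have h6C : 6*C*Real.exp 1 ≤ Real.exp M := by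
          calc 6*C*Real.exp 1 = Real.exp (Real.log (6*C)) * Real.exp 1 := by
                rw [Real.exp_log (by positivity)]
            _ = Real.exp (Real.log (6*C) + 1) := (Real.exp_add _ _).symm
            _ ≤ Real.exp M := Real.exp_le_exp.mpr hMb
        have hstep : Yv * (6*C*Real.exp 1) / (2*C) ≤ Yv * Real.log Yv / (2*C) := by
          have hnum : Yv * (6*C*Real.exp 1) ≤ Yv * Real.log Yv :=
            mul_le_mul_of_nonneg_left (by linarith) hY0.le
          exact (div_le_div_iff_of_pos_right (by positivity)).mpr hnum
        have heq : Yv * (6*C*Real.exp 1) / (2*C) = 3 * Real.exp 1 * Yv := by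
          field_simp; ring
        nlinarith [hDge, hstep]
      have hD0 : (0:ℝ) ≤ D := by linarith
      set a := ⌈Yv⌉₊ with hadef
      set b := ⌊D⌋₊ with hbdef
      have ha1 : 1 ≤ a := Nat.one_le_ceil_iff.mpr hY0
      have haY : (a:ℝ) < Yv + 1 := Nat.ceil_lt_add_one hY0.le
      have hYa : Yv ≤ (a:ℝ) := Nat.le_ceil Yv
      have hab : a ≤ b := Nat.le_floor (by linarith : (a:ℝ) ≤ D)
      have hbD : (b:ℝ) ≤ D := Nat.floor_le hD0
      have hbD1 : D < (b:ℝ) + 1 := Nat.lt_floor_add_one D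
      have hmemB : ∀ m ∈ Finset.Icc a b, ω ∈ B (m-1) := by
        intro m hm
        rw [Finset.mem_Icc] at hm
        have hm1 : 1 ≤ m := le_trans ha1 hm.1
        have hcast : ((m-1:ℕ):ℝ) + 1 = (m:ℝ) := by
          have h' : ((m-1)+1 : ℕ) = m := by omega
          calc ((m-1:ℕ):ℝ) + 1 = (((m-1)+1 : ℕ):ℝ) := by push_cast; ring
          _ = (m:ℝ) := by rw [h']
        constructor
        · rw [show (m-1)+1 = m from by omega]
          apply uclaim m Yv hm1 hω
          calc (m:ℝ) ≤ (b:ℝ) := by exact_mod_cast hm.2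
          _ ≤ D := hbD
        · show Yv ≤ ((m-1:ℕ):ℝ) + 1
          rw [hcast]
          calc Yv ≤ (a:ℝ) := hYa
          _ ≤ (m:ℝ) := by exact_mod_cast hm.1
      have himg : ∑ m ∈ Finset.Icc a b, g (m-1) ω ≤ ∑' n, g n ω := by
        have hinj : ∀ x ∈ Finset.Icc a b, ∀ y ∈ Finset.Icc a b, x - 1 = y - 1 → x = y := by
          intro x hx y hy hxy
          rw [Finset.mem_Icc] at hx hy
          omega
        calc ∑ m ∈ Finset.Icc a b, g (m-1) ω
            = ∑ n ∈ (Finset.Icc a b).image (fun m => m - 1), g n ω :=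
              (Finset.sum_image (f := fun n => g n ω) (g := fun m => m - 1) hinj).symm
          _ ≤ ∑' n, g n ω := ENNReal.sum_le_tsum _
      have hterm : ∀ m ∈ Finset.Icc a b, g (m-1) ω = ((m:ℝ≥0∞))⁻¹ * ENNReal.ofReal Yv := by
        intro m hm
        have hm1 : 1 ≤ m := le_trans ha1 (Finset.mem_Icc.mp hm).1
        have hc : ((m-1:ℕ):ℝ≥0∞) + 1 = ((m:ℕ):ℝ≥0∞) := by
          have h' : ((m-1)+1 : ℕ) = m := by omega
          calc ((m-1:ℕ):ℝ≥0∞) + 1 = (((m-1)+1 : ℕ):ℝ≥0∞) := by push_cast; ring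
          _ = ((m:ℕ):ℝ≥0∞) := by rw [h']
        rw [hgdef]
        simp only []
        rw [Set.indicator_of_mem (hmemB m hm), hc]
      have hsum : ∑ m ∈ Finset.Icc a b, g (m-1) ω
          = (∑ m ∈ Finset.Icc a b, ((m:ℝ≥0∞))⁻¹) * ENNReal.ofReal Yv := by
        rw [Finset.sum_congr rfl hterm, ← Finset.sum_mul]
      have hinv : ENNReal.ofReal ((1/2) * Real.log (Real.log Yv))
          ≤ ∑ m ∈ Finset.Icc a b, ((m:ℝ≥0∞))⁻¹ := by
        have hcast2 : ∀ m ∈ Finset.Icc a b, ((m:ℝ≥0∞))⁻¹ = ENNReal.ofReal ((m:ℝ))⁻¹ := by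
          intro m hm
          have hm1 : 1 ≤ m := le_trans ha1 (Finset.mem_Icc.mp hm).1
          have hm0 : (0:ℝ) < (m:ℝ) := by exact_mod_cast hm1
          rw [ENNReal.ofReal_inv_of_pos hm0, ENNReal.ofReal_natCast]
        rw [Finset.sum_congr rfl hcast2,
          ← ENNReal.ofReal_sum_of_nonneg (fun m _ => by positivity)]
        apply ENNReal.ofReal_le_ofReal
        have hsge := sum_inv_ge ha1 hab
        have hlogb : Real.log Yv + Real.log (Real.log Yv) - Real.log (2*C)
            ≤ Real.log ((b:ℝ)+1) := by
          have hD' : Yv * Real.log Yv / (2*C) ≤ (b:ℝ)+1 := by linarith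
          calc Real.log Yv + Real.log (Real.log Yv) - Real.log (2*C)
              = Real.log (Yv * Real.log Yv / (2*C)) := by
                rw [Real.log_div (by positivity) (by positivity),
                    Real.log_mul (ne_of_gt hY0) (ne_of_gt hlypos)]
          _ ≤ Real.log ((b:ℝ)+1) := Real.log_le_log (by positivity) hD'
        have ha0 : (0:ℝ) < (a:ℝ) := by exact_mod_cast ha1
        have hloga : Real.log (a:ℝ) ≤ 1 + Real.log Yv := by
          calc Real.log (a:ℝ) ≤ Real.log (2*Yv) := Real.log_le_log ha0 (by linarith)
          _ = Real.log 2 + Real.log Yv := Real.log_mul two_ne_zero (ne_of_gt hY0)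
          _ ≤ 1 + Real.log Yv := by nlinarith [Real.log_two_lt_d9]
        have hM' : 2*(Real.log (2*C) + 2) ≤ Real.log (Real.log Yv) := le_trans hMa hlly
        linarith
      calc ENNReal.ofReal Yv * ENNReal.ofReal ((1/2) * Real.log (Real.log Yv))
          = ENNReal.ofReal ((1/2) * Real.log (Real.log Yv)) * ENNReal.ofReal Yv := mul_comm _ _
        _ ≤ (∑ m ∈ Finset.Icc a b, ((m:ℝ≥0∞))⁻¹) * ENNReal.ofReal Yv :=
            mul_le_mul_left hinv _
        _ = ∑ m ∈ Finset.Icc a b, g (m-1) ω := hsum.symm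
        _ ≤ ∑' n, g n ω := himg
    -- the set {Y ≥ S₀}
    have hset2 : MeasurableSet {ω : Ω | S₀ ≤ |X ω|^p} :=
      hY (measurableSet_Ici : MeasurableSet (Set.Ici S₀))
    -- divergence of the weighted tail integral
    have hI : ∫⁻ t in Set.Ioi S₀,
        ENNReal.ofReal (Real.log (Real.log t)) * ℙ {ω | t < |X ω|^p} = ⊤ := by
      set K := 1 + Real.log (1/p) with hKdef
      have hK1 : (1:ℝ) ≤ K := by
        rw [hKdef]
        have := Real.log_nonneg hp1'; linarith
      have hc0 : (0:ℝ) < C * p / K^2 := by positivity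
      rw [← top_le_iff]
      calc (⊤:ℝ≥0∞) = ENNReal.ofReal (C*p/K^2) * ⊤ := by
            rw [ENNReal.mul_top (by simpa [ENNReal.ofReal_eq_zero, not_le] using hc0)]
        _ = ENNReal.ofReal (C*p/K^2) * ∫⁻ t in Set.Ioi S₀,
              ENNReal.ofReal (1/(t * Real.log t * Real.log (Real.log t))) := by
            rw [div_lemma hS0E]
        _ = ∫⁻ t in Set.Ioi S₀, ENNReal.ofReal (C*p/K^2) *
              ENNReal.ofReal (1/(t * Real.log t * Real.log (Real.log t))) :=
            (lintegral_const_mul' _ _ ENNReal.ofReal_ne_top).symm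
        _ ≤ ∫⁻ t in Set.Ioi S₀,
              ENNReal.ofReal (Real.log (Real.log t)) * ℙ {ω | t < |X ω|^p} := by
            refine lintegral_mono_ae ?_
            filter_upwards [ae_restrict_mem measurableSet_Ioi] with t ht
            have hEt : E < t := lt_trans hES0 ht
            have ht1 : (1:ℝ) < t := lt_trans hE1 hEt
            have ht0 : (0:ℝ) < t := by linarith
            have hlt : Real.exp 1 ≤ Real.log t := log_ge_e hEt.le
            have hlt0 : (0:ℝ) < Real.log t := by linarith
            have hllt : (1:ℝ) ≤ Real.log (Real.log t) := llog_pos hEt.le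
            rw [tailY t hEt, ← ENNReal.ofReal_mul (by positivity),
              ← ENNReal.ofReal_mul (by linarith)]
            apply ENNReal.ofReal_le_ofReal
            have h1ply : Real.log t ≤ (1/p) * Real.log t := le_mul_of_one_le_left hlt0.le hp1'
            have hq0 : (0:ℝ) < Real.log ((1/p) * Real.log t) := by
              calc (0:ℝ) < Real.log (Real.log t) := by linarith
              _ ≤ Real.log ((1/p) * Real.log t) := Real.log_le_log hlt0 h1ply
            have hq : Real.log ((1/p) * Real.log t) ≤ K * Real.log (Real.log t) := by
              rw [Real.log_mul (ne_of_gt hp0') (ne_of_gt hlt0), hKdef]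
              have hlp : (0:ℝ) ≤ Real.log (1/p) := Real.log_nonneg hp1'
              nlinarith
            have hdsmall : (0:ℝ) < t * ((1/p) * Real.log t) *
                Real.log ((1/p) * Real.log t) ^ 2 := by positivity
            have hden : t * ((1/p) * Real.log t) * Real.log ((1/p) * Real.log t) ^ 2
                ≤ t * ((1/p) * Real.log t) * (K * Real.log (Real.log t)) ^ 2 := by
              have : Real.log ((1/p) * Real.log t) ^ 2 ≤ (K * Real.log (Real.log t)) ^ 2 :=
                pow_le_pow_left₀ hq0.le hq 2
              nlinarith [mul_pos ht0 (by positivity : (0:ℝ) < (1/p) * Real.log t)]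
            have hkey : C / (t * ((1/p) * Real.log t) * (K * Real.log (Real.log t)) ^ 2)
                ≤ C / (t * ((1/p) * Real.log t) * Real.log ((1/p) * Real.log t) ^ 2) :=
              div_le_div_of_nonneg_left hC.le hdsmall hden
            have heq : C*p/K^2 * (1/(t * Real.log t * Real.log (Real.log t)))
                = Real.log (Real.log t) *
                  (C / (t * ((1/p) * Real.log t) * (K * Real.log (Real.log t)) ^ 2)) := by
              field_simp
            calc C*p/K^2 * (1/(t * Real.log t * Real.log (Real.log t)))
                = Real.log (Real.log t) *
                  (C / (t * ((1/p) * Real.log t) * (K * Real.log (Real.log t)) ^ 2)) := heq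
              _ ≤ Real.log (Real.log t) *
                  (C / (t * ((1/p) * Real.log t) * Real.log ((1/p) * Real.log t) ^ 2)) :=
                mul_le_mul_of_nonneg_left hkey (by linarith)
    -- comparison with the indicator integral via Tonelli
    have hw : Measurable (fun t : ℝ => ENNReal.ofReal (Real.log (Real.log t))) :=
      ENNReal.measurable_ofReal.comp (Real.measurable_log.comp Real.measurable_log)
    have hswap := tail_swap ℙ hY S₀ hw
    have hIT : ∫⁻ t in Set.Ioi S₀,
        ENNReal.ofReal (Real.log (Real.log t)) * ℙ {ω | t < |X ω|^p}
        ≤ 2 * ∫⁻ ω in {ω : Ω | S₀ ≤ |X ω|^p},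
            (ENNReal.ofReal (|X ω|^p) *
              ENNReal.ofReal ((1/2) * Real.log (Real.log (|X ω|^p)))) ∂ℙ := by
      rw [show (∫⁻ t in Set.Ioi S₀,
          ENNReal.ofReal (Real.log (Real.log t)) * ℙ {ω | t < |X ω|^p}) =
          ∫⁻ ω, ∫⁻ t in Set.Ioo S₀ (|X ω|^p),
            ENNReal.ofReal (Real.log (Real.log t)) ∂volume ∂ℙ from hswap]
      rw [← lintegral_const_mul' 2 _ (by simp : (2:ℝ≥0∞) ≠ ⊤),
        ← lintegral_indicator hset2]
      apply lintegral_mono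
      intro ω
      beta_reduce
      by_cases hlt : S₀ < |X ω|^p
      · have hmem : ω ∈ {ω : Ω | S₀ ≤ |X ω|^p} := le_of_lt hlt
        rw [Set.indicator_of_mem hmem]
        have hY0 : (0:ℝ) < |X ω|^p := lt_trans (lt_trans hE0 hES0) hlt
        have hmono : ∀ t ∈ Set.Ioo S₀ (|X ω|^p),
            ENNReal.ofReal (Real.log (Real.log t)) ≤
              ENNReal.ofReal (Real.log (Real.log (|X ω|^p))) := by
          intro t ht
          have hEt : E < t := lt_trans hES0 ht.1
          have hlt0 : (0:ℝ) < Real.log t := Real.log_pos (lt_trans hE1 hEt)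
          apply ENNReal.ofReal_le_ofReal
          apply Real.log_le_log hlt0
          exact Real.log_le_log (by linarith) ht.2.le
        calc ∫⁻ t in Set.Ioo S₀ (|X ω|^p), ENNReal.ofReal (Real.log (Real.log t)) ∂volume
            ≤ ∫⁻ _ in Set.Ioo S₀ (|X ω|^p),
                ENNReal.ofReal (Real.log (Real.log (|X ω|^p))) ∂volume := by
              refine lintegral_mono_ae ?_
              filter_upwards [ae_restrict_mem measurableSet_Ioo] with t ht using hmono t ht
          _ = ENNReal.ofReal (Real.log (Real.log (|X ω|^p))) * volume (Set.Ioo S₀ (|X ω|^p)) :=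
              by rw [setLIntegral_const]
          _ ≤ ENNReal.ofReal (Real.log (Real.log (|X ω|^p))) * ENNReal.ofReal (|X ω|^p) := by
              rw [Real.volume_Ioo]
              exact mul_le_mul_right (ENNReal.ofReal_le_ofReal (by linarith)) _
          _ = 2 * (ENNReal.ofReal (|X ω|^p) *
                ENNReal.ofReal ((1/2) * Real.log (Real.log (|X ω|^p)))) := by
              have hll0 : (0:ℝ) ≤ Real.log (Real.log (|X ω|^p)) := by
                have hEt : E < |X ω|^p := lt_trans hES0 hlt
                have := llog_pos hEt.le
                linarith
              have key : ∀ x y : ℝ, 0 ≤ x → 0 ≤ y →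
                  ENNReal.ofReal y * ENNReal.ofReal x
                    = 2 * (ENNReal.ofReal x * ENNReal.ofReal ((1/2)*y)) := by
                intro x y hx hy
                rw [← ENNReal.ofReal_mul hy,
                  show (2:ℝ≥0∞) = ENNReal.ofReal 2 from (ENNReal.ofReal_ofNat 2).symm,
                  ← ENNReal.ofReal_mul hx,
                  ← ENNReal.ofReal_mul (by norm_num : (0:ℝ) ≤ (2:ℝ))]
                congr 1
                ring
              exact key _ _ (hYnn ω) hll0
      · have hempty : Set.Ioo S₀ (|X ω|^p) = ∅ := Set.Ioo_eq_empty hlt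
        rw [hempty]
        simp
    -- conclude T = ⊤
    have hTtop : ∫⁻ ω in {ω : Ω | S₀ ≤ |X ω|^p},
        (ENNReal.ofReal (|X ω|^p) *
          ENNReal.ofReal ((1/2) * Real.log (Real.log (|X ω|^p)))) ∂ℙ = ⊤ := by
      by_contra hne
      have h2T := le_trans (le_of_eq hI.symm) hIT
      rw [top_le_iff] at h2T
      exact (ENNReal.mul_ne_top (by simp) hne) h2T
    -- assemble
    rw [← top_le_iff]
    calc (⊤:ℝ≥0∞) = ∫⁻ ω in {ω : Ω | S₀ ≤ |X ω|^p},
          (ENNReal.ofReal (|X ω|^p) *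
            ENNReal.ofReal ((1/2) * Real.log (Real.log (|X ω|^p)))) ∂ℙ := hTtop.symm
      _ = ∫⁻ ω, ({ω : Ω | S₀ ≤ |X ω|^p}).indicator
            (fun ω' => ENNReal.ofReal (|X ω'|^p) *
              ENNReal.ofReal ((1/2) * Real.log (Real.log (|X ω'|^p)))) ω ∂ℙ :=
          (lintegral_indicator hset2 _).symm
      _ ≤ ∫⁻ ω, ∑' n, g n ω ∂ℙ := lintegral_mono hstepC
      _ = ∑' n, ∫⁻ ω, g n ω ∂ℙ := lintegral_tsum fun n => (hgmeas n).aemeasurable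
      _ = ∑' n : ℕ, ((n:ℝ≥0∞)+1)⁻¹ * ∫⁻ ω in B n, ENNReal.ofReal (|X ω|^p) ∂ℙ := by
          refine tsum_congr fun n => ?_
          rw [hgdef]
          simp only []
          rw [lintegral_const_mul' _ _ (ENNReal.inv_ne_top.mpr (by simp)),
            lintegral_indicator (hBmeas n)]
      _ ≤ ∑' n : ℕ, (((n : ℝ≥0∞) + 1))⁻¹ *
            ∫⁻ ω in {ω | min (u (n + 1) ^ p) ((n : ℝ) + 1) < |X ω| ^ p ∧
                |X ω| ^ p ≤ (n : ℝ) + 1},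
              ENNReal.ofReal (|X ω| ^ p) ∂ℙ := by
          refine ENNReal.tsum_le_tsum fun n => mul_le_mul_right (lintegral_mono_set ?_) _
          intro ω hω
          exact ⟨lt_of_le_of_lt (min_le_left _ _) hω.1, hω.2⟩
end

section
/- Let α > 0 and let {X_n, n ≥ 1} be a sequence of independent Bochner integrable random variables with mean zero (E(X_n) = 0 for all n) taking values in a real separable Banach space B. Set S_n = X_1 + ⋯ + X_n and F_n = σ(X_1, …, X_n). Then Σ_{n=1}^∞ E(‖E(S_{n+1}/(n+1)^α | F_n) − S_n/n^α‖) < ∞ if and only if Σ_{n=1}^∞ E(‖S_n‖)/n^{1+α} < ∞; that is, {S_n/n^α, F_n, n ≥ 1} is a quasimartingale if and only if Σ_{n=1}^∞ E(‖S_n‖)/n^{1+α} < ∞. -/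
open MeasureTheory ProbabilityTheory Filter Set
open scoped ENNReal NNReal Topology ProbabilityTheory MeasureTheory

lemma mvt_aux (α : ℝ) (hα : 0 < α) (x : ℝ) (hx : 0 < x) :
    α * (x + 1) ^ (-(1 + α)) ≤ x ^ (-α) - (x + 1) ^ (-α) ∧
      x ^ (-α) - (x + 1) ^ (-α) ≤ α * x ^ (-(1 + α)) := by
  have hlt : x < x + 1 := by linarith
  obtain ⟨c, hc, hceq⟩ := exists_hasDerivAt_eq_slope (fun y => y ^ (-α))
      (fun y => (-α) * y ^ (-α - 1)) hlt
      (fun y hy => (Real.continuousAt_rpow_const y (-α)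
        (Or.inl (lt_of_lt_of_le hx hy.1).ne')).continuousWithinAt)
      (fun y hy => Real.hasDerivAt_rpow_const (Or.inl (lt_trans hx hy.1).ne'))
  have hc0 : 0 < c := lt_trans hx hc.1
  have heq : x ^ (-α) - (x + 1) ^ (-α) = α * c ^ (-α - 1) := by
    have : (-α) * c ^ (-α - 1) = ((x+1) ^ (-α) - x ^ (-α)) / (x + 1 - x) := hceq
    rw [show x + 1 - x = 1 by ring, div_one] at this
    linarith [this]
  constructor
  · rw [heq, show -(1+α) = -α - 1 by ring]
    exact mul_le_mul_of_nonneg_left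
      (Real.rpow_le_rpow_of_nonpos hc0 hc.2.le (by linarith)) hα.le
  · rw [heq, show -(1+α) = -α - 1 by ring]
    exact mul_le_mul_of_nonneg_left
      (Real.rpow_le_rpow_of_nonpos hx hc.1.le (by linarith)) hα.le

/-- remark in Section 1. For independent mean-zero Bochner
integrable `B`-valued random variables, `{Sₙ/n^α, Fₙ, n ≥ 1}` is a quasimartingale
(i.e. `∑ₙ E‖E(S_{n+1}/(n+1)^α | Fₙ) − Sₙ/n^α‖ < ∞`) iff `∑ₙ E‖Sₙ‖/n^{1+α} < ∞`. -/
theorem stmt_19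
    {Ω : Type*} [MeasureSpace Ω] [IsProbabilityMeasure (ℙ : Measure Ω)]
    {B : Type*} [NormedAddCommGroup B] [NormedSpace ℝ B] [CompleteSpace B]
    [TopologicalSpace.SeparableSpace B] [MeasurableSpace B] [BorelSpace B]
    (α : ℝ) (hα : 0 < α)
    (Xs : ℕ → Ω → B) (hXs : ∀ n, Measurable (Xs n))
    (hindep : iIndepFun Xs ℙ)
    (hint : ∀ n, Integrable (Xs n) ℙ) (hmean : ∀ n, (∫ ω, Xs n ω ∂ℙ) = 0)
    (S : ℕ → Ω → B) (hS : ∀ n ω, S n ω = ∑ i ∈ Finset.range n, Xs i ω)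
    (F : ℕ → MeasurableSpace Ω)
    (hF : ∀ n, F n = ⨆ i ∈ Finset.range n, MeasurableSpace.comap (Xs i) inferInstance) :
    Summable (fun n : ℕ => ∫ ω,
        ‖(ℙ[fun ω' => ((((n : ℝ) + 2) ^ α)⁻¹) • S (n + 2) ω' | F (n + 1)]) ω -
          ((((n : ℝ) + 1) ^ α)⁻¹) • S (n + 1) ω‖ ∂ℙ)
      ↔ Summable (fun n : ℕ => (∫ ω, ‖S (n + 1) ω‖ ∂ℙ) / ((n : ℝ) + 1) ^ (1 + α)) := by
  haveI : SecondCountableTopology B := UniformSpace.secondCountable_of_separable B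
  have hFle : ∀ n, F n ≤ (inferInstance : MeasurableSpace Ω) := by
    intro n; rw [hF]; exact iSup₂_le fun i _ => (hXs i).comap_le
  have hSfun : ∀ n, S n = fun ω => ∑ i ∈ Finset.range n, Xs i ω :=
    fun n => funext (hS n)
  have hSint : ∀ n, Integrable (S n) ℙ := by
    intro n; rw [hSfun]; exact integrable_finset_sum _ fun i _ => hint i
  -- coefficients
  set c₁ : ℕ → ℝ := fun n => ((((n : ℝ) + 1) ^ α)⁻¹) with hc₁
  set c₂ : ℕ → ℝ := fun n => ((((n : ℝ) + 2) ^ α)⁻¹) with hc₂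
  set a : ℕ → ℝ := fun n => ∫ ω, ‖S (n + 1) ω‖ ∂ℙ with ha
  have ha_nonneg : ∀ n, 0 ≤ a n := fun n => integral_nonneg fun ω => norm_nonneg _
  -- coefficient as rpow differences
  have hcoeff : ∀ n : ℕ, c₁ n - c₂ n
      = ((n : ℝ) + 1) ^ (-α) - (((n : ℝ) + 1) + 1) ^ (-α) := by
    intro n
    have h1 : (0:ℝ) ≤ (n : ℝ) + 1 := by positivity
    have h2 : (0:ℝ) ≤ (n : ℝ) + 2 := by positivity
    simp only [hc₁, hc₂]
    rw [← Real.rpow_neg h1, ← Real.rpow_neg h2]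
    ring_nf
  -- the condexp computation
  have hEq : ∀ n : ℕ, (∫ ω,
      ‖(ℙ[fun ω' => ((((n : ℝ) + 2) ^ α)⁻¹) • S (n + 2) ω' | F (n + 1)]) ω -
        ((((n : ℝ) + 1) ^ α)⁻¹) • S (n + 1) ω‖ ∂ℙ) = (c₁ n - c₂ n) * a n := by
    intro n
    have hm : F (n + 1) ≤ (inferInstance : MeasurableSpace Ω) := hFle (n + 1)
    haveI : SigmaFinite (Measure.trim (ℙ : Measure Ω) hm) := by
      haveI : IsFiniteMeasure (Measure.trim (ℙ : Measure Ω) hm) := isFiniteMeasure_trim hm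
      infer_instance
    -- S (n+1) is strongly measurable wrt F (n+1)
    have hmeas_i : ∀ i ∈ Finset.range (n + 1), Measurable[F (n + 1)] (Xs i) := by
      intro i hi
      have h1 : Measurable[MeasurableSpace.comap (Xs i) inferInstance] (Xs i) :=
        measurable_iff_comap_le.mpr le_rfl
      refine h1.mono ?_ le_rfl
      rw [hF]
      exact le_iSup₂ (f := fun i _ => MeasurableSpace.comap (Xs i) inferInstance) i hi
    have hSmeas : StronglyMeasurable[F (n + 1)] (S (n + 1)) := by
      rw [hSfun]
      exact Measurable.stronglyMeasurable
        (Finset.measurable_sum _ fun i hi => hmeas_i i hi)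
    -- independence of X_{n+1} and F (n+1)
    have hindep2 : Indep (MeasurableSpace.comap (Xs (n + 1)) inferInstance) (F (n + 1)) ℙ := by
      have h := indep_biSup_compl (fun i => (hXs i).comap_le) hindep.iIndep {n + 1}
      have hleft : (⨆ i ∈ ({n + 1} : Set ℕ), MeasurableSpace.comap (Xs i) inferInstance)
          = MeasurableSpace.comap (Xs (n + 1)) inferInstance := by
        simp
      rw [hleft] at h
      refine indep_of_indep_of_le_right h ?_
      rw [hF]
      refine iSup₂_le fun i hi => ?_
      refine le_iSup₂_of_le i ?_ le_rfl
      simp only [Set.mem_compl_iff, Set.mem_singleton_iff]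
      exact fun hcon => by simp [hcon] at hi
    -- condexp of X_{n+1}
    have hX : ℙ[Xs (n + 1) | F (n + 1)] =ᵐ[ℙ] fun _ => (0 : B) := by
      have := condExp_indep_eq (μ := ℙ) (hXs (n + 1)).comap_le hm
        ((measurable_iff_comap_le.mpr le_rfl).stronglyMeasurable
          : StronglyMeasurable[MeasurableSpace.comap (Xs (n + 1)) inferInstance] (Xs (n + 1)))
        hindep2
      rw [hmean (n + 1)] at this
      exact this
    -- condexp of S (n+2)
    have hSsplit : S (n + 2) = S (n + 1) + Xs (n + 1) := by
      funext ω
      simp [hS, Finset.sum_range_succ]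
    have hScond : ℙ[S (n + 2) | F (n + 1)] =ᵐ[ℙ] S (n + 1) := by
      rw [hSsplit]
      refine (condExp_add (hSint (n + 1)) (hint (n + 1)) (F (n + 1))).trans ?_
      rw [condExp_of_stronglyMeasurable hm hSmeas (hSint (n + 1))]
      filter_upwards [hX] with ω hω
      simp [hω]
    have hcond : (ℙ[fun ω' => ((((n : ℝ) + 2) ^ α)⁻¹) • S (n + 2) ω' | F (n + 1)])
        =ᵐ[ℙ] fun ω => c₂ n • S (n + 1) ω := by
      have h0 : ℙ[(c₂ n) • S (n + 2) | F (n + 1)] =ᵐ[ℙ] (c₂ n) • ℙ[S (n + 2) | F (n + 1)] :=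
        condExp_smul (c₂ n) (S (n + 2)) (F (n + 1))
      have harg : (fun ω' => ((((n : ℝ) + 2) ^ α)⁻¹) • S (n + 2) ω') = (c₂ n) • S (n + 2) := rfl
      rw [harg]
      exact h0.trans (hScond.mono fun ω hω => by simp [hω])
    rw [integral_congr_ae (g := fun ω => (c₁ n - c₂ n) * ‖S (n + 1) ω‖)]
    · exact integral_const_mul _ _
    · have hle : c₂ n ≤ c₁ n := by
        simp only [hc₁, hc₂]
        have h1 : (0:ℝ) < ((n : ℝ) + 1) ^ α := Real.rpow_pos_of_pos (by positivity) _
        exact inv_anti₀ h1 (Real.rpow_le_rpow (by positivity) (by linarith) hα.le)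
      filter_upwards [hcond] with ω hω
      rw [hω, ← sub_smul, norm_smul, Real.norm_eq_abs, abs_sub_comm, abs_of_nonneg (by linarith)]
    -- done hEq
  rw [show (fun n : ℕ => ∫ ω,
      ‖(ℙ[fun ω' => ((((n : ℝ) + 2) ^ α)⁻¹) • S (n + 2) ω' | F (n + 1)]) ω -
        ((((n : ℝ) + 1) ^ α)⁻¹) • S (n + 1) ω‖ ∂ℙ) = fun n => (c₁ n - c₂ n) * a n
    from funext hEq]
  -- now the summability comparison
  have hx1 : ∀ n : ℕ, (0:ℝ) < (n : ℝ) + 1 := fun n => by positivity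
  have hbd := fun n : ℕ => mvt_aux α hα ((n : ℝ) + 1) (hx1 n)
  have hcoeff_pos : ∀ n : ℕ, 0 ≤ c₁ n - c₂ n := by
    intro n
    have := (hbd n).1
    rw [hcoeff n]
    have : (0:ℝ) < α * (((n : ℝ) + 1) + 1) ^ (-(1 + α)) :=
      mul_pos hα (Real.rpow_pos_of_pos (by positivity) _)
    linarith [(hbd n).1]
  have hb_eq : ∀ n : ℕ, a n / ((n : ℝ) + 1) ^ (1 + α) = a n * ((n : ℝ) + 1) ^ (-(1 + α)) := by
    intro n
    rw [Real.rpow_neg (hx1 n).le, div_eq_mul_inv]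
  constructor
  · intro h
    -- b n ≤ (2^(1+α)/α) * t n
    refine Summable.of_nonneg_of_le
      (g := fun n => a n / ((n : ℝ) + 1) ^ (1 + α))
      (f := fun n => (2 ^ (1 + α) / α) * ((c₁ n - c₂ n) * a n))
      (fun n => by positivity) (fun n => ?_) (h.mul_left _)
    show a n / ((n : ℝ) + 1) ^ (1 + α) ≤ 2 ^ (1 + α) / α * ((c₁ n - c₂ n) * a n)
    rw [hb_eq n]
    have h1 : α * (((n : ℝ) + 1) + 1) ^ (-(1 + α)) ≤ c₁ n - c₂ n := by
      rw [hcoeff n]; exact (hbd n).1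
    have h2 : ((n : ℝ) + 1) ^ (-(1 + α)) ≤ 2 ^ (1 + α) * (((n : ℝ) + 1) + 1) ^ (-(1 + α)) := by
      have hpos2 : (0:ℝ) < (((n : ℝ) + 1) + 1) ^ (1 + α) :=
        Real.rpow_pos_of_pos (by positivity) _
      have hpos1 : (0:ℝ) < ((n : ℝ) + 1) ^ (1 + α) := Real.rpow_pos_of_pos (hx1 n) _
      have key : (((n : ℝ) + 1) + 1) ^ (1 + α) ≤ 2 ^ (1 + α) * ((n : ℝ) + 1) ^ (1 + α) := by
        have hle2 : ((n : ℝ) + 1) + 1 ≤ 2 * ((n : ℝ) + 1) := by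
          have : (0:ℝ) ≤ (n : ℝ) := Nat.cast_nonneg n
          linarith
        calc (((n : ℝ) + 1) + 1) ^ (1 + α) ≤ (2 * ((n : ℝ) + 1)) ^ (1 + α) :=
              Real.rpow_le_rpow (by positivity) hle2 (by linarith)
          _ = 2 ^ (1 + α) * ((n : ℝ) + 1) ^ (1 + α) :=
              Real.mul_rpow (by norm_num) (by positivity)
      rw [Real.rpow_neg (by positivity), Real.rpow_neg (by positivity),
        show (2:ℝ) ^ (1 + α) * ((((n : ℝ) + 1) + 1) ^ (1 + α))⁻¹
          = 2 ^ (1 + α) / (((n : ℝ) + 1) + 1) ^ (1 + α) from (div_eq_mul_inv _ _).symm,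
        le_div_iff₀ hpos2]
      calc (((n : ℝ) + 1) ^ (1 + α))⁻¹ * ((((n : ℝ) + 1) + 1) ^ (1 + α))
          ≤ (((n : ℝ) + 1) ^ (1 + α))⁻¹ * (2 ^ (1 + α) * ((n : ℝ) + 1) ^ (1 + α)) :=
            mul_le_mul_of_nonneg_left key (inv_nonneg.mpr hpos1.le)
        _ = 2 ^ (1 + α) := by field_simp
    calc a n * ((n : ℝ) + 1) ^ (-(1 + α))
        ≤ a n * (2 ^ (1 + α) * (((n : ℝ) + 1) + 1) ^ (-(1 + α))) :=
          mul_le_mul_of_nonneg_left h2 (ha_nonneg n)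
      _ = (2 ^ (1 + α) / α) * ((α * (((n : ℝ) + 1) + 1) ^ (-(1 + α))) * a n) := by
          field_simp
      _ ≤ (2 ^ (1 + α) / α) * ((c₁ n - c₂ n) * a n) := by
          refine mul_le_mul_of_nonneg_left
            (mul_le_mul_of_nonneg_right h1 (ha_nonneg n)) (by positivity)
  · intro h
    refine Summable.of_nonneg_of_le (fun n => mul_nonneg (hcoeff_pos n) (ha_nonneg n))
      (f := fun n => α * (a n / ((n : ℝ) + 1) ^ (1 + α))) (fun n => ?_) (h.mul_left _)
    show (c₁ n - c₂ n) * a n ≤ α * (a n / ((n : ℝ) + 1) ^ (1 + α))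
    rw [hb_eq n]
    have h1 : c₁ n - c₂ n ≤ α * ((n : ℝ) + 1) ^ (-(1 + α)) := by
      rw [hcoeff n]; exact (hbd n).2
    calc (c₁ n - c₂ n) * a n ≤ (α * ((n : ℝ) + 1) ^ (-(1 + α))) * a n :=
        mul_le_mul_of_nonneg_right h1 (ha_nonneg n)
      _ = α * (a n * ((n : ℝ) + 1) ^ (-(1 + α))) := by ring
end
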